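/- arXiv:1001.1083 — 8 statements merged into one kernel-verified Lean document; each statement's English description precedes it below -/
import Mathlib

section
/- Let h : ℝ³ → ℝ be a smooth function of the variables (x,y,u) and let A ⊆ ℝ³ be open. Let f, g : A → ℝ be smooth and consider the differential operator V = fX + gY + hU acting on smooth functions on A. Then there exist smooth functions λ, μ on A with [V,X] = λX and [V,Y] = μY (commutators as operators on smooth functions) if and only if on A one has f = Yh, g = −Xh, X(Xh) = 0 and Y(Yh) = 0. -/
/-!
Statement 0. On ℝ³ with coordinates (x,y,u), the left-invariant vector fields of the
nilpotent Iwasawa group of SL(3,ℝ) are X = ∂/∂x, Y = ∂/∂y + x ∂/∂u, U = ∂/∂u.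
A vector field V = fX + gY + hU on an open set A is multicontact ([V,X] = λX, [V,Y] = μY)
iff f = Yh, g = -Xh, X²h = 0 and Y²h = 0 on A.
-/

noncomputable section

/-- `X = ∂/∂x` acting on functions of `(x,y,u)`. -/
def Xop (f : ℝ × ℝ × ℝ → ℝ) : ℝ × ℝ × ℝ → ℝ :=
  fun p => fderiv ℝ f p (1, 0, 0)

/-- `Y = ∂/∂y + x·∂/∂u` acting on functions of `(x,y,u)`. -/
def Yop (f : ℝ × ℝ × ℝ → ℝ) : ℝ × ℝ × ℝ → ℝ :=
  fun p => fderiv ℝ f p (0, 1, 0) + p.1 * fderiv ℝ f p (0, 0, 1)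

/-- `U = ∂/∂u` acting on functions of `(x,y,u)`. -/
def Uop (f : ℝ × ℝ × ℝ → ℝ) : ℝ × ℝ × ℝ → ℝ :=
  fun p => fderiv ℝ f p (0, 0, 1)

/-- The operator `V = f·X + g·Y + h·U`. -/
def Vop (f g h : ℝ × ℝ × ℝ → ℝ) (φ : ℝ × ℝ × ℝ → ℝ) : ℝ × ℝ × ℝ → ℝ :=
  fun p => f p * Xop φ p + g p * Yop φ p + h p * Uop φ p

/-! ### Auxiliary lemmas -/

lemma dir_smooth {φ : ℝ × ℝ × ℝ → ℝ} (hφ : ContDiff ℝ (⊤ : ℕ∞) φ) (v : ℝ × ℝ × ℝ) :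
    ContDiff ℝ (⊤ : ℕ∞) (fun p => fderiv ℝ φ p v) :=
  (ContinuousLinearMap.apply ℝ ℝ v).contDiff.comp (hφ.fderiv_right (m := (⊤ : ℕ∞)) (by simp))

lemma Xop_smooth {φ : ℝ × ℝ × ℝ → ℝ} (hφ : ContDiff ℝ (⊤ : ℕ∞) φ) : ContDiff ℝ (⊤ : ℕ∞) (Xop φ) :=
  dir_smooth hφ _
lemma Uop_smooth {φ : ℝ × ℝ × ℝ → ℝ} (hφ : ContDiff ℝ (⊤ : ℕ∞) φ) : ContDiff ℝ (⊤ : ℕ∞) (Uop φ) :=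
  dir_smooth hφ _
lemma Yop_smooth {φ : ℝ × ℝ × ℝ → ℝ} (hφ : ContDiff ℝ (⊤ : ℕ∞) φ) : ContDiff ℝ (⊤ : ℕ∞) (Yop φ) :=
  (dir_smooth hφ _).add (contDiff_fst.mul (dir_smooth hφ _))

lemma fderiv_dir {φ : ℝ × ℝ × ℝ → ℝ} (hφ : ContDiff ℝ (⊤ : ℕ∞) φ) (p v w : ℝ × ℝ × ℝ) :
    fderiv ℝ (fun q => fderiv ℝ φ q v) p w = fderiv ℝ (fderiv ℝ φ) p w v := by
  rw [show (fun q => fderiv ℝ φ q v) = fun q => (fderiv ℝ φ q) ((fun _ => v) q) from rfl,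
    fderiv_clm_apply ((hφ.fderiv_right (m := (⊤ : ℕ∞)) (by simp)).differentiable (by simp) p)
      (differentiableAt_const v)]
  simp

lemma snd_symm {φ : ℝ × ℝ × ℝ → ℝ} (hφ : ContDiff ℝ (⊤ : ℕ∞) φ) (p v w : ℝ × ℝ × ℝ) :
    fderiv ℝ (fderiv ℝ φ) p v w = fderiv ℝ (fderiv ℝ φ) p w v :=
  second_derivative_symmetric
    (fun y => (hφ.differentiable (by simp) y).hasFDerivAt)
    (((hφ.fderiv_right (m := (⊤ : ℕ∞)) (by simp)).differentiable (by simp) p).hasFDerivAt) v w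

lemma fderiv_Yop {φ : ℝ × ℝ × ℝ → ℝ} (hφ : ContDiff ℝ (⊤ : ℕ∞) φ) (p w : ℝ × ℝ × ℝ) :
    fderiv ℝ (Yop φ) p w = fderiv ℝ (fderiv ℝ φ) p w (0, 1, 0)
      + w.1 * fderiv ℝ φ p (0, 0, 1) + p.1 * fderiv ℝ (fderiv ℝ φ) p w (0, 0, 1) := by
  have d2 : DifferentiableAt ℝ (fun q => fderiv ℝ φ q (0, 1, 0)) p :=
    (dir_smooth hφ _).differentiable (by simp) p
  have d3 : DifferentiableAt ℝ (fun q => fderiv ℝ φ q (0, 0, 1)) p :=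
    (dir_smooth hφ _).differentiable (by simp) p
  have dfst : DifferentiableAt ℝ (fun q : ℝ × ℝ × ℝ => q.1) p := differentiableAt_fst
  have : Yop φ = fun q => fderiv ℝ φ q (0, 1, 0)
      + (fun q : ℝ × ℝ × ℝ => q.1) q * fderiv ℝ φ q (0, 0, 1) := rfl
  rw [this, fderiv_fun_add d2 (dfst.fun_mul d3), fderiv_fun_mul dfst d3]
  simp [fderiv_dir hφ, fderiv_fst]
  ring

lemma fderiv_Vop {F G H φ : ℝ × ℝ × ℝ → ℝ} (hF : ContDiff ℝ (⊤ : ℕ∞) F) (hG : ContDiff ℝ (⊤ : ℕ∞) G)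
    (hH : ContDiff ℝ (⊤ : ℕ∞) H) (hφ : ContDiff ℝ (⊤ : ℕ∞) φ) (p w : ℝ × ℝ × ℝ) :
    fderiv ℝ (Vop F G H φ) p w =
      fderiv ℝ F p w * Xop φ p + F p * fderiv ℝ (Xop φ) p w
      + (fderiv ℝ G p w * Yop φ p + G p * fderiv ℝ (Yop φ) p w)
      + (fderiv ℝ H p w * Uop φ p + H p * fderiv ℝ (Uop φ) p w) := by
  have dF := hF.differentiable (by simp) p
  have dG := hG.differentiable (by simp) p
  have dH := hH.differentiable (by simp) p
  have dX := (Xop_smooth hφ).differentiable (by simp) p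
  have dY := (Yop_smooth hφ).differentiable (by simp) p
  have dU := (Uop_smooth hφ).differentiable (by simp) p
  have : Vop F G H φ = fun q => F q * Xop φ q + G q * Yop φ q + H q * Uop φ q := rfl
  rw [this, fderiv_fun_add ((dF.fun_mul dX).fun_add (dG.fun_mul dY)) (dH.fun_mul dU),
    fderiv_fun_add (dF.fun_mul dX) (dG.fun_mul dY), fderiv_fun_mul dF dX, fderiv_fun_mul dG dY, fderiv_fun_mul dH dU]
  simp
  ring

lemma commX {F G H φ : ℝ × ℝ × ℝ → ℝ} (hF : ContDiff ℝ (⊤ : ℕ∞) F) (hG : ContDiff ℝ (⊤ : ℕ∞) G)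
    (hH : ContDiff ℝ (⊤ : ℕ∞) H) (hφ : ContDiff ℝ (⊤ : ℕ∞) φ) (p : ℝ × ℝ × ℝ) :
    Vop F G H (Xop φ) p - Xop (Vop F G H φ) p
      = -(fderiv ℝ F p (1,0,0) * Xop φ p) - fderiv ℝ G p (1,0,0) * Yop φ p
        - (G p + fderiv ℝ H p (1,0,0)) * Uop φ p := by
  have dX : ∀ v, fderiv ℝ (Xop φ) p v = fderiv ℝ (fderiv ℝ φ) p v (1,0,0) :=
    fun v => fderiv_dir hφ p (1,0,0) v
  have dU : ∀ v, fderiv ℝ (Uop φ) p v = fderiv ℝ (fderiv ℝ φ) p v (0,0,1) :=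
    fun v => fderiv_dir hφ p (0,0,1) v
  have A : Vop F G H (Xop φ) p = F p * fderiv ℝ (Xop φ) p (1,0,0)
      + G p * (fderiv ℝ (Xop φ) p (0,1,0) + p.1 * fderiv ℝ (Xop φ) p (0,0,1))
      + H p * fderiv ℝ (Xop φ) p (0,0,1) := rfl
  have B : Xop (Vop F G H φ) p = fderiv ℝ (Vop F G H φ) p (1,0,0) := rfl
  rw [A, B, fderiv_Vop hF hG hH hφ p (1,0,0), dX, dX, dX,
    fderiv_Yop hφ p (1,0,0), dU]
  simp only [Xop, Yop, Uop]
  rw [show fderiv ℝ (fderiv ℝ φ) p (0,1,0) (1,0,0)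
      = fderiv ℝ (fderiv ℝ φ) p (1,0,0) (0,1,0) from snd_symm hφ p _ _,
    show fderiv ℝ (fderiv ℝ φ) p (0,0,1) (1,0,0)
      = fderiv ℝ (fderiv ℝ φ) p (1,0,0) (0,0,1) from snd_symm hφ p _ _]
  norm_num
  ring

lemma commY {F G H φ : ℝ × ℝ × ℝ → ℝ} (hF : ContDiff ℝ (⊤ : ℕ∞) F) (hG : ContDiff ℝ (⊤ : ℕ∞) G)
    (hH : ContDiff ℝ (⊤ : ℕ∞) H) (hφ : ContDiff ℝ (⊤ : ℕ∞) φ) (p : ℝ × ℝ × ℝ) :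
    Vop F G H (Yop φ) p - Yop (Vop F G H φ) p
      = -((fderiv ℝ F p (0,1,0) + p.1 * fderiv ℝ F p (0,0,1)) * Xop φ p)
        - (fderiv ℝ G p (0,1,0) + p.1 * fderiv ℝ G p (0,0,1)) * Yop φ p
        + (F p - (fderiv ℝ H p (0,1,0) + p.1 * fderiv ℝ H p (0,0,1))) * Uop φ p := by
  have dX : ∀ v, fderiv ℝ (Xop φ) p v = fderiv ℝ (fderiv ℝ φ) p v (1,0,0) :=
    fun v => fderiv_dir hφ p (1,0,0) v
  have dU : ∀ v, fderiv ℝ (Uop φ) p v = fderiv ℝ (fderiv ℝ φ) p v (0,0,1) :=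
    fun v => fderiv_dir hφ p (0,0,1) v
  have A : Vop F G H (Yop φ) p = F p * fderiv ℝ (Yop φ) p (1,0,0)
      + G p * (fderiv ℝ (Yop φ) p (0,1,0) + p.1 * fderiv ℝ (Yop φ) p (0,0,1))
      + H p * fderiv ℝ (Yop φ) p (0,0,1) := rfl
  have B : Yop (Vop F G H φ) p = fderiv ℝ (Vop F G H φ) p (0,1,0)
      + p.1 * fderiv ℝ (Vop F G H φ) p (0,0,1) := rfl
  rw [A, B, fderiv_Vop hF hG hH hφ p (0,1,0), fderiv_Vop hF hG hH hφ p (0,0,1),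
    dX, dX, dU, dU, fderiv_Yop hφ p (1,0,0), fderiv_Yop hφ p (0,1,0),
    fderiv_Yop hφ p (0,0,1)]
  simp only [Xop, Yop, Uop]
  rw [show fderiv ℝ (fderiv ℝ φ) p (0,1,0) (1,0,0)
      = fderiv ℝ (fderiv ℝ φ) p (1,0,0) (0,1,0) from snd_symm hφ p _ _,
    show fderiv ℝ (fderiv ℝ φ) p (0,0,1) (1,0,0)
      = fderiv ℝ (fderiv ℝ φ) p (1,0,0) (0,0,1) from snd_symm hφ p _ _,
    show fderiv ℝ (fderiv ℝ φ) p (0,0,1) (0,1,0)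
      = fderiv ℝ (fderiv ℝ φ) p (0,1,0) (0,0,1) from snd_symm hφ p _ _]
  norm_num
  ring

lemma fd1 (p : ℝ×ℝ×ℝ) : fderiv ℝ (fun q : ℝ×ℝ×ℝ => q.1) p
    = ContinuousLinearMap.fst ℝ ℝ (ℝ×ℝ) := hasFDerivAt_fst.fderiv
lemma fd2 (p : ℝ×ℝ×ℝ) : fderiv ℝ (fun q : ℝ×ℝ×ℝ => q.2.1) p
    = (ContinuousLinearMap.fst ℝ ℝ ℝ).comp (ContinuousLinearMap.snd ℝ ℝ (ℝ×ℝ)) :=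
  (hasFDerivAt_fst.comp p hasFDerivAt_snd).fderiv
lemma fd3 (p : ℝ×ℝ×ℝ) : fderiv ℝ (fun q : ℝ×ℝ×ℝ => q.2.2) p
    = (ContinuousLinearMap.snd ℝ ℝ ℝ).comp (ContinuousLinearMap.snd ℝ ℝ (ℝ×ℝ)) :=
  (hasFDerivAt_snd.comp p hasFDerivAt_snd).fderiv

theorem multicontact_conditions_sl3
    (h : ℝ × ℝ × ℝ → ℝ) (hh : ContDiff ℝ (⊤ : ℕ∞) h)
    (A : Set (ℝ × ℝ × ℝ)) (hA : IsOpen A)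
    (f g : ℝ × ℝ × ℝ → ℝ)
    (hf : ContDiffOn ℝ (⊤ : ℕ∞) f A) (hg : ContDiffOn ℝ (⊤ : ℕ∞) g A) :
    (∃ lam mu : ℝ × ℝ × ℝ → ℝ,
      ContDiffOn ℝ (⊤ : ℕ∞) lam A ∧ ContDiffOn ℝ (⊤ : ℕ∞) mu A ∧
      (∀ φ : ℝ × ℝ × ℝ → ℝ, ContDiff ℝ (⊤ : ℕ∞) φ → ∀ p ∈ A,
        Vop f g h (Xop φ) p - Xop (Vop f g h φ) p = lam p * Xop φ p) ∧
      (∀ φ : ℝ × ℝ × ℝ → ℝ, ContDiff ℝ (⊤ : ℕ∞) φ → ∀ p ∈ A,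
        Vop f g h (Yop φ) p - Yop (Vop f g h φ) p = mu p * Yop φ p)) ↔
    (∀ p ∈ A, f p = Yop h p ∧ g p = - Xop h p ∧
      Xop (Xop h) p = 0 ∧ Yop (Yop h) p = 0) := by
  constructor
  · rintro ⟨lam, mu, _, _, hXc, hYc⟩
    -- test functions
    have hφ1 : ContDiff ℝ (⊤ : ℕ∞) (fun q : ℝ×ℝ×ℝ => q.2.1) := contDiff_snd.fst
    have hφ2 : ContDiff ℝ (⊤ : ℕ∞) (fun q : ℝ×ℝ×ℝ => q.2.2) := contDiff_snd.snd
    have hφ3 : ContDiff ℝ (⊤ : ℕ∞) (fun q : ℝ×ℝ×ℝ => q.1) := contDiff_fst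
    have eX1 : Xop (fun q : ℝ×ℝ×ℝ => q.2.1) = fun _ => (0:ℝ) := by
      funext q; simp [Xop, fd2]
    have eY1 : Yop (fun q : ℝ×ℝ×ℝ => q.2.1) = fun _ => (1:ℝ) := by
      funext q; simp [Yop, fd2]
    have eV1 : Vop f g h (fun q : ℝ×ℝ×ℝ => q.2.1) = g := by
      funext q; simp [Vop, Xop, Yop, Uop, fd2]
    have eX3 : Xop (fun q : ℝ×ℝ×ℝ => q.1) = fun _ => (1:ℝ) := by
      funext q; simp [Xop, fd1]
    have eY3 : Yop (fun q : ℝ×ℝ×ℝ => q.1) = fun _ => (0:ℝ) := by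
      funext q; simp [Yop, fd1]
    have eV3 : Vop f g h (fun q : ℝ×ℝ×ℝ => q.1) = f := by
      funext q; simp [Vop, Xop, Yop, Uop, fd1]
    have eX2 : Xop (fun q : ℝ×ℝ×ℝ => q.2.2) = fun _ => (0:ℝ) := by
      funext q; simp [Xop, fd3]
    have eY2 : Yop (fun q : ℝ×ℝ×ℝ => q.2.2) = fun q : ℝ×ℝ×ℝ => q.1 := by
      funext q; simp [Yop, fd3]
    have eV2 : Vop f g h (fun q : ℝ×ℝ×ℝ => q.2.2) = fun q => g q * q.1 + h q := by
      funext q; simp [Vop, Xop, Yop, Uop, fd3]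
    have hzero : ∀ (c : ℝ) (p : ℝ×ℝ×ℝ), Vop f g h (fun _ : ℝ×ℝ×ℝ => c) p = 0 := by
      intro c p; simp [Vop, Xop, Yop, Uop]
    -- basic consequences
    have hXg : ∀ p ∈ A, Xop g p = 0 := by
      intro p hp
      have h1 := hXc _ hφ1 p hp
      rw [eX1, eV1] at h1
      simpa [hzero] using h1
    have hmu : ∀ p ∈ A, mu p = -(Yop g p) := by
      intro p hp
      have h1 := hYc _ hφ1 p hp
      rw [eY1, eV1] at h1
      simp [hzero] at h1
      linarith
    have hYf : ∀ p ∈ A, Yop f p = 0 := by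
      intro p hp
      have h1 := hYc _ hφ3 p hp
      rw [eY3, eV3] at h1
      simpa [hzero] using h1
    -- expansion of derivatives of g·x + h
    have expand : ∀ p ∈ A, ∀ w : ℝ×ℝ×ℝ,
        fderiv ℝ (fun q : ℝ×ℝ×ℝ => g q * q.1 + h q) p w
          = fderiv ℝ g p w * p.1 + g p * w.1 + fderiv ℝ h p w := by
      intro p hp w
      have dg : DifferentiableAt ℝ g p :=
        (hg.contDiffAt (hA.mem_nhds hp)).differentiableAt (by simp)
      have dh : DifferentiableAt ℝ h p := hh.differentiable (by simp) p
      rw [fderiv_fun_add (dg.fun_mul differentiableAt_fst) dh,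
        fderiv_fun_mul dg differentiableAt_fst]
      simp [fd1]
      ring
    have hgXh : ∀ p ∈ A, g p = -(Xop h p) := by
      intro p hp
      have h1 := hXc _ hφ2 p hp
      rw [eX2, eV2] at h1
      simp [hzero] at h1
      simp only [Xop] at h1
      rw [expand p hp] at h1
      have h2 := hXg p hp
      simp only [Xop] at h2 ⊢
      rw [h2] at h1
      norm_num at h1 ⊢
      linarith
    have hfYh : ∀ p ∈ A, f p = Yop h p := by
      intro p hp
      have h1 := hYc _ hφ2 p hp
      rw [eY2, eV2, eV3] at h1
      have hB : Yop (fun q => g q * q.1 + h q) p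
          = fderiv ℝ (fun q : ℝ×ℝ×ℝ => g q * q.1 + h q) p (0,1,0)
            + p.1 * fderiv ℝ (fun q : ℝ×ℝ×ℝ => g q * q.1 + h q) p (0,0,1) := rfl
      rw [hB, expand p hp, expand p hp, hmu p hp] at h1
      simp only [Yop, Xop] at h1 ⊢
      norm_num at h1
      linear_combination h1
    intro p hp
    refine ⟨hfYh p hp, by simpa using hgXh p hp, ?_, ?_⟩
    · -- X²h = 0
      have hev : g =ᶠ[nhds p] fun q => -(Xop h q) :=
        Filter.eventuallyEq_of_mem (hA.mem_nhds hp) (fun q hq => hgXh q hq)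
      have : fderiv ℝ g p = fderiv ℝ (fun q => -(Xop h q)) p := hev.fderiv_eq
      have h2 : Xop g p = -(Xop (Xop h) p) := by
        simp only [Xop]; rw [this, fderiv_fun_neg]; simp
      have := hXg p hp
      rw [h2] at this
      linarith
    · -- Y²h = 0
      have hev : f =ᶠ[nhds p] Yop h :=
        Filter.eventuallyEq_of_mem (hA.mem_nhds hp) (fun q hq => hfYh q hq)
      have heq : fderiv ℝ f p = fderiv ℝ (Yop h) p := hev.fderiv_eq
      have h2 : Yop f p = Yop (Yop h) p := by
        simp only [Yop]; rw [heq]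
      rw [← h2]
      exact hYf p hp
  · intro hc
    have hF : ContDiff ℝ (⊤ : ℕ∞) (Yop h) := Yop_smooth hh
    have hG : ContDiff ℝ (⊤ : ℕ∞) (fun q => -(Xop h q)) := (Xop_smooth hh).neg
    have hG3 : ∀ p w, fderiv ℝ (fun q => -(Xop h q)) p w = -(fderiv ℝ (Xop h) p w) := by
      intro p w; rw [fderiv_fun_neg]; simp
    refine ⟨fun p => -(Xop (Yop h) p), fun p => Yop (Xop h) p,
      ((Xop_smooth hF).neg).contDiffOn, (Yop_smooth (Xop_smooth hh)).contDiffOn, ?_, ?_⟩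
    · intro φ hφ p hp
      have hval : Vop f g h (Xop φ) p = Vop (Yop h) (fun q => -(Xop h q)) h (Xop φ) p := by
        simp only [Vop]; rw [(hc p hp).1, (hc p hp).2.1]
      have hev : Vop f g h φ =ᶠ[nhds p] Vop (Yop h) (fun q => -(Xop h q)) h φ :=
        Filter.eventuallyEq_of_mem (hA.mem_nhds hp) (fun q hq => by
          simp only [Vop]; rw [(hc q hq).1, (hc q hq).2.1])
      have hfd : Xop (Vop f g h φ) p = Xop (Vop (Yop h) (fun q => -(Xop h q)) h φ) p :=
        congrArg (fun L : (ℝ×ℝ×ℝ) →L[ℝ] ℝ => L (1,0,0)) hev.fderiv_eq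
      rw [hval, hfd, commX hF hG hh hφ p, hG3]
      have h2 : fderiv ℝ (Xop h) p (1,0,0) = 0 := (hc p hp).2.2.1
      have h3 : fderiv ℝ h p (1,0,0) = Xop h p := rfl
      rw [h2, h3]
      show _ = -(Xop (Yop h) p) * Xop φ p
      simp only [Xop]
      ring
    · intro φ hφ p hp
      have hval : Vop f g h (Yop φ) p = Vop (Yop h) (fun q => -(Xop h q)) h (Yop φ) p := by
        simp only [Vop]; rw [(hc p hp).1, (hc p hp).2.1]
      have hev : Vop f g h φ =ᶠ[nhds p] Vop (Yop h) (fun q => -(Xop h q)) h φ :=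
        Filter.eventuallyEq_of_mem (hA.mem_nhds hp) (fun q hq => by
          simp only [Vop]; rw [(hc q hq).1, (hc q hq).2.1])
      have hfd : Yop (Vop f g h φ) p = Yop (Vop (Yop h) (fun q => -(Xop h q)) h φ) p :=
        congrArg (fun L : (ℝ×ℝ×ℝ) →L[ℝ] ℝ => L (0,1,0) + p.1 * L (0,0,1)) hev.fderiv_eq
      rw [hval, hfd, commY hF hG hh hφ p, hG3, hG3]
      have h2 : fderiv ℝ (Yop h) p (0,1,0) + p.1 * fderiv ℝ (Yop h) p (0,0,1) = 0 :=
        (hc p hp).2.2.2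
      have h3 : fderiv ℝ h p (0,1,0) + p.1 * fderiv ℝ h p (0,0,1) = Yop h p := rfl
      show -((fderiv ℝ (Yop h) p (0,1,0) + p.1 * fderiv ℝ (Yop h) p (0,0,1)) * Xop φ p)
          - (-(fderiv ℝ (Xop h) p (0,1,0)) + p.1 * -(fderiv ℝ (Xop h) p (0,0,1))) * Yop φ p
          + (Yop h p - (fderiv ℝ h p (0,1,0) + p.1 * fderiv ℝ h p (0,0,1))) * Uop φ p
          = Yop (Xop h) p * Yop φ p
      rw [h2, h3]
      show _ = (fderiv ℝ (Xop h) p (0,1,0) + p.1 * fderiv ℝ (Xop h) p (0,0,1)) * Yop φ p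
      ring

end
end

section
/- Let h : ℝ³ → ℝ be smooth and satisfy X(Xh) = 0 and Y(Yh) = 0 everywhere. Define h₀(y,u) = h(0,y,u) and h₁(y,u) = (∂h/∂x)(0,y,u). Then h(x,y,u) = h₀(y,u) + x·h₁(y,u) for all (x,y,u) ∈ ℝ³, and moreover ∂²h₀/∂y² = 0, ∂³h₀/∂u³ = 0, ∂²h₁/∂u² = 0 and ∂³h₁/∂y³ = 0 identically. -/
/-!
Statement 1. If a smooth `h : ℝ³ → ℝ` (coordinates (x,y,u)) satisfies `X(Xh) = 0` and
`Y(Yh) = 0` everywhere, where `X = ∂/∂x` and `Y = ∂/∂y + x·∂/∂u`, then with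
`h₀(y,u) = h(0,y,u)` and `h₁(y,u) = (∂h/∂x)(0,y,u)` one has
`h(x,y,u) = h₀(y,u) + x·h₁(y,u)`, and moreover
`∂²h₀/∂y² = 0`, `∂³h₀/∂u³ = 0`, `∂²h₁/∂u² = 0`, `∂³h₁/∂y³ = 0`.
-/

noncomputable section

/-- `∂/∂y` acting on functions of `(y,u)`. -/
def Dy (f : ℝ × ℝ → ℝ) : ℝ × ℝ → ℝ := fun q => fderiv ℝ f q (1, 0)

/-- `∂/∂u` acting on functions of `(y,u)`. -/
def Du (f : ℝ × ℝ → ℝ) : ℝ × ℝ → ℝ := fun q => fderiv ℝ f q (0, 1)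

section Helpers

variable {E : Type*} [NormedAddCommGroup E] [NormedSpace ℝ E]

theorem lineDeriv_hasDerivAt (f : E → ℝ) (hf : ContDiff ℝ (⊤ : ℕ∞) f) (c v : E) (t : ℝ) :
    HasDerivAt (fun s : ℝ => f (c + s • v)) (fderiv ℝ f (c + t • v) v) t := by
  have hline : HasDerivAt (fun s : ℝ => c + s • v) v t := by
    simpa using ((hasDerivAt_id t).smul_const v).const_add c
  have hF := (hf.differentiable (by simp) (c + t • v)).hasFDerivAt
  exact hF.comp_hasDerivAt t hline

theorem contDiff_fderiv_apply (f : E → ℝ) (hf : ContDiff ℝ (⊤ : ℕ∞) f) (v : E) :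
    ContDiff ℝ (⊤ : ℕ∞) (fun p => fderiv ℝ f p v) :=
  (hf.fderiv_right (by simp)).clm_apply contDiff_const

theorem const_of_fderiv_zero (f : E → ℝ) (hf : ContDiff ℝ (⊤ : ℕ∞) f) (v : E)
    (hz : ∀ p, fderiv ℝ f p v = 0) (c : E) (t : ℝ) : f (c + t • v) = f c := by
  have h1 : ∀ s : ℝ, HasDerivAt (fun s : ℝ => f (c + s • v)) 0 s := fun s => by
    simpa [hz] using lineDeriv_hasDerivAt f hf c v s
  have := is_const_of_deriv_eq_zero (f := fun s : ℝ => f (c + s • v))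
    (fun s => (h1 s).differentiableAt) (fun s => (h1 s).deriv) t 0
  simpa using this

theorem fderiv_comm (f : E → ℝ) (hf : ContDiff ℝ (⊤ : ℕ∞) f) (q v w : E) :
    fderiv ℝ (fun p => fderiv ℝ f p v) q w = fderiv ℝ (fun p => fderiv ℝ f p w) q v := by
  have hd : DifferentiableAt ℝ (fderiv ℝ f) q := ((hf.fderiv_right (m := (⊤ : ℕ∞)) (by simp)).differentiable (by simp)) q
  have hsymm : IsSymmSndFDerivAt ℝ f q :=
    hf.contDiffAt.isSymmSndFDerivAt (n := (⊤ : ℕ∞)) (by simp; exact WithTop.coe_le_coe.mpr le_top)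
  have e : ∀ u : E, fderiv ℝ (fun p => fderiv ℝ f p u) q
      = (fderiv ℝ (fderiv ℝ f) q).flip u := by
    intro u
    have := fderiv_clm_apply (c := fderiv ℝ f) (u := fun _ => u) hd (differentiableAt_const u)
    simpa using this
  rw [e v, e w]
  simpa using hsymm w v

theorem fderiv_add_apply' (f g : E → ℝ) (q v : E) (hf : DifferentiableAt ℝ f q)
    (hg : DifferentiableAt ℝ g q) :
    fderiv ℝ (fun p => f p + g p) q v = fderiv ℝ f q v + fderiv ℝ g q v := by
  rw [fderiv_fun_add hf hg]; rfl

end Helpers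

theorem Yop_eval (f0 f1 f2 : ℝ × ℝ → ℝ) (h0 : ContDiff ℝ (⊤ : ℕ∞) f0) (h1 : ContDiff ℝ (⊤ : ℕ∞) f1)
    (h2 : ContDiff ℝ (⊤ : ℕ∞) f2) (p : ℝ × ℝ × ℝ) :
    Yop (fun p => f0 p.2 + p.1 * f1 p.2 + p.1 ^ 2 * f2 p.2) p =
      Dy f0 p.2 + p.1 * (Dy f1 p.2 + Du f0 p.2) + p.1 ^ 2 * (Dy f2 p.2 + Du f1 p.2)
        + p.1 ^ 3 * Du f2 p.2 := by
  set F : ℝ × ℝ × ℝ → ℝ := fun p => f0 p.2 + p.1 * f1 p.2 + p.1 ^ 2 * f2 p.2 with hFdef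
  have hF : ContDiff ℝ (⊤ : ℕ∞) F :=
    ((h0.comp contDiff_snd).add (contDiff_fst.mul (h1.comp contDiff_snd))).add
      ((contDiff_fst.pow 2).mul (h2.comp contDiff_snd))
  have key : ∀ v : ℝ × ℝ × ℝ, ∀ w : ℝ × ℝ,
      (∀ (c : ℝ × ℝ × ℝ) (s : ℝ), c + s • v = (c.1, c.2 + s • w)) →
      fderiv ℝ F p v = fderiv ℝ f0 p.2 w + p.1 * fderiv ℝ f1 p.2 w
        + p.1 ^ 2 * fderiv ℝ f2 p.2 w := by
    intro v w hvw
    have hl := lineDeriv_hasDerivAt F hF p v 0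
    rw [zero_smul, add_zero] at hl
    have hfun : (fun s : ℝ => F (p + s • v))
        = fun s : ℝ => f0 (p.2 + s • w) + p.1 * f1 (p.2 + s • w) + p.1 ^ 2 * f2 (p.2 + s • w) := by
      funext s
      rw [hvw p s]
    rw [hfun] at hl
    have h2' : HasDerivAt
        (fun s : ℝ => f0 (p.2 + s • w) + p.1 * f1 (p.2 + s • w) + p.1 ^ 2 * f2 (p.2 + s • w))
        (fderiv ℝ f0 p.2 w + p.1 * fderiv ℝ f1 p.2 w + p.1 ^ 2 * fderiv ℝ f2 p.2 w) 0 := by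
      have a0 := lineDeriv_hasDerivAt f0 h0 p.2 w 0
      have a1 := (lineDeriv_hasDerivAt f1 h1 p.2 w 0).const_mul p.1
      have a2 := (lineDeriv_hasDerivAt f2 h2 p.2 w 0).const_mul (p.1 ^ 2)
      rw [zero_smul, add_zero] at a0 a1 a2
      exact (a0.add a1).add a2
    exact hl.unique h2'
  have hy := key (0, 1, 0) (1, 0) (by intro c s; simp [Prod.ext_iff])
  have hu := key (0, 0, 1) (0, 1) (by intro c s; simp [Prod.ext_iff])
  show fderiv ℝ F p (0, 1, 0) + p.1 * fderiv ℝ F p (0, 0, 1) = _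
  rw [hy, hu]
  show _ = fderiv ℝ f0 p.2 (1, 0) + p.1 * (fderiv ℝ f1 p.2 (1, 0) + fderiv ℝ f0 p.2 (0, 1))
    + p.1 ^ 2 * (fderiv ℝ f2 p.2 (1, 0) + fderiv ℝ f1 p.2 (0, 1))
    + p.1 ^ 3 * fderiv ℝ f2 p.2 (0, 1)
  ring

theorem multicontact_top_component_structure_sl3
    (h : ℝ × ℝ × ℝ → ℝ) (hh : ContDiff ℝ (⊤ : ℕ∞) h)
    (hXX : ∀ p, Xop (Xop h) p = 0) (hYY : ∀ p, Yop (Yop h) p = 0)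
    (h0 h1 : ℝ × ℝ → ℝ)
    (hh0 : ∀ q : ℝ × ℝ, h0 q = h (0, q.1, q.2))
    (hh1 : ∀ q : ℝ × ℝ, h1 q = Xop h (0, q.1, q.2)) :
    (∀ p : ℝ × ℝ × ℝ, h p = h0 (p.2.1, p.2.2) + p.1 * h1 (p.2.1, p.2.2)) ∧
    (∀ q, Dy (Dy h0) q = 0) ∧
    (∀ q, Du (Du (Du h0)) q = 0) ∧
    (∀ q, Du (Du h1) q = 0) ∧
    (∀ q, Dy (Dy (Dy h1)) q = 0) := by
  have hXh : ContDiff ℝ (⊤ : ℕ∞) (Xop h) := contDiff_fderiv_apply h hh (1, 0, 0)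
  -- Part A : structure formula
  have hA : ∀ x y u : ℝ, h (x, y, u) = h (0, y, u) + x * Xop h (0, y, u) := by
    intro x y u
    have hpt : ∀ t : ℝ, ((0:ℝ), y, u) + t • ((1:ℝ), (0:ℝ), (0:ℝ)) = (t, y, u) := by
      intro t; simp [Prod.ext_iff]
    have hXc : ∀ t : ℝ, Xop h (t, y, u) = Xop h (0, y, u) := by
      intro t
      have := const_of_fderiv_zero (Xop h) hXh (1, 0, 0) hXX (0, y, u) t
      rwa [hpt t] at this
    have hg : ∀ t : ℝ,
        HasDerivAt (fun s : ℝ => h (s, y, u) - s * Xop h (0, y, u)) 0 t := by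
      intro t
      have h1 := lineDeriv_hasDerivAt h hh (0, y, u) (1, 0, 0) t
      have hfun : (fun s : ℝ => h (((0:ℝ), y, u) + s • ((1:ℝ), (0:ℝ), (0:ℝ))))
          = fun s : ℝ => h (s, y, u) := by funext s; rw [hpt s]
      rw [hfun, hpt t] at h1
      have h2 : HasDerivAt (fun s : ℝ => s * Xop h (0, y, u)) (Xop h (0, y, u)) t := by
        simpa using (hasDerivAt_id t).mul_const (Xop h (0, y, u))
      have h3 := h1.sub h2
      have hval : fderiv ℝ h (t, y, u) (1, 0, 0) = Xop h (0, y, u) := hXc t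
      rw [hval] at h3
      rw [sub_self] at h3; exact h3
    have hc := is_const_of_deriv_eq_zero (f := fun s : ℝ => h (s, y, u) - s * Xop h (0, y, u))
      (fun s => (hg s).differentiableAt) (fun s => (hg s).deriv) x 0
    simp at hc
    linarith
  have goal1 : ∀ p : ℝ × ℝ × ℝ, h p = h0 (p.2.1, p.2.2) + p.1 * h1 (p.2.1, p.2.2) := by
    intro p
    rw [hh0, hh1]
    exact hA p.1 p.2.1 p.2.2
  -- Smoothness of h0, h1
  have hι : ContDiff ℝ (⊤ : ℕ∞) (fun q : ℝ × ℝ => ((0:ℝ), q.1, q.2)) :=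
    contDiff_const.prodMk (contDiff_fst.prodMk contDiff_snd)
  have hh0s : ContDiff ℝ (⊤ : ℕ∞) h0 := by
    rw [show h0 = fun q : ℝ × ℝ => h (0, q.1, q.2) from funext hh0]
    exact hh.comp hι
  have hh1s : ContDiff ℝ (⊤ : ℕ∞) h1 := by
    rw [show h1 = fun q : ℝ × ℝ => Xop h (0, q.1, q.2) from funext hh1]
    exact hXh.comp hι
  have sDyh0 : ContDiff ℝ (⊤ : ℕ∞) (Dy h0) := contDiff_fderiv_apply h0 hh0s (1, 0)
  have sDuh0 : ContDiff ℝ (⊤ : ℕ∞) (Du h0) := contDiff_fderiv_apply h0 hh0s (0, 1)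
  have sDyh1 : ContDiff ℝ (⊤ : ℕ∞) (Dy h1) := contDiff_fderiv_apply h1 hh1s (1, 0)
  have sDuh1 : ContDiff ℝ (⊤ : ℕ∞) (Du h1) := contDiff_fderiv_apply h1 hh1s (0, 1)
  have sB : ContDiff ℝ (⊤ : ℕ∞) (fun q : ℝ × ℝ => Dy h1 q + Du h0 q) := sDyh1.add sDuh0
  -- expression of h
  have hEq : h = fun p : ℝ × ℝ × ℝ => h0 p.2 + p.1 * h1 p.2 + p.1 ^ 2 * 0 := by
    funext p
    have e2 : h p = h0 p.2 + p.1 * h1 p.2 := by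
      rw [hh0 p.2, hh1 p.2]; exact hA p.1 p.2.1 p.2.2
    simp [e2]
  -- first application of Y
  have hy1' : Yop h
      = fun p : ℝ × ℝ × ℝ => Dy h0 p.2 + p.1 * (Dy h1 p.2 + Du h0 p.2) + p.1 ^ 2 * Du h1 p.2 := by
    funext p
    rw [hEq]
    rw [Yop_eval h0 h1 (fun _ => (0:ℝ)) hh0s hh1s contDiff_const p]
    simp [Dy, Du]
  -- second application of Y : the cubic identity
  have key : ∀ p : ℝ × ℝ × ℝ,
      Dy (Dy h0) p.2
        + p.1 * (Dy (fun q => Dy h1 q + Du h0 q) p.2 + Du (Dy h0) p.2)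
        + p.1 ^ 2 * (Dy (Du h1) p.2 + Du (fun q => Dy h1 q + Du h0 q) p.2)
        + p.1 ^ 3 * Du (Du h1) p.2 = 0 := by
    intro p
    have e := hYY p
    rw [hy1'] at e
    rw [Yop_eval (Dy h0) (fun q => Dy h1 q + Du h0 q) (Du h1) sDyh0 sB sDuh1 p] at e
    exact e
  -- coefficient extraction
  have c0 : ∀ q : ℝ × ℝ, Dy (Dy h0) q = 0 := by
    intro q
    have E0 := key (0, q); have E1 := key (1, q); have E2 := key (-1, q); have E3 := key (2, q)
    norm_num at E0 E1 E2 E3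
    linarith
  have c3 : ∀ q : ℝ × ℝ, Du (Du h1) q = 0 := by
    intro q
    have E0 := key (0, q); have E1 := key (1, q); have E2 := key (-1, q); have E3 := key (2, q)
    norm_num at E0 E1 E2 E3
    linarith
  have c1 : ∀ q : ℝ × ℝ, Dy (fun q => Dy h1 q + Du h0 q) q + Du (Dy h0) q = 0 := by
    intro q
    have E0 := key (0, q); have E1 := key (1, q); have E2 := key (-1, q); have E3 := key (2, q)
    norm_num at E0 E1 E2 E3
    linarith
  have c2 : ∀ q : ℝ × ℝ, Dy (Du h1) q + Du (fun q => Dy h1 q + Du h0 q) q = 0 := by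
    intro q
    have E0 := key (0, q); have E1 := key (1, q); have E2 := key (-1, q); have E3 := key (2, q)
    norm_num at E0 E1 E2 E3
    linarith
  -- splitting the sums
  have splitDy : ∀ q : ℝ × ℝ,
      Dy (fun q => Dy h1 q + Du h0 q) q = Dy (Dy h1) q + Dy (Du h0) q := fun q =>
    fderiv_add_apply' (Dy h1) (Du h0) q (1, 0)
      (sDyh1.differentiable (by simp) q) (sDuh0.differentiable (by simp) q)
  have splitDu : ∀ q : ℝ × ℝ,
      Du (fun q => Dy h1 q + Du h0 q) q = Du (Dy h1) q + Du (Du h0) q := fun q =>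
    fderiv_add_apply' (Dy h1) (Du h0) q (0, 1)
      (sDyh1.differentiable (by simp) q) (sDuh0.differentiable (by simp) q)
  have c1' : ∀ q : ℝ × ℝ, Dy (Dy h1) q + Dy (Du h0) q + Du (Dy h0) q = 0 := by
    intro q; have := c1 q; rw [splitDy q] at this; linarith
  have c2' : ∀ q : ℝ × ℝ, Dy (Du h1) q + Du (Dy h1) q + Du (Du h0) q = 0 := by
    intro q; have := c2 q; rw [splitDu q] at this; linarith
  -- third-order conclusions
  have hc0fun : Dy (Dy h0) = fun _ : ℝ × ℝ => (0:ℝ) := funext c0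
  have hc3fun : Du (Du h1) = fun _ : ℝ × ℝ => (0:ℝ) := funext c3
  have goal3 : ∀ q : ℝ × ℝ, Du (Du (Du h0)) q = 0 := by
    intro q
    -- differentiate c2' in u
    have hfun2 : (fun q : ℝ × ℝ => Dy (Du h1) q + Du (Dy h1) q + Du (Du h0) q)
        = fun _ : ℝ × ℝ => (0:ℝ) := funext c2'
    have hD : Du (fun q : ℝ × ℝ => Dy (Du h1) q + Du (Dy h1) q + Du (Du h0) q) q = 0 := by
      rw [hfun2]; simp [Du]
    have s1 : ContDiff ℝ (⊤ : ℕ∞) (fun q : ℝ × ℝ => Dy (Du h1) q + Du (Dy h1) q) :=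
      (contDiff_fderiv_apply (Du h1) sDuh1 (1, 0)).add
        (contDiff_fderiv_apply (Dy h1) sDyh1 (0, 1))
    have hsplit1 : Du (fun q : ℝ × ℝ => Dy (Du h1) q + Du (Dy h1) q + Du (Du h0) q) q
        = Du (fun q : ℝ × ℝ => Dy (Du h1) q + Du (Dy h1) q) q + Du (Du (Du h0)) q :=
      fderiv_add_apply' (fun q => Dy (Du h1) q + Du (Dy h1) q) (Du (Du h0)) q (0, 1)
        (s1.differentiable (by simp) q)
        ((contDiff_fderiv_apply (Du h0) sDuh0 (0, 1)).differentiable (by simp) q)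
    have hsplit2 : Du (fun q : ℝ × ℝ => Dy (Du h1) q + Du (Dy h1) q) q
        = Du (Dy (Du h1)) q + Du (Du (Dy h1)) q :=
      fderiv_add_apply' (Dy (Du h1)) (Du (Dy h1)) q (0, 1)
        ((contDiff_fderiv_apply (Du h1) sDuh1 (1, 0)).differentiable (by simp) q)
        ((contDiff_fderiv_apply (Dy h1) sDyh1 (0, 1)).differentiable (by simp) q)
    have swap_in : Du (Dy h1) = Dy (Du h1) :=
      funext fun q => fderiv_comm h1 hh1s q (1, 0) (0, 1)
    have t1 : Du (Dy (Du h1)) q = 0 := by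
      have := fderiv_comm (Du h1) sDuh1 q (1, 0) (0, 1)
      have t1' : Dy (Du (Du h1)) q = 0 := by rw [hc3fun]; simp [Dy]
      calc Du (Dy (Du h1)) q = Dy (Du (Du h1)) q := this
        _ = 0 := t1'
    have t2 : Du (Du (Dy h1)) q = 0 := by
      rw [swap_in]; exact t1
    rw [hsplit1, hsplit2, t1, t2] at hD
    linarith
  have goal5 : ∀ q : ℝ × ℝ, Dy (Dy (Dy h1)) q = 0 := by
    intro q
    have hfun1 : (fun q : ℝ × ℝ => Dy (Dy h1) q + Dy (Du h0) q + Du (Dy h0) q)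
        = fun _ : ℝ × ℝ => (0:ℝ) := funext c1'
    have hD : Dy (fun q : ℝ × ℝ => Dy (Dy h1) q + Dy (Du h0) q + Du (Dy h0) q) q = 0 := by
      rw [hfun1]; simp [Dy]
    have s1 : ContDiff ℝ (⊤ : ℕ∞) (fun q : ℝ × ℝ => Dy (Dy h1) q + Dy (Du h0) q) :=
      (contDiff_fderiv_apply (Dy h1) sDyh1 (1, 0)).add
        (contDiff_fderiv_apply (Du h0) sDuh0 (1, 0))
    have hsplit1 : Dy (fun q : ℝ × ℝ => Dy (Dy h1) q + Dy (Du h0) q + Du (Dy h0) q) q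
        = Dy (fun q : ℝ × ℝ => Dy (Dy h1) q + Dy (Du h0) q) q + Dy (Du (Dy h0)) q :=
      fderiv_add_apply' (fun q => Dy (Dy h1) q + Dy (Du h0) q) (Du (Dy h0)) q (1, 0)
        (s1.differentiable (by simp) q)
        ((contDiff_fderiv_apply (Dy h0) sDyh0 (0, 1)).differentiable (by simp) q)
    have hsplit2 : Dy (fun q : ℝ × ℝ => Dy (Dy h1) q + Dy (Du h0) q) q
        = Dy (Dy (Dy h1)) q + Dy (Dy (Du h0)) q :=
      fderiv_add_apply' (Dy (Dy h1)) (Dy (Du h0)) q (1, 0)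
        ((contDiff_fderiv_apply (Dy h1) sDyh1 (1, 0)).differentiable (by simp) q)
        ((contDiff_fderiv_apply (Du h0) sDuh0 (1, 0)).differentiable (by simp) q)
    have swap_in : Dy (Du h0) = Du (Dy h0) :=
      funext fun q => fderiv_comm h0 hh0s q (0, 1) (1, 0)
    have t3 : Dy (Du (Dy h0)) q = 0 := by
      have := fderiv_comm (Dy h0) sDyh0 q (0, 1) (1, 0)
      have t3' : Du (Dy (Dy h0)) q = 0 := by rw [hc0fun]; simp [Du]
      calc Dy (Du (Dy h0)) q = Du (Dy (Dy h0)) q := this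
        _ = 0 := t3'
    have t4 : Dy (Dy (Du h0)) q = 0 := by
      rw [swap_in]; exact t3
    rw [hsplit1, hsplit2, t3, t4] at hD
    linarith
  exact ⟨goal1, c0, goal3, c3, goal5⟩

end
end

section
/- A smooth function h : ℝ³ → ℝ satisfies X(Xh) = 0 and Y(Yh) = 0 everywhere if and only if there exist real constants c₀,…,c₇ such that h(x,y,u) = c₀ + c₁x + c₂y + c₃u + c₄xy + c₅xu + c₆·y(u−xy) + c₇·u(u−xy) for all (x,y,u). In particular, the space of smooth solutions of the system X²h = Y²h = 0 is an 8-dimensional real vector space, spanned by 1, x, y, u, xy, xu, y(u−xy), u(u−xy). -/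
/-!
Statement 2. On ℝ³ with coordinates (x,y,u) and vector fields `X = ∂/∂x`,
`Y = ∂/∂y + x·∂/∂u`, a smooth `h` satisfies `X²h = Y²h = 0` iff it is a linear
combination of `1, x, y, u, xy, xu, y(u−xy), u(u−xy)`; these 8 functions are
linearly independent, so the solution space is an 8-dimensional real vector space.
-/

noncomputable section

noncomputable section

def Dop (v : ℝ × ℝ × ℝ) (f : ℝ × ℝ × ℝ → ℝ) : ℝ × ℝ × ℝ → ℝ :=
  fun p => fderiv ℝ f p v

def e1 : ℝ × ℝ × ℝ := (1, 0, 0)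
def e2 : ℝ × ℝ × ℝ := (0, 1, 0)
def e3 : ℝ × ℝ × ℝ := (0, 0, 1)

lemma Dop_contDiff (v : ℝ × ℝ × ℝ) {f : ℝ × ℝ × ℝ → ℝ} (hf : ContDiff ℝ (⊤ : ℕ∞) f) :
    ContDiff ℝ (⊤ : ℕ∞) (Dop v f) :=
  (hf.fderiv_right (by simp)).clm_apply contDiff_const

lemma Dop_hasFDerivAt {f : ℝ × ℝ × ℝ → ℝ} (hf : ContDiff ℝ (⊤ : ℕ∞) f) (v p) :
    HasFDerivAt (Dop v f) ((fderiv ℝ (fderiv ℝ f) p).flip v) p := by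
  have h1 : HasFDerivAt (fderiv ℝ f) (fderiv ℝ (fderiv ℝ f) p) p :=
    (((hf.fderiv_right (m := (⊤ : ℕ∞)) (by simp)).differentiable (by simp)) p).hasFDerivAt
  have h2 := h1.clm_apply (hasFDerivAt_const v p)
  exact (by simpa using h2 : HasFDerivAt (fun y => fderiv ℝ f y v) ((fderiv ℝ (fderiv ℝ f) p).flip v) p)

lemma Dop_Dop {f : ℝ × ℝ × ℝ → ℝ} (hf : ContDiff ℝ (⊤ : ℕ∞) f) (v w p) :
    Dop w (Dop v f) p = fderiv ℝ (fderiv ℝ f) p w v := by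
  show fderiv ℝ (Dop v f) p w = _
  rw [(Dop_hasFDerivAt hf v p).fderiv]
  rfl

lemma Dop_comm {f : ℝ × ℝ × ℝ → ℝ} (hf : ContDiff ℝ (⊤ : ℕ∞) f) (v w p) :
    Dop w (Dop v f) p = Dop v (Dop w f) p := by
  rw [Dop_Dop hf, Dop_Dop hf]
  exact second_derivative_symmetric (fun y => ((hf.differentiable (by simp)) y).hasFDerivAt)
    ((((hf.fderiv_right (m := (⊤ : ℕ∞)) (by simp)).differentiable (by simp)) p).hasFDerivAt) w v

lemma Dop_comm' {f : ℝ × ℝ × ℝ → ℝ} (hf : ContDiff ℝ (⊤ : ℕ∞) f) (v w) :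
    Dop w (Dop v f) = Dop v (Dop w f) := funext (Dop_comm hf v w)

lemma hasDerivAt_line {f : ℝ × ℝ × ℝ → ℝ} (hf : Differentiable ℝ f) (p v : ℝ × ℝ × ℝ) (t : ℝ) :
    HasDerivAt (fun s : ℝ => f (p + s • v)) (Dop v f (p + t • v)) t := by
  have h1 : HasDerivAt (fun s : ℝ => p + s • v) v t := by
    simpa using ((hasDerivAt_id t).smul_const v).const_add p
  exact (hf (p + t • v)).hasFDerivAt.comp_hasDerivAt t h1

lemma Dop_of_line {f : ℝ × ℝ × ℝ → ℝ} {p v : ℝ × ℝ × ℝ} (hf : DifferentiableAt ℝ f p) {D : ℝ}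
    (hD : HasDerivAt (fun s : ℝ => f (p + s • v)) D 0) : Dop v f p = D := by
  have h0 : HasDerivAt (fun s : ℝ => p + s • v) v 0 := by
    simpa using ((hasDerivAt_id (0:ℝ)).smul_const v).const_add p
  have hf0 : DifferentiableAt ℝ f (p + (0:ℝ) • v) := by simpa using hf
  have h1 : HasDerivAt (fun s : ℝ => f (p + s • v)) (Dop v f p) 0 := by
    have := hf0.hasFDerivAt.comp_hasDerivAt 0 h0
    simpa [Dop, Function.comp_def] using this
  exact h1.unique hD

lemma one_dim_affine {f f' : ℝ → ℝ} (hf : ∀ t, HasDerivAt f (f' t) t)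
    (hf' : ∀ t, HasDerivAt f' 0 t) (t : ℝ) : f t = f 0 + t * f' 0 := by
  have hconst : ∀ s, f' s = f' 0 := fun s =>
    is_const_of_deriv_eq_zero (fun x => (hf' x).differentiableAt)
      (fun x => (hf' x).deriv) s 0
  have hg : ∀ s, HasDerivAt (fun s => f s - s * f' 0) 0 s := by
    intro s
    have := (hf s).fun_sub ((hasDerivAt_id s).mul_const (f' 0))
    simpa [hconst s] using this
  have h2 := is_const_of_deriv_eq_zero (fun x => (hg x).differentiableAt)
      (fun x => (hg x).deriv) t 0
  simp only [zero_mul] at h2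
  linarith

lemma one_dim_quad {f f' : ℝ → ℝ} {c : ℝ} (hf : ∀ t, HasDerivAt f (f' t) t)
    (hf' : ∀ t, HasDerivAt f' c t) (t : ℝ) :
    f t = f 0 + t * f' 0 + c * t ^ 2 / 2 := by
  have key := one_dim_affine (f := fun s => f s - c * s ^ 2 / 2) (f' := fun s => f' s - c * s)
    (fun s => by
      have h2 : HasDerivAt (fun s : ℝ => c * s ^ 2 / 2) (c * s) s := by
        have := ((hasDerivAt_pow 2 s).const_mul c).div_const 2
        refine this.congr_deriv ?_
        ring
      exact (hf s).fun_sub h2)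
    (fun s => by
      have h2 : HasDerivAt (fun s : ℝ => c * s) c s := by
        simpa using (hasDerivAt_id s).const_mul c
      simpa using (hf' s).fun_sub h2) t
  nlinarith [key]

end

noncomputable section

lemma Dop_zero (v : ℝ × ℝ × ℝ) : Dop v (fun _ => (0:ℝ)) = fun _ => (0:ℝ) := by
  funext p; simp [Dop]

lemma line_affine {f : ℝ × ℝ × ℝ → ℝ} (hf : ContDiff ℝ (⊤ : ℕ∞) f) (p v : ℝ × ℝ × ℝ)
    (h2 : ∀ t : ℝ, Dop v (Dop v f) (p + t • v) = 0) (t : ℝ) :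
    f (p + t • v) = f p + t * Dop v f p := by
  have key := one_dim_affine (f := fun s => f (p + s • v))
    (f' := fun s => Dop v f (p + s • v))
    (fun s => hasDerivAt_line (hf.differentiable (by simp)) p v s)
    (fun s => by
      have := hasDerivAt_line ((Dop_contDiff v hf).differentiable (by simp)) p v s
      rwa [h2 s] at this) t
  simpa using key

lemma line_quad {f : ℝ × ℝ × ℝ → ℝ} (hf : ContDiff ℝ (⊤ : ℕ∞) f) (p v : ℝ × ℝ × ℝ) {c : ℝ}
    (h2 : ∀ t : ℝ, Dop v (Dop v f) (p + t • v) = c) (t : ℝ) :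
    f (p + t • v) = f p + t * Dop v f p + c * t ^ 2 / 2 := by
  have key := one_dim_quad (f := fun s => f (p + s • v))
    (f' := fun s => Dop v f (p + s • v))
    (fun s => hasDerivAt_line (hf.differentiable (by simp)) p v s)
    (fun s => by
      have := hasDerivAt_line ((Dop_contDiff v hf).differentiable (by simp)) p v s
      rwa [h2 s] at this) t
  simpa using key

lemma line_const {f : ℝ × ℝ × ℝ → ℝ} (hf : ContDiff ℝ (⊤ : ℕ∞) f) (p v : ℝ × ℝ × ℝ)
    (h1 : ∀ t : ℝ, Dop v f (p + t • v) = 0) (t : ℝ) :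
    f (p + t • v) = f p := by
  have key := is_const_of_deriv_eq_zero (f := fun s => f (p + s • v))
    (fun s => (hasDerivAt_line (hf.differentiable (by simp)) p v s).differentiableAt)
    (fun s => by
      have := (hasDerivAt_line (hf.differentiable (by simp)) p v s).deriv
      rw [this, h1 s]) t 0
  simpa using key

lemma pt_e1 (a b c t : ℝ) : ((a, b, c) : ℝ × ℝ × ℝ) + t • e1 = (a + t, b, c) := by
  simp [e1, Prod.ext_iff]

lemma pt_e2 (a b c t : ℝ) : ((a, b, c) : ℝ × ℝ × ℝ) + t • e2 = (a, b + t, c) := by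
  simp [e2, Prod.ext_iff]

lemma pt_e3 (a b c t : ℝ) : ((a, b, c) : ℝ × ℝ × ℝ) + t • e3 = (a, b, c + t) := by
  simp [e3, Prod.ext_iff]

lemma pt_e1' (p : ℝ × ℝ × ℝ) (t : ℝ) : p + t • e1 = (p.1 + t, p.2.1, p.2.2) := by
  simp [e1, Prod.ext_iff]

lemma pt_e2' (p : ℝ × ℝ × ℝ) (t : ℝ) : p + t • e2 = (p.1, p.2.1 + t, p.2.2) := by
  simp [e2, Prod.ext_iff]

lemma pt_e3' (p : ℝ × ℝ × ℝ) (t : ℝ) : p + t • e3 = (p.1, p.2.1, p.2.2 + t) := by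
  simp [e3, Prod.ext_iff]

/-- derivative (in a direction tangent to the slice x = 0) of a function vanishing on the slice -/
lemma slice_deriv_zero {f : ℝ × ℝ × ℝ → ℝ} (hf : ContDiff ℝ (⊤ : ℕ∞) f)
    (hS : ∀ y u, f (0, y, u) = 0) {v : ℝ × ℝ × ℝ} (hv : v.1 = 0) (y u : ℝ) :
    Dop v f (0, y, u) = 0 := by
  apply Dop_of_line ((hf.differentiable (by simp)) _)
  have heq : (fun t : ℝ => f (((0:ℝ), y, u) + t • v)) = fun _ => 0 := by
    funext t
    have : ((0:ℝ), y, u) + t • v = (0, y + t * v.2.1, u + t * v.2.2) := by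
      obtain ⟨v1, v2, v3⟩ := v
      simp only [Prod.mk.injEq] at hv ⊢
      simp [Prod.ext_iff, hv, smul_eq_mul]
    rw [this, hS]
  rw [heq]
  exact hasDerivAt_const 0 0

lemma hasDerivAt_affine (A B t : ℝ) : HasDerivAt (fun s : ℝ => A + B * s) B t := by
  simpa using ((hasDerivAt_id t).const_mul B).const_add A

lemma hasDerivAt_quadratic (A B C t : ℝ) :
    HasDerivAt (fun s : ℝ => A + B * s + C * (s * s)) (B + C * (2 * t)) t := by
  have h1 : HasDerivAt (fun s : ℝ => s * s) (1 * t + t * 1) t :=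
    (hasDerivAt_id t).mul (hasDerivAt_id t)
  have h2 := ((hasDerivAt_affine A B t).fun_add (h1.const_mul C))
  refine h2.congr_deriv ?_
  ring

end

noncomputable section


lemma Xop_eq (f : ℝ × ℝ × ℝ → ℝ) : Xop f = Dop e1 f := rfl

lemma Yop_eq (f : ℝ × ℝ × ℝ → ℝ) : Yop f = fun p => Dop e2 f p + p.1 * Dop e3 f p := rfl

lemma Dop_add_mul {f g : ℝ × ℝ × ℝ → ℝ} (hf : ContDiff ℝ (⊤ : ℕ∞) f) (hg : ContDiff ℝ (⊤ : ℕ∞) g)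
    (c : ℝ) (v p) :
    Dop v (fun q => f q + c * g q) p = Dop v f p + c * Dop v g p := by
  show fderiv ℝ _ p v = _
  rw [fderiv_fun_add ((hf.differentiable (by simp)) p)
      (((hg.differentiable (by simp)) p).const_mul c),
    fderiv_const_mul ((hg.differentiable (by simp)) p) c]
  rfl

lemma Yop_Yop_expand {h : ℝ × ℝ × ℝ → ℝ} (hh : ContDiff ℝ (⊤ : ℕ∞) h) (p : ℝ × ℝ × ℝ) :
    Yop (Yop h) p = Dop e2 (Dop e2 h) p + p.1 * Dop e2 (Dop e3 h) p
      + p.1 * Dop e3 (Dop e2 h) p + p.1 ^ 2 * Dop e3 (Dop e3 h) p := by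
  have d2 := Dop_hasFDerivAt hh e2 p
  have d3 := Dop_hasFDerivAt hh e3 p
  have dfst : HasFDerivAt (fun q : ℝ × ℝ × ℝ => q.1)
      (ContinuousLinearMap.fst ℝ ℝ (ℝ × ℝ)) p := hasFDerivAt_fst
  have dmul := dfst.mul d3
  have dsum := d2.add dmul
  have hfd : fderiv ℝ (Yop h) p =
      (fderiv ℝ (fderiv ℝ h) p).flip e2 +
      (p.1 • (fderiv ℝ (fderiv ℝ h) p).flip e3 +
        Dop e3 h p • ContinuousLinearMap.fst ℝ ℝ (ℝ × ℝ)) := by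
    rw [Yop_eq]
    exact dsum.fderiv
  show fderiv ℝ (Yop h) p e2 + p.1 * fderiv ℝ (Yop h) p e3 = _
  rw [hfd]
  simp only [ContinuousLinearMap.add_apply, ContinuousLinearMap.coe_smul',
    Pi.smul_apply, ContinuousLinearMap.flip_apply, ContinuousLinearMap.coe_fst',
    smul_eq_mul]
  rw [show (e2 : ℝ × ℝ × ℝ).1 = 0 from rfl, show (e3 : ℝ × ℝ × ℝ).1 = 0 from rfl]
  rw [← Dop_Dop hh e2 e2 p, ← Dop_Dop hh e3 e2 p, ← Dop_Dop hh e2 e3 p, ← Dop_Dop hh e3 e3 p]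
  ring

end

noncomputable section

lemma Dop_push (z v w : ℝ × ℝ × ℝ) {f : ℝ × ℝ × ℝ → ℝ} (hf : ContDiff ℝ (⊤ : ℕ∞) f) :
    Dop z (Dop v (Dop w f)) = Dop v (Dop w (Dop z f)) := by
  rw [Dop_comm' (Dop_contDiff w hf) v z, Dop_comm' hf w z]

lemma cubic_coeffs {a₀ a₁ b₀ b₁ c₀ c₁ : ℝ}
    (H : ∀ x : ℝ, (a₀ + x * a₁) + 2 * x * (b₀ + x * b₁) + x ^ 2 * (c₀ + x * c₁) = 0) :
    a₀ = 0 ∧ a₁ + 2 * b₀ = 0 ∧ 2 * b₁ + c₀ = 0 ∧ c₁ = 0 := by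
  have h0 := H 0; have h1 := H 1; have hm := H (-1); have h2 := H 2
  norm_num at h0 h1 hm h2
  refine ⟨h0, by linarith, by linarith, by linarith⟩

lemma forward_dir {h : ℝ × ℝ × ℝ → ℝ} (hh : ContDiff ℝ (⊤ : ℕ∞) h)
    (hX : ∀ p, Xop (Xop h) p = 0) (hY : ∀ p, Yop (Yop h) p = 0) :
    ∃ c : Fin 8 → ℝ, ∀ p : ℝ × ℝ × ℝ,
      h p = c 0 + c 1 * p.1 + c 2 * p.2.1 + c 3 * p.2.2 +
        c 4 * (p.1 * p.2.1) + c 5 * (p.1 * p.2.2) +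
        c 6 * (p.2.1 * (p.2.2 - p.1 * p.2.1)) +
        c 7 * (p.2.2 * (p.2.2 - p.1 * p.2.1)) := by
  have s1 := Dop_contDiff e1 hh
  have s2 := Dop_contDiff e2 hh
  have s3 := Dop_contDiff e3 hh
  have s22 := Dop_contDiff e2 s2
  have s23 := Dop_contDiff e2 s3
  have s33 := Dop_contDiff e3 s3
  have s31 := Dop_contDiff e3 s1
  have hX' : ∀ p, Dop e1 (Dop e1 h) p = 0 := hX
  have hXfun : Dop e1 (Dop e1 h) = fun _ => 0 := funext hX'
  have hcomm32 : Dop e3 (Dop e2 h) = Dop e2 (Dop e3 h) := Dop_comm' hh e2 e3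
  have M : ∀ p : ℝ × ℝ × ℝ, Dop e2 (Dop e2 h) p + 2 * p.1 * Dop e2 (Dop e3 h) p
      + p.1 ^ 2 * Dop e3 (Dop e3 h) p = 0 := by
    intro p
    have hMp := hY p
    rw [Yop_Yop_expand hh, hcomm32] at hMp
    linarith
  -- second x-derivatives of all second (y,u)-derivatives vanish
  have D11F : ∀ v w : ℝ × ℝ × ℝ, Dop e1 (Dop e1 (Dop v (Dop w h))) = fun _ => 0 := by
    intro v w
    rw [Dop_push e1 v w hh, Dop_push e1 v w s1, hXfun, Dop_zero, Dop_zero]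
  -- second derivatives are affine in x
  have aff : ∀ v w : ℝ × ℝ × ℝ, ∀ x y u : ℝ,
      Dop v (Dop w h) (x, y, u) = Dop v (Dop w h) (0, y, u)
        + x * Dop e1 (Dop v (Dop w h)) (0, y, u) := by
    intro v w x y u
    have key := line_affine (Dop_contDiff v (Dop_contDiff w hh)) (0, y, u) e1
      (fun t => by rw [pt_e1]; exact congrFun (D11F v w) _) x
    rw [pt_e1, zero_add] at key
    exact key
  -- the four coefficient equations
  have coeffs : ∀ y u : ℝ,
      Dop e2 (Dop e2 h) (0, y, u) = 0 ∧
      Dop e1 (Dop e2 (Dop e2 h)) (0, y, u) + 2 * Dop e2 (Dop e3 h) (0, y, u) = 0 ∧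
      2 * Dop e1 (Dop e2 (Dop e3 h)) (0, y, u) + Dop e3 (Dop e3 h) (0, y, u) = 0 ∧
      Dop e1 (Dop e3 (Dop e3 h)) (0, y, u) = 0 := by
    intro y u
    apply cubic_coeffs
    intro x
    have hM := M (x, y, u)
    rw [aff e2 e2 x y u, aff e2 e3 x y u, aff e3 e3 x y u] at hM
    simpa using hM
  have hc0 : ∀ y u : ℝ, Dop e2 (Dop e2 h) (0, y, u) = 0 := fun y u => (coeffs y u).1
  have hc1 : ∀ y u : ℝ, Dop e1 (Dop e2 (Dop e2 h)) (0, y, u)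
      + 2 * Dop e2 (Dop e3 h) (0, y, u) = 0 := fun y u => (coeffs y u).2.1
  have hc2 : ∀ y u : ℝ, 2 * Dop e1 (Dop e2 (Dop e3 h)) (0, y, u)
      + Dop e3 (Dop e3 h) (0, y, u) = 0 := fun y u => (coeffs y u).2.2.1
  have hc3 : ∀ y u : ℝ, Dop e1 (Dop e3 (Dop e3 h)) (0, y, u) = 0 := fun y u => (coeffs y u).2.2.2
  -- fourth-order slice identities:  W := D2 D2 D3 D1 h,  V := D3 D3 D2 h
  have dF1 : ∀ y u : ℝ, Dop e3 (fun p => Dop e1 (Dop e2 (Dop e2 h)) p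
      + 2 * Dop e2 (Dop e3 h) p) (0, y, u) = 0 := by
    intro y u
    apply slice_deriv_zero ((Dop_contDiff e1 s22).add (contDiff_const.mul s23)) hc1 (rfl) y u
  have dF2 : ∀ y u : ℝ, Dop e2 (fun p => Dop e3 (Dop e3 h) p
      + 2 * Dop e1 (Dop e2 (Dop e3 h)) p) (0, y, u) = 0 := by
    intro y u
    apply slice_deriv_zero (s33.add (contDiff_const.mul (Dop_contDiff e1 s23)))
      (fun y u => by have := hc2 y u; linarith) (rfl) y u
  have comW1 : Dop e3 (Dop e1 (Dop e2 (Dop e2 h))) = Dop e2 (Dop e2 (Dop e3 (Dop e1 h))) := by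
    rw [Dop_push e3 e1 e2 s2, Dop_comm' hh e2 e3, Dop_push e1 e2 e2 s3, Dop_comm' hh e3 e1]
  have comV1 : Dop e3 (Dop e2 (Dop e3 h)) = Dop e3 (Dop e3 (Dop e2 h)) := by
    rw [Dop_comm' hh e3 e2]
  have comW2 : Dop e2 (Dop e1 (Dop e2 (Dop e3 h))) = Dop e2 (Dop e2 (Dop e3 (Dop e1 h))) := by
    rw [Dop_push e2 e1 e2 s3, Dop_push e1 e2 e2 s3, Dop_comm' hh e3 e1]
  have comV2 : Dop e2 (Dop e3 (Dop e3 h)) = Dop e3 (Dop e3 (Dop e2 h)) := by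
    rw [Dop_push e2 e3 e3 hh]
  have hWV : ∀ y u : ℝ, Dop e2 (Dop e2 (Dop e3 (Dop e1 h))) (0, y, u) = 0 ∧
      Dop e3 (Dop e3 (Dop e2 h)) (0, y, u) = 0 := by
    intro y u
    have e1' := dF1 y u
    rw [Dop_add_mul (Dop_contDiff e1 s22) s23 2 e3 (0, y, u), comW1, comV1] at e1'
    have e2' := dF2 y u
    rw [Dop_add_mul s33 (Dop_contDiff e1 s23) 2 e2 (0, y, u), comV2, comW2] at e2'
    constructor <;> linarith
  have hW : ∀ y u : ℝ, Dop e2 (Dop e2 (Dop e3 (Dop e1 h))) (0, y, u) = 0 :=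
    fun y u => (hWV y u).1
  have hV : ∀ y u : ℝ, Dop e3 (Dop e3 (Dop e2 h)) (0, y, u) = 0 := fun y u => (hWV y u).2
  -- constancy facts
  have hbconst : ∀ y : ℝ, Dop e2 (Dop e3 h) (0, y, 0) = Dop e2 (Dop e3 h) (0, 0, 0) := by
    intro y
    have hz : ∀ t : ℝ, Dop e2 (Dop e2 (Dop e3 h)) (((0:ℝ), (0:ℝ), (0:ℝ)) + t • e2) = 0 := by
      intro t
      rw [pt_e2]
      rw [show Dop e2 (Dop e2 (Dop e3 h)) = Dop e3 (Dop e2 (Dop e2 h)) from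
        (Dop_push e3 e2 e2 hh).symm]
      exact slice_deriv_zero s22 hc0 rfl _ _
    have := line_const s23 (0, 0, 0) e2 hz y
    rwa [pt_e2, zero_add] at this
  have hkconst : ∀ u : ℝ, Dop e1 (Dop e2 (Dop e3 h)) (0, 0, u)
      = Dop e1 (Dop e2 (Dop e3 h)) (0, 0, 0) := by
    intro u
    have hz : ∀ t : ℝ, Dop e3 (Dop e1 (Dop e2 (Dop e3 h))) (((0:ℝ), (0:ℝ), (0:ℝ)) + t • e3) = 0 := by
      intro t
      rw [pt_e3]
      rw [show Dop e3 (Dop e1 (Dop e2 (Dop e3 h))) = Dop e2 (Dop e1 (Dop e3 (Dop e3 h))) from by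
        rw [Dop_push e3 e1 e2 s3, Dop_comm' s33 e2 e1]]
      exact slice_deriv_zero (Dop_contDiff e1 s33) hc3 rfl _ _
    have := line_const (Dop_contDiff e1 s23) (0, 0, 0) e3 hz u
    rwa [pt_e3, zero_add] at this
  -- the one-variable polynomial forms
  set α₀ := h (0, 0, 0) with hα₀
  set α₁ := Dop e3 h (0, 0, 0) with hα₁
  set β₀ := Dop e2 h (0, 0, 0) with hβ₀
  set β₁ := Dop e2 (Dop e3 h) (0, 0, 0) with hβ₁
  set γ₀ := Dop e1 h (0, 0, 0) with hγ₀
  set γ₁ := Dop e2 (Dop e1 h) (0, 0, 0) with hγ₁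
  set δ₀ := Dop e3 (Dop e1 h) (0, 0, 0) with hδ₀
  set δ₁ := Dop e2 (Dop e3 (Dop e1 h)) (0, 0, 0) with hδ₁
  have hβ : ∀ u : ℝ, Dop e2 h (0, 0, u) = β₀ + u * Dop e3 (Dop e2 h) (0, 0, 0) := by
    intro u
    have := line_affine s2 (0, 0, 0) e3 (fun t => by rw [pt_e3]; exact hV _ _) u
    rwa [pt_e3, zero_add] at this
  have hβslope : Dop e3 (Dop e2 h) (0, 0, 0) = β₁ := by rw [hcomm32]
  have hδ : ∀ y : ℝ, Dop e3 (Dop e1 h) (0, y, 0) = δ₀ + y * δ₁ := by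
    intro y
    have := line_affine s31 (0, 0, 0) e2 (fun t => by rw [pt_e2]; exact hW _ _) y
    rwa [pt_e2, zero_add] at this
  have hγ : ∀ y : ℝ, Dop e1 h (0, y, 0) = γ₀ + y * γ₁ + (-2 * β₁) * y ^ 2 / 2 := by
    intro y
    have hz : ∀ t : ℝ, Dop e2 (Dop e2 (Dop e1 h)) (((0:ℝ), (0:ℝ), (0:ℝ)) + t • e2) = -2 * β₁ := by
      intro t
      rw [pt_e2, zero_add]
      rw [show Dop e2 (Dop e2 (Dop e1 h)) = Dop e1 (Dop e2 (Dop e2 h)) from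
        (Dop_push e1 e2 e2 hh).symm]
      have h1 := hc1 t 0
      have hb := hbconst t
      rw [hb] at h1
      linarith
    have := line_quad s1 (0, 0, 0) e2 hz y
    rwa [pt_e2, zero_add] at this
  have hα : ∀ u : ℝ, h (0, 0, u) = α₀ + u * α₁ + (-2 * δ₁) * u ^ 2 / 2 := by
    intro u
    have hz : ∀ t : ℝ, Dop e3 (Dop e3 h) (((0:ℝ), (0:ℝ), (0:ℝ)) + t • e3) = -2 * δ₁ := by
      intro t
      rw [pt_e3, zero_add]
      have h1 := hc2 0 t
      have hk := hkconst t
      have hswap : Dop e1 (Dop e2 (Dop e3 h)) (0, 0, 0) = δ₁ := by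
        rw [hδ₁, Dop_push e1 e2 e3 hh]
      rw [hk, hswap] at h1
      linarith
    have := line_quad hh (0, 0, 0) e3 hz u
    rwa [pt_e3, zero_add] at this
  have hA : ∀ y u : ℝ, h (0, y, u) = h (0, 0, u) + y * Dop e2 h (0, 0, u) := by
    intro y u
    have := line_affine hh (0, 0, u) e2 (fun t => by rw [pt_e2, zero_add]; exact hc0 t u) y
    rwa [pt_e2, zero_add] at this
  have hB : ∀ y u : ℝ, Dop e1 h (0, y, u) = Dop e1 h (0, y, 0) + u * Dop e3 (Dop e1 h) (0, y, 0) := by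
    intro y u
    have hz : ∀ t : ℝ, Dop e3 (Dop e3 (Dop e1 h)) (((0:ℝ), y, (0:ℝ)) + t • e3) = 0 := by
      intro t
      rw [pt_e3, zero_add]
      rw [show Dop e3 (Dop e3 (Dop e1 h)) = Dop e1 (Dop e3 (Dop e3 h)) from
        (Dop_push e1 e3 e3 hh).symm]
      exact hc3 y t
    have := line_affine s1 (0, y, 0) e3 hz u
    rwa [pt_e3, zero_add] at this
  have hmain : ∀ x y u : ℝ, h (x, y, u) = h (0, y, u) + x * Dop e1 h (0, y, u) := by
    intro x y u
    have := line_affine hh (0, y, u) e1 (fun t => by rw [pt_e1, zero_add]; exact hX' _) x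
    rwa [pt_e1, zero_add] at this
  refine ⟨![α₀, γ₀, β₀, α₁, γ₁, δ₀, β₁, -δ₁], ?_⟩
  intro p
  obtain ⟨x, y, u⟩ := p
  show h (x, y, u) = α₀ + γ₀ * x + β₀ * y + α₁ * u + γ₁ * (x * y) + δ₀ * (x * u) +
    β₁ * (y * (u - x * y)) + (-δ₁) * (u * (u - x * y))
  rw [hmain, hA, hB, hα, hβ, hβslope, hγ, hδ]
  ring

noncomputable section

section Backward

variable (c0 c1 c2 c3 c4 c5 c6 c7 : ℝ)

private def Pf : ℝ × ℝ × ℝ → ℝ := fun p =>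
  c0 + c1 * p.1 + c2 * p.2.1 + c3 * p.2.2 + c4 * (p.1 * p.2.1) + c5 * (p.1 * p.2.2) +
    c6 * (p.2.1 * (p.2.2 - p.1 * p.2.1)) + c7 * (p.2.2 * (p.2.2 - p.1 * p.2.1))

private def Gf : ℝ × ℝ × ℝ → ℝ := fun p =>
  c2 + (c3 + c4) * p.1 + c5 * p.1 ^ 2 + (c6 + c7 * p.1) * (p.2.2 - p.1 * p.2.1)

lemma Pf_diff (p : ℝ × ℝ × ℝ) : DifferentiableAt ℝ (Pf c0 c1 c2 c3 c4 c5 c6 c7) p := by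
  unfold Pf; fun_prop

lemma Gf_diff (p : ℝ × ℝ × ℝ) : DifferentiableAt ℝ (Gf c2 c3 c4 c5 c6 c7) p := by
  unfold Gf; fun_prop

lemma XPf : Xop (Pf c0 c1 c2 c3 c4 c5 c6 c7) = fun p =>
    c1 + c4 * p.2.1 + c5 * p.2.2 - c6 * p.2.1 ^ 2 - c7 * (p.2.2 * p.2.1) := by
  funext p
  show Dop e1 _ p = _
  apply Dop_of_line (Pf_diff _ _ _ _ _ _ _ _ p)
  have heq : (fun t : ℝ => Pf c0 c1 c2 c3 c4 c5 c6 c7 (p + t • e1)) =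
      fun t => Pf c0 c1 c2 c3 c4 c5 c6 c7 p +
        (c1 + c4 * p.2.1 + c5 * p.2.2 - c6 * p.2.1 ^ 2 - c7 * (p.2.2 * p.2.1)) * t := by
    funext t; rw [pt_e1']; simp only [Pf]; ring
  rw [heq]
  exact hasDerivAt_affine _ _ 0

lemma XXPf : ∀ p, Xop (Xop (Pf c0 c1 c2 c3 c4 c5 c6 c7)) p = 0 := by
  intro p
  show Dop e1 (Xop _) p = 0
  rw [XPf]
  apply Dop_of_line (by fun_prop)
  have heq : (fun t : ℝ => (fun p : ℝ × ℝ × ℝ =>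
      c1 + c4 * p.2.1 + c5 * p.2.2 - c6 * p.2.1 ^ 2 - c7 * (p.2.2 * p.2.1)) (p + t • e1)) =
      fun _ : ℝ => c1 + c4 * p.2.1 + c5 * p.2.2 - c6 * p.2.1 ^ 2 - c7 * (p.2.2 * p.2.1) := by
    funext t; rw [pt_e1']
  rw [heq]
  exact hasDerivAt_const 0 _

lemma D2Pf (p : ℝ × ℝ × ℝ) : Dop e2 (Pf c0 c1 c2 c3 c4 c5 c6 c7) p =
    c2 + c4 * p.1 + c6 * (p.2.2 - 2 * p.1 * p.2.1) - c7 * (p.1 * p.2.2) := by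
  apply Dop_of_line (Pf_diff _ _ _ _ _ _ _ _ p)
  have heq : (fun t : ℝ => Pf c0 c1 c2 c3 c4 c5 c6 c7 (p + t • e2)) =
      fun t => Pf c0 c1 c2 c3 c4 c5 c6 c7 p +
        (c2 + c4 * p.1 + c6 * (p.2.2 - 2 * p.1 * p.2.1) - c7 * (p.1 * p.2.2)) * t +
        (-(c6 * p.1)) * (t * t) := by
    funext t; rw [pt_e2']; simp only [Pf]; ring
  rw [heq]
  have := hasDerivAt_quadratic (Pf c0 c1 c2 c3 c4 c5 c6 c7 p)
    (c2 + c4 * p.1 + c6 * (p.2.2 - 2 * p.1 * p.2.1) - c7 * (p.1 * p.2.2)) (-(c6 * p.1)) 0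
  convert this using 1
  ring

lemma D3Pf (p : ℝ × ℝ × ℝ) : Dop e3 (Pf c0 c1 c2 c3 c4 c5 c6 c7) p =
    c3 + c5 * p.1 + c6 * p.2.1 + c7 * (2 * p.2.2 - p.1 * p.2.1) := by
  apply Dop_of_line (Pf_diff _ _ _ _ _ _ _ _ p)
  have heq : (fun t : ℝ => Pf c0 c1 c2 c3 c4 c5 c6 c7 (p + t • e3)) =
      fun t => Pf c0 c1 c2 c3 c4 c5 c6 c7 p +
        (c3 + c5 * p.1 + c6 * p.2.1 + c7 * (2 * p.2.2 - p.1 * p.2.1)) * t +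
        c7 * (t * t) := by
    funext t; rw [pt_e3']; simp only [Pf]; ring
  rw [heq]
  have := hasDerivAt_quadratic (Pf c0 c1 c2 c3 c4 c5 c6 c7 p)
    (c3 + c5 * p.1 + c6 * p.2.1 + c7 * (2 * p.2.2 - p.1 * p.2.1)) c7 0
  convert this using 1
  ring

lemma YPf : Yop (Pf c0 c1 c2 c3 c4 c5 c6 c7) = Gf c2 c3 c4 c5 c6 c7 := by
  funext p
  show Dop e2 _ p + p.1 * Dop e3 _ p = _
  rw [D2Pf, D3Pf]
  simp only [Gf]
  ring

lemma YYPf : ∀ p, Yop (Yop (Pf c0 c1 c2 c3 c4 c5 c6 c7)) p = 0 := by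
  intro p
  rw [YPf]
  show Dop e2 _ p + p.1 * Dop e3 _ p = 0
  have h2 : Dop e2 (Gf c2 c3 c4 c5 c6 c7) p = -((c6 + c7 * p.1) * p.1) := by
    apply Dop_of_line (Gf_diff _ _ _ _ _ _ p)
    have heq : (fun t : ℝ => Gf c2 c3 c4 c5 c6 c7 (p + t • e2)) =
        fun t => Gf c2 c3 c4 c5 c6 c7 p + (-((c6 + c7 * p.1) * p.1)) * t := by
      funext t; rw [pt_e2']; simp only [Gf]; ring
    rw [heq]
    exact hasDerivAt_affine _ _ 0
  have h3 : Dop e3 (Gf c2 c3 c4 c5 c6 c7) p = c6 + c7 * p.1 := by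
    apply Dop_of_line (Gf_diff _ _ _ _ _ _ p)
    have heq : (fun t : ℝ => Gf c2 c3 c4 c5 c6 c7 (p + t • e3)) =
        fun t => Gf c2 c3 c4 c5 c6 c7 p + (c6 + c7 * p.1) * t := by
      funext t; rw [pt_e3']; simp only [Gf]; ring
    rw [heq]
    exact hasDerivAt_affine _ _ 0
  rw [h2, h3]
  ring

end Backward

end

noncomputable section

lemma lin_indep :
    LinearIndependent ℝ
      (![fun _ : ℝ × ℝ × ℝ => (1 : ℝ),
        fun p => p.1,
        fun p => p.2.1,
        fun p => p.2.2,
        fun p => p.1 * p.2.1,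
        fun p => p.1 * p.2.2,
        fun p => p.2.1 * (p.2.2 - p.1 * p.2.1),
        fun p => p.2.2 * (p.2.2 - p.1 * p.2.1)] :
        Fin 8 → (ℝ × ℝ × ℝ → ℝ)) := by
  rw [Fintype.linearIndependent_iff]
  intro g hg
  have hp : ∀ x y u : ℝ, g 0 + g 1 * x + g 2 * y + g 3 * u + g 4 * (x * y) + g 5 * (x * u) +
      g 6 * (y * (u - x * y)) + g 7 * (u * (u - x * y)) = 0 := by
    intro x y u
    have := congrFun hg (x, y, u)
    simpa [Fin.sum_univ_eight] using this
  have h0 := hp 0 0 0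
  have h1 := hp 1 0 0
  have h2 := hp 0 1 0
  have h3 := hp 0 0 1
  have h4 := hp 1 1 0
  have h5 := hp 1 0 1
  have h6 := hp 0 1 1
  have h7 := hp 0 0 2
  norm_num at h0 h1 h2 h3 h4 h5 h6 h7
  clear hg hp
  intro i
  fin_cases i <;> simp_all <;> linarith

end


noncomputable section

theorem multicontact_polynomials_sl3 :
    (∀ h : ℝ × ℝ × ℝ → ℝ, ContDiff ℝ (⊤ : ℕ∞) h →
      (((∀ p, Xop (Xop h) p = 0) ∧ (∀ p, Yop (Yop h) p = 0)) ↔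
        ∃ c : Fin 8 → ℝ, ∀ p : ℝ × ℝ × ℝ,
          h p = c 0 + c 1 * p.1 + c 2 * p.2.1 + c 3 * p.2.2 +
            c 4 * (p.1 * p.2.1) + c 5 * (p.1 * p.2.2) +
            c 6 * (p.2.1 * (p.2.2 - p.1 * p.2.1)) +
            c 7 * (p.2.2 * (p.2.2 - p.1 * p.2.1)))) ∧
    LinearIndependent ℝ
      (![fun _ : ℝ × ℝ × ℝ => (1 : ℝ),
        fun p => p.1,
        fun p => p.2.1,
        fun p => p.2.2,
        fun p => p.1 * p.2.1,
        fun p => p.1 * p.2.2,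
        fun p => p.2.1 * (p.2.2 - p.1 * p.2.1),
        fun p => p.2.2 * (p.2.2 - p.1 * p.2.1)] :
        Fin 8 → (ℝ × ℝ × ℝ → ℝ)) := by
  constructor
  · intro h hh
    constructor
    · rintro ⟨hX, hY⟩
      exact forward_dir hh hX hY
    · rintro ⟨c, hc⟩
      have hP : h = Pf (c 0) (c 1) (c 2) (c 3) (c 4) (c 5) (c 6) (c 7) :=
        funext fun p => by rw [hc p]; rfl
      rw [hP]
      exact ⟨XXPf _ _ _ _ _ _ _ _, YYPf _ _ _ _ _ _ _ _⟩
  · exact lin_indep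

end
end
end
end

section
/- Let A ⊆ ℝ⁵ be open and let f_x, f_y, f_t, f_u, f_v be smooth real functions on A; consider the operator F = f_x·X̄ + f_y·Ȳ + f_t·T̄ + f_u·Ū + f_v·V̄ acting on smooth functions on A. Then there exist smooth functions λ, μ, ν on A with [F,X̄] = λ·X̄, [F,Ȳ] = μ·Ȳ and [F,T̄] = ν·T̄ (commutators as operators on smooth functions) if and only if on A the following hold: X̄f_y = X̄f_t = X̄f_v = 0 and X̄f_u = f_y; Ȳf_x = Ȳf_t = 0, Ȳf_u = −f_x and Ȳf_v = f_t; T̄f_x = T̄f_y = T̄f_u = 0 and T̄f_v = −f_y. -/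
/-!
Statement 3. On ℝ⁵ with coordinates (x,y,t,u,v) (indices 0,…,4), define
`X̄ = ∂/∂x + y·∂/∂u`, `Ȳ = ∂/∂y + t·∂/∂v`, `T̄ = ∂/∂t`, `Ū = ∂/∂u`, `V̄ = ∂/∂v`.
A vector field `F = f_x X̄ + f_y Ȳ + f_t T̄ + f_u Ū + f_v V̄` on an open set `A`
satisfies `[F,X̄] = λX̄`, `[F,Ȳ] = μȲ`, `[F,T̄] = νT̄` for some smooth λ, μ, ν
iff the listed first-order differential equations hold on `A`.
-/

noncomputable section

/-- `X̄ = ∂/∂x + y·∂/∂u`. -/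
def Xb (f : (Fin 5 → ℝ) → ℝ) : (Fin 5 → ℝ) → ℝ :=
  fun p => fderiv ℝ f p (Pi.single 0 1) + p 1 * fderiv ℝ f p (Pi.single 3 1)

/-- `Ȳ = ∂/∂y + t·∂/∂v`. -/
def Yb (f : (Fin 5 → ℝ) → ℝ) : (Fin 5 → ℝ) → ℝ :=
  fun p => fderiv ℝ f p (Pi.single 1 1) + p 2 * fderiv ℝ f p (Pi.single 4 1)

/-- `T̄ = ∂/∂t`. -/
def Tb (f : (Fin 5 → ℝ) → ℝ) : (Fin 5 → ℝ) → ℝ :=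
  fun p => fderiv ℝ f p (Pi.single 2 1)

/-- `Ū = ∂/∂u`. -/
def Ub (f : (Fin 5 → ℝ) → ℝ) : (Fin 5 → ℝ) → ℝ :=
  fun p => fderiv ℝ f p (Pi.single 3 1)

/-- `V̄ = ∂/∂v`. -/
def Vb (f : (Fin 5 → ℝ) → ℝ) : (Fin 5 → ℝ) → ℝ :=
  fun p => fderiv ℝ f p (Pi.single 4 1)

/-- The operator `F = f_x X̄ + f_y Ȳ + f_t T̄ + f_u Ū + f_v V̄`. -/
def Fop (fx fy ft fu fv : (Fin 5 → ℝ) → ℝ) (φ : (Fin 5 → ℝ) → ℝ) : (Fin 5 → ℝ) → ℝ :=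
  fun p => fx p * Xb φ p + fy p * Yb φ p + ft p * Tb φ p + fu p * Ub φ p + fv p * Vb φ p


open ContinuousLinearMap

abbrev ee (i : Fin 5) : Fin 5 → ℝ := Pi.single i 1

lemma hasFDerivAt_fderiv_apply {φ : (Fin 5 → ℝ) → ℝ} (hφ : ContDiff ℝ (⊤ : ℕ∞) φ)
    (p : Fin 5 → ℝ) (v : Fin 5 → ℝ) :
    HasFDerivAt (fun q => fderiv ℝ φ q v) ((fderiv ℝ (fderiv ℝ φ) p).flip v) p := by
  have hg : ContDiff ℝ (⊤ : ℕ∞) (fderiv ℝ φ) := hφ.fderiv_right (by simp)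
  have hd : HasFDerivAt (fderiv ℝ φ) (fderiv ℝ (fderiv ℝ φ) p) p :=
    ((hg.differentiable (by simp)) p).hasFDerivAt
  have := hd.clm_apply (hasFDerivAt_const v p)
  simpa using this

lemma hasFDerivAt_coord (i : Fin 5) (p : Fin 5 → ℝ) :
    HasFDerivAt (fun q : Fin 5 → ℝ => q i) (ContinuousLinearMap.proj (R := ℝ) (φ := fun _ : Fin 5 => ℝ) i) p := by
  have h := (ContinuousLinearMap.proj (R := ℝ) (φ := fun _ : Fin 5 => ℝ) i).hasFDerivAt (x := p)
  exact h

lemma fderiv_coord_apply (i : Fin 5) (p w : Fin 5 → ℝ) :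
    fderiv ℝ (fun q : Fin 5 → ℝ => q i) p w = w i := by
  rw [(hasFDerivAt_coord i p).fderiv]; rfl

lemma contDiff_coord (i : Fin 5) : ContDiff ℝ (⊤ : ℕ∞) (fun q : Fin 5 → ℝ => q i) :=
  (ContinuousLinearMap.proj (R := ℝ) (φ := fun _ : Fin 5 => ℝ) i).contDiff

section lemmas
variable {φ : (Fin 5 → ℝ) → ℝ} (hφ : ContDiff ℝ (⊤ : ℕ∞) φ) (p : Fin 5 → ℝ)
include hφ

lemma hasFDerivAt_Xb :
    HasFDerivAt (Xb φ)
      ((fderiv ℝ (fderiv ℝ φ) p).flip (ee 0) +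
        (p 1 • (fderiv ℝ (fderiv ℝ φ) p).flip (ee 3) +
          (fderiv ℝ φ p (ee 3)) • ContinuousLinearMap.proj 1)) p := by
  have h := (hasFDerivAt_fderiv_apply hφ p (ee 0)).add
    ((hasFDerivAt_coord 1 p).mul (hasFDerivAt_fderiv_apply hφ p (ee 3)))
  exact h

lemma hasFDerivAt_Yb :
    HasFDerivAt (Yb φ)
      ((fderiv ℝ (fderiv ℝ φ) p).flip (ee 1) +
        (p 2 • (fderiv ℝ (fderiv ℝ φ) p).flip (ee 4) +
          (fderiv ℝ φ p (ee 4)) • ContinuousLinearMap.proj 2)) p := by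
  have h := (hasFDerivAt_fderiv_apply hφ p (ee 1)).add
    ((hasFDerivAt_coord 2 p).mul (hasFDerivAt_fderiv_apply hφ p (ee 4)))
  exact h

lemma hasFDerivAt_Tb :
    HasFDerivAt (Tb φ) ((fderiv ℝ (fderiv ℝ φ) p).flip (ee 2)) p :=
  hasFDerivAt_fderiv_apply hφ p (ee 2)

lemma hasFDerivAt_Ub :
    HasFDerivAt (Ub φ) ((fderiv ℝ (fderiv ℝ φ) p).flip (ee 3)) p :=
  hasFDerivAt_fderiv_apply hφ p (ee 3)

lemma hasFDerivAt_Vb :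
    HasFDerivAt (Vb φ) ((fderiv ℝ (fderiv ℝ φ) p).flip (ee 4)) p :=
  hasFDerivAt_fderiv_apply hφ p (ee 4)

lemma fderiv_Xb_apply (w : Fin 5 → ℝ) :
    fderiv ℝ (Xb φ) p w = fderiv ℝ (fderiv ℝ φ) p w (ee 0)
      + (fderiv ℝ φ p (ee 3) * w 1 + p 1 * fderiv ℝ (fderiv ℝ φ) p w (ee 3)) := by
  rw [(hasFDerivAt_Xb hφ p).fderiv]; simp; ring

lemma fderiv_Yb_apply (w : Fin 5 → ℝ) :
    fderiv ℝ (Yb φ) p w = fderiv ℝ (fderiv ℝ φ) p w (ee 1)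
      + (fderiv ℝ φ p (ee 4) * w 2 + p 2 * fderiv ℝ (fderiv ℝ φ) p w (ee 4)) := by
  rw [(hasFDerivAt_Yb hφ p).fderiv]; simp; ring

lemma fderiv_Tb_apply (w : Fin 5 → ℝ) :
    fderiv ℝ (Tb φ) p w = fderiv ℝ (fderiv ℝ φ) p w (ee 2) := by
  rw [(hasFDerivAt_Tb hφ p).fderiv]; simp

lemma fderiv_Ub_apply (w : Fin 5 → ℝ) :
    fderiv ℝ (Ub φ) p w = fderiv ℝ (fderiv ℝ φ) p w (ee 3) := by
  rw [(hasFDerivAt_Ub hφ p).fderiv]; simp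

lemma fderiv_Vb_apply (w : Fin 5 → ℝ) :
    fderiv ℝ (Vb φ) p w = fderiv ℝ (fderiv ℝ φ) p w (ee 4) := by
  rw [(hasFDerivAt_Vb hφ p).fderiv]; simp

end lemmas

section bracket
variable {φ fx fy ft fu fv : (Fin 5 → ℝ) → ℝ} (hφ : ContDiff ℝ (⊤ : ℕ∞) φ) (p : Fin 5 → ℝ)
  (hfx : DifferentiableAt ℝ fx p) (hfy : DifferentiableAt ℝ fy p)
  (hft : DifferentiableAt ℝ ft p) (hfu : DifferentiableAt ℝ fu p)
  (hfv : DifferentiableAt ℝ fv p)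
include hφ hfx hfy hft hfu hfv

lemma fderiv_Fop_apply (w : Fin 5 → ℝ) :
    fderiv ℝ (Fop fx fy ft fu fv φ) p w =
      (fderiv ℝ fx p w * Xb φ p + fx p * fderiv ℝ (Xb φ) p w)
      + (fderiv ℝ fy p w * Yb φ p + fy p * fderiv ℝ (Yb φ) p w)
      + (fderiv ℝ ft p w * Tb φ p + ft p * fderiv ℝ (Tb φ) p w)
      + (fderiv ℝ fu p w * Ub φ p + fu p * fderiv ℝ (Ub φ) p w)
      + (fderiv ℝ fv p w * Vb φ p + fv p * fderiv ℝ (Vb φ) p w) := by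
  have hX := (hasFDerivAt_Xb hφ p).differentiableAt.hasFDerivAt
  have hY := (hasFDerivAt_Yb hφ p).differentiableAt.hasFDerivAt
  have hT := (hasFDerivAt_Tb hφ p).differentiableAt.hasFDerivAt
  have hU := (hasFDerivAt_Ub hφ p).differentiableAt.hasFDerivAt
  have hV := (hasFDerivAt_Vb hφ p).differentiableAt.hasFDerivAt
  have hF : HasFDerivAt (Fop fx fy ft fu fv φ)
      ((((fx p • fderiv ℝ (Xb φ) p + Xb φ p • fderiv ℝ fx p)
        + (fy p • fderiv ℝ (Yb φ) p + Yb φ p • fderiv ℝ fy p))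
        + (ft p • fderiv ℝ (Tb φ) p + Tb φ p • fderiv ℝ ft p)
        + (fu p • fderiv ℝ (Ub φ) p + Ub φ p • fderiv ℝ fu p))
        + (fv p • fderiv ℝ (Vb φ) p + Vb φ p • fderiv ℝ fv p)) p := by
    exact ((((hfx.hasFDerivAt.mul hX).add (hfy.hasFDerivAt.mul hY)).add
      (hft.hasFDerivAt.mul hT)).add (hfu.hasFDerivAt.mul hU)).add (hfv.hasFDerivAt.mul hV)
  rw [hF.fderiv]; simp; ring

end bracket

lemma Xb_apply (f : (Fin 5 → ℝ) → ℝ) (p : Fin 5 → ℝ) :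
    Xb f p = fderiv ℝ f p (ee 0) + p 1 * fderiv ℝ f p (ee 3) := rfl
lemma Yb_apply (f : (Fin 5 → ℝ) → ℝ) (p : Fin 5 → ℝ) :
    Yb f p = fderiv ℝ f p (ee 1) + p 2 * fderiv ℝ f p (ee 4) := rfl
lemma Tb_apply (f : (Fin 5 → ℝ) → ℝ) (p : Fin 5 → ℝ) :
    Tb f p = fderiv ℝ f p (ee 2) := rfl
lemma Ub_apply (f : (Fin 5 → ℝ) → ℝ) (p : Fin 5 → ℝ) :
    Ub f p = fderiv ℝ f p (ee 3) := rfl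
lemma Vb_apply (f : (Fin 5 → ℝ) → ℝ) (p : Fin 5 → ℝ) :
    Vb f p = fderiv ℝ f p (ee 4) := rfl
lemma Fop_apply (fx fy ft fu fv φ : (Fin 5 → ℝ) → ℝ) (p : Fin 5 → ℝ) :
    Fop fx fy ft fu fv φ p = fx p * Xb φ p + fy p * Yb φ p + ft p * Tb φ p
      + fu p * Ub φ p + fv p * Vb φ p := rfl

section bracket2
variable {φ fx fy ft fu fv : (Fin 5 → ℝ) → ℝ} (hφ : ContDiff ℝ (⊤ : ℕ∞) φ) (p : Fin 5 → ℝ)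
  (hfx : DifferentiableAt ℝ fx p) (hfy : DifferentiableAt ℝ fy p)
  (hft : DifferentiableAt ℝ ft p) (hfu : DifferentiableAt ℝ fu p)
  (hfv : DifferentiableAt ℝ fv p)
include hφ hfx hfy hft hfu hfv

lemma bracketX :
    Fop fx fy ft fu fv (Xb φ) p - Xb (Fop fx fy ft fu fv φ) p
      = fy p * Ub φ p
        - (Xb fx p * Xb φ p + Xb fy p * Yb φ p + Xb ft p * Tb φ p
            + Xb fu p * Ub φ p + Xb fv p * Vb φ p) := by
  have hsym : IsSymmSndFDerivAt ℝ φ p := (hφ.contDiffAt).isSymmSndFDerivAt (by rw [minSmoothness_of_isRCLikeNormedField]; exact WithTop.coe_le_coe.mpr le_top)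
  simp only [Fop_apply, Xb_apply, Yb_apply, Tb_apply, Ub_apply, Vb_apply,
    fderiv_Fop_apply hφ p hfx hfy hft hfu hfv,
    fderiv_Xb_apply hφ p, fderiv_Yb_apply hφ p, fderiv_Tb_apply hφ p,
    fderiv_Ub_apply hφ p, fderiv_Vb_apply hφ p]
  simp only [Pi.single_apply, Fin.reduceEq, if_false, if_true, reduceIte]
  simp only [hsym (ee 1) (ee 0), hsym (ee 2) (ee 0), hsym (ee 3) (ee 0), hsym (ee 4) (ee 0),
      hsym (ee 2) (ee 1), hsym (ee 3) (ee 1), hsym (ee 4) (ee 1),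
      hsym (ee 3) (ee 2), hsym (ee 4) (ee 2), hsym (ee 4) (ee 3)]
  ring

lemma bracketY :
    Fop fx fy ft fu fv (Yb φ) p - Yb (Fop fx fy ft fu fv φ) p
      = - fx p * Ub φ p + ft p * Vb φ p
        - (Yb fx p * Xb φ p + Yb fy p * Yb φ p + Yb ft p * Tb φ p
            + Yb fu p * Ub φ p + Yb fv p * Vb φ p) := by
  have hsym : IsSymmSndFDerivAt ℝ φ p := (hφ.contDiffAt).isSymmSndFDerivAt (by rw [minSmoothness_of_isRCLikeNormedField]; exact WithTop.coe_le_coe.mpr le_top)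
  simp only [Fop_apply, Xb_apply, Yb_apply, Tb_apply, Ub_apply, Vb_apply,
    fderiv_Fop_apply hφ p hfx hfy hft hfu hfv,
    fderiv_Xb_apply hφ p, fderiv_Yb_apply hφ p, fderiv_Tb_apply hφ p,
    fderiv_Ub_apply hφ p, fderiv_Vb_apply hφ p]
  simp only [Pi.single_apply, Fin.reduceEq, if_false, if_true, reduceIte]
  simp only [hsym (ee 1) (ee 0), hsym (ee 2) (ee 0), hsym (ee 3) (ee 0), hsym (ee 4) (ee 0),
      hsym (ee 2) (ee 1), hsym (ee 3) (ee 1), hsym (ee 4) (ee 1),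
      hsym (ee 3) (ee 2), hsym (ee 4) (ee 2), hsym (ee 4) (ee 3)]
  ring

lemma bracketT :
    Fop fx fy ft fu fv (Tb φ) p - Tb (Fop fx fy ft fu fv φ) p
      = - fy p * Vb φ p
        - (Tb fx p * Xb φ p + Tb fy p * Yb φ p + Tb ft p * Tb φ p
            + Tb fu p * Ub φ p + Tb fv p * Vb φ p) := by
  have hsym : IsSymmSndFDerivAt ℝ φ p := (hφ.contDiffAt).isSymmSndFDerivAt (by rw [minSmoothness_of_isRCLikeNormedField]; exact WithTop.coe_le_coe.mpr le_top)
  simp only [Fop_apply, Xb_apply, Yb_apply, Tb_apply, Ub_apply, Vb_apply,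
    fderiv_Fop_apply hφ p hfx hfy hft hfu hfv,
    fderiv_Xb_apply hφ p, fderiv_Yb_apply hφ p, fderiv_Tb_apply hφ p,
    fderiv_Ub_apply hφ p, fderiv_Vb_apply hφ p]
  simp only [Pi.single_apply, Fin.reduceEq, if_false, if_true, reduceIte]
  simp only [hsym (ee 1) (ee 0), hsym (ee 2) (ee 0), hsym (ee 3) (ee 0), hsym (ee 4) (ee 0),
      hsym (ee 2) (ee 1), hsym (ee 3) (ee 1), hsym (ee 4) (ee 1),
      hsym (ee 3) (ee 2), hsym (ee 4) (ee 2), hsym (ee 4) (ee 3)]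
  ring

end bracket2

lemma Xb_coord (j : Fin 5) (p : Fin 5 → ℝ) :
    Xb (fun q => q j) p = ee 0 j + p 1 * ee 3 j := by
  rw [Xb_apply, fderiv_coord_apply, fderiv_coord_apply]
lemma Yb_coord (j : Fin 5) (p : Fin 5 → ℝ) :
    Yb (fun q => q j) p = ee 1 j + p 2 * ee 4 j := by
  rw [Yb_apply, fderiv_coord_apply, fderiv_coord_apply]
lemma Tb_coord (j : Fin 5) (p : Fin 5 → ℝ) :
    Tb (fun q => q j) p = ee 2 j := by rw [Tb_apply, fderiv_coord_apply]
lemma Ub_coord (j : Fin 5) (p : Fin 5 → ℝ) :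
    Ub (fun q => q j) p = ee 3 j := by rw [Ub_apply, fderiv_coord_apply]
lemma Vb_coord (j : Fin 5) (p : Fin 5 → ℝ) :
    Vb (fun q => q j) p = ee 4 j := by rw [Vb_apply, fderiv_coord_apply]

lemma smooth_Xb_on {A : Set (Fin 5 → ℝ)} (hA : IsOpen A) {f : (Fin 5 → ℝ) → ℝ}
    (hf : ContDiffOn ℝ (⊤ : ℕ∞) f A) : ContDiffOn ℝ (⊤ : ℕ∞) (fun p => Xb f p) A := by
  have hd : ContDiffOn ℝ (⊤ : ℕ∞) (fderiv ℝ f) A := hf.fderiv_of_isOpen hA (by simp)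
  exact (hd.clm_apply contDiffOn_const).add
    (((contDiff_coord 1).contDiffOn).mul (hd.clm_apply contDiffOn_const))

lemma smooth_Yb_on {A : Set (Fin 5 → ℝ)} (hA : IsOpen A) {f : (Fin 5 → ℝ) → ℝ}
    (hf : ContDiffOn ℝ (⊤ : ℕ∞) f A) : ContDiffOn ℝ (⊤ : ℕ∞) (fun p => Yb f p) A := by
  have hd : ContDiffOn ℝ (⊤ : ℕ∞) (fderiv ℝ f) A := hf.fderiv_of_isOpen hA (by simp)
  exact (hd.clm_apply contDiffOn_const).add
    (((contDiff_coord 2).contDiffOn).mul (hd.clm_apply contDiffOn_const))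

lemma smooth_Tb_on {A : Set (Fin 5 → ℝ)} (hA : IsOpen A) {f : (Fin 5 → ℝ) → ℝ}
    (hf : ContDiffOn ℝ (⊤ : ℕ∞) f A) : ContDiffOn ℝ (⊤ : ℕ∞) (fun p => Tb f p) A := by
  have hd : ContDiffOn ℝ (⊤ : ℕ∞) (fderiv ℝ f) A := hf.fderiv_of_isOpen hA (by simp)
  exact hd.clm_apply contDiffOn_const


theorem multicontact_conditions_hessenberg_sl4
    (A : Set (Fin 5 → ℝ)) (hA : IsOpen A)
    (fx fy ft fu fv : (Fin 5 → ℝ) → ℝ)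
    (hfx : ContDiffOn ℝ (⊤ : ℕ∞) fx A) (hfy : ContDiffOn ℝ (⊤ : ℕ∞) fy A)
    (hft : ContDiffOn ℝ (⊤ : ℕ∞) ft A) (hfu : ContDiffOn ℝ (⊤ : ℕ∞) fu A)
    (hfv : ContDiffOn ℝ (⊤ : ℕ∞) fv A) :
    (∃ lam mu nu : (Fin 5 → ℝ) → ℝ,
      ContDiffOn ℝ (⊤ : ℕ∞) lam A ∧ ContDiffOn ℝ (⊤ : ℕ∞) mu A ∧ ContDiffOn ℝ (⊤ : ℕ∞) nu A ∧
      (∀ φ : (Fin 5 → ℝ) → ℝ, ContDiff ℝ (⊤ : ℕ∞) φ → ∀ p ∈ A,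
        Fop fx fy ft fu fv (Xb φ) p - Xb (Fop fx fy ft fu fv φ) p = lam p * Xb φ p) ∧
      (∀ φ : (Fin 5 → ℝ) → ℝ, ContDiff ℝ (⊤ : ℕ∞) φ → ∀ p ∈ A,
        Fop fx fy ft fu fv (Yb φ) p - Yb (Fop fx fy ft fu fv φ) p = mu p * Yb φ p) ∧
      (∀ φ : (Fin 5 → ℝ) → ℝ, ContDiff ℝ (⊤ : ℕ∞) φ → ∀ p ∈ A,
        Fop fx fy ft fu fv (Tb φ) p - Tb (Fop fx fy ft fu fv φ) p = nu p * Tb φ p)) ↔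
    (∀ p ∈ A,
      Xb fy p = 0 ∧ Xb ft p = 0 ∧ Xb fv p = 0 ∧ Xb fu p = fy p ∧
      Yb fx p = 0 ∧ Yb ft p = 0 ∧ Yb fu p = - fx p ∧ Yb fv p = ft p ∧
      Tb fx p = 0 ∧ Tb fy p = 0 ∧ Tb fu p = 0 ∧ Tb fv p = - fy p) := by
  constructor
  · rintro ⟨lam, mu, nu, _, _, _, hX, hY, hT⟩ p hp
    have hdx : DifferentiableAt ℝ fx p :=
      (hfx.contDiffAt (hA.mem_nhds hp)).differentiableAt (by simp)
    have hdy : DifferentiableAt ℝ fy p :=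
      (hfy.contDiffAt (hA.mem_nhds hp)).differentiableAt (by simp)
    have hdt : DifferentiableAt ℝ ft p :=
      (hft.contDiffAt (hA.mem_nhds hp)).differentiableAt (by simp)
    have hdu : DifferentiableAt ℝ fu p :=
      (hfu.contDiffAt (hA.mem_nhds hp)).differentiableAt (by simp)
    have hdv : DifferentiableAt ℝ fv p :=
      (hfv.contDiffAt (hA.mem_nhds hp)).differentiableAt (by simp)
    have keyX : ∀ j : Fin 5,
        fy p * Ub (fun q => q j) p
          - (Xb fx p * Xb (fun q => q j) p + Xb fy p * Yb (fun q => q j) p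
              + Xb ft p * Tb (fun q => q j) p + Xb fu p * Ub (fun q => q j) p
              + Xb fv p * Vb (fun q => q j) p)
          = lam p * Xb (fun q => q j) p := fun j =>
      (bracketX (contDiff_coord j) p hdx hdy hdt hdu hdv).symm.trans
        (hX _ (contDiff_coord j) p hp)
    have keyY : ∀ j : Fin 5,
        - fx p * Ub (fun q => q j) p + ft p * Vb (fun q => q j) p
          - (Yb fx p * Xb (fun q => q j) p + Yb fy p * Yb (fun q => q j) p
              + Yb ft p * Tb (fun q => q j) p + Yb fu p * Ub (fun q => q j) p
              + Yb fv p * Vb (fun q => q j) p)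
          = mu p * Yb (fun q => q j) p := fun j =>
      (bracketY (contDiff_coord j) p hdx hdy hdt hdu hdv).symm.trans
        (hY _ (contDiff_coord j) p hp)
    have keyT : ∀ j : Fin 5,
        - fy p * Vb (fun q => q j) p
          - (Tb fx p * Xb (fun q => q j) p + Tb fy p * Yb (fun q => q j) p
              + Tb ft p * Tb (fun q => q j) p + Tb fu p * Ub (fun q => q j) p
              + Tb fv p * Vb (fun q => q j) p)
          = nu p * Tb (fun q => q j) p := fun j =>
      (bracketT (contDiff_coord j) p hdx hdy hdt hdu hdv).symm.trans
        (hT _ (contDiff_coord j) p hp)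
    have eX0 := keyX 0; have eX1 := keyX 1; have eX2 := keyX 2
    have eX3 := keyX 3; have eX4 := keyX 4
    have eY0 := keyY 0; have eY1 := keyY 1; have eY2 := keyY 2
    have eY3 := keyY 3; have eY4 := keyY 4
    have eT0 := keyT 0; have eT1 := keyT 1; have eT3 := keyT 3; have eT4 := keyT 4
    simp only [Xb_coord, Yb_coord, Tb_coord, Ub_coord, Vb_coord, Pi.single_apply,
      Fin.reduceEq, reduceIte, if_true, if_false, mul_zero, mul_one, zero_mul, one_mul,
      add_zero, zero_add, sub_zero, zero_sub, neg_mul, neg_zero,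
      neg_neg] at eX0 eX1 eX2 eX3 eX4 eY0 eY1 eY2 eY3 eY4 eT0 eT1 eT3 eT4
    refine ⟨by linear_combination -eX1, by linear_combination -eX2, by linear_combination -eX4 + p 2 * eX1,
      by linear_combination -eX3 + p 1 * eX0,
      by linear_combination -eY0, by linear_combination -eY2,
      by linear_combination -eY3 + p 1 * eY0, by linear_combination -eY4 + p 2 * eY1,
      by linear_combination -eT0, by linear_combination -eT1,
      by linear_combination -eT3 + p 1 * eT0, by linear_combination -eT4 + p 2 * eT1⟩
  · intro h
    refine ⟨fun q => -(Xb fx q), fun q => -(Yb fy q), fun q => -(Tb ft q),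
      (smooth_Xb_on hA hfx).neg, (smooth_Yb_on hA hfy).neg, (smooth_Tb_on hA hft).neg,
      ?_, ?_, ?_⟩
    all_goals
      intro φ hφ p hp
      have hdx : DifferentiableAt ℝ fx p :=
        (hfx.contDiffAt (hA.mem_nhds hp)).differentiableAt (by simp)
      have hdy : DifferentiableAt ℝ fy p :=
        (hfy.contDiffAt (hA.mem_nhds hp)).differentiableAt (by simp)
      have hdt : DifferentiableAt ℝ ft p :=
        (hft.contDiffAt (hA.mem_nhds hp)).differentiableAt (by simp)
      have hdu : DifferentiableAt ℝ fu p :=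
        (hfu.contDiffAt (hA.mem_nhds hp)).differentiableAt (by simp)
      have hdv : DifferentiableAt ℝ fv p :=
        (hfv.contDiffAt (hA.mem_nhds hp)).differentiableAt (by simp)
      obtain ⟨h1, h2, h3, h4, h5, h6, h7, h8, h9, h10, h11, h12⟩ := h p hp
      first
      | (rw [bracketX hφ p hdx hdy hdt hdu hdv, h1, h2, h3, h4]; ring)
      | (rw [bracketY hφ p hdx hdy hdt hdu hdv, h5, h6, h7, h8]; ring)
      | (rw [bracketT hφ p hdx hdy hdt hdu hdv, h9, h10, h11, h12]; ring)

end
end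

section
/- Smooth functions f_u, f_v : ℝ⁵ → ℝ satisfy the system X̄(X̄f_u) = 0, Ȳ(Ȳf_u) = 0, T̄f_u = 0, T̄(Ȳf_u) = 0, Ȳ(Ȳf_v) = 0, T̄(T̄f_v) = 0, X̄f_v = 0, X̄(Ȳf_v) = 0 together with the compatibility condition X̄f_u + T̄f_v = 0, if and only if there exist real constants a₀, a₂, a₄, b₀, b₁, b₂, b₃, b₄, b₅ such that f_v(x,y,t,u,v) = b₀ + b₁y + b₂t + b₃v + b₄yt + b₅·y(v−yt) and f_u(x,y,t,u,v) = a₀ − b₂x + a₂y − (a₄+b₄)u + a₄xy + b₅uy. In particular the space of solution pairs (f_u, f_v) is a 9-dimensional real vector space, so the Lie algebra of multicontact vector fields on this slice has dimension 9. -/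
set_option maxHeartbeats 2000000


/-!
Statement 4. On ℝ⁵ with coordinates (x,y,t,u,v) (indices 0,…,4) and the vector fields
`X̄ = ∂/∂x + y·∂/∂u`, `Ȳ = ∂/∂y + t·∂/∂v`, `T̄ = ∂/∂t`, smooth `f_u, f_v` solve the
multicontact system (with compatibility `X̄f_u + T̄f_v = 0`... here stated as
`X̄f_u + T̄f_v = 0`, i.e. `X̄f_u = -T̄f_v`) iff they are given by the explicit
9-parameter family of polynomials; the 9 basic solution pairs are linearly independent,
so the Lie algebra of multicontact vector fields on this slice has dimension 9.
-/

noncomputable section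

namespace MC

abbrev V5 := Fin 5 → ℝ

/-- directional (partial) derivative in the `i`-th coordinate direction -/
def pd (i : Fin 5) (f : V5 → ℝ) : V5 → ℝ := fun p => fderiv ℝ f p (Pi.single i 1)

theorem pd_smooth {f : V5 → ℝ} (hf : ContDiff ℝ (⊤ : ℕ∞) f) (i : Fin 5) : ContDiff ℝ (⊤ : ℕ∞) (pd i f) :=
  (hf.fderiv_right (by simp)).clm_apply contDiff_const

theorem pd_diff {f : V5 → ℝ} (hf : ContDiff ℝ (⊤ : ℕ∞) f) (i : Fin 5) : Differentiable ℝ (pd i f) :=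
  (pd_smooth hf i).differentiable (by simp : ((⊤ : ℕ∞) : WithTop ℕ∞) ≠ 0)

theorem pd_comm {f : V5 → ℝ} (hf : ContDiff ℝ (⊤ : ℕ∞) f) (i j : Fin 5) :
    pd i (pd j f) = pd j (pd i f) := by
  funext p
  have hdf : Differentiable ℝ (fderiv ℝ f) := (hf.fderiv_right (m := 1) (by exact WithTop.coe_le_coe.mpr le_top)).differentiable (by simp)
  have key : ∀ (k l : Fin 5),
      pd k (pd l f) p = fderiv ℝ (fderiv ℝ f) p (Pi.single k 1) (Pi.single l 1) := by
    intro k l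
    have h2 : fderiv ℝ (fun q => (fderiv ℝ f q) (Pi.single l 1 : V5)) p
        = ((fderiv ℝ f p).comp (fderiv ℝ (fun _ : V5 => (Pi.single l 1 : V5)) p))
          + (fderiv ℝ (fderiv ℝ f) p).flip (Pi.single l 1) :=
      fderiv_clm_apply (hdf p) (differentiableAt_const _)
    show fderiv ℝ (fun q => (fderiv ℝ f q) (Pi.single l 1 : V5)) p (Pi.single k 1) = _
    rw [h2]; simp
  rw [key, key]
  have hsymm : IsSymmSndFDerivAt ℝ f p := by
    apply hf.contDiffAt.isSymmSndFDerivAt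
    rw [minSmoothness_of_isRCLikeNormedField]
    exact (WithTop.coe_le_coe.mpr (le_top : (2 : ℕ∞) ≤ ⊤) :)
  exact hsymm _ _

theorem pd_zero_fun (i : Fin 5) (p : V5) : pd i (fun _ => (0:ℝ)) p = 0 := by
  simp [pd]

theorem pd_zero_fun' (i : Fin 5) : pd i (fun _ => (0:ℝ)) = fun _ => 0 :=
  funext (pd_zero_fun i)

theorem pd_of_zero {F : V5 → ℝ} (h : ∀ p, F p = 0) (i : Fin 5) (p : V5) : pd i F p = 0 := by
  have : F = fun _ => (0:ℝ) := funext h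
  rw [this]; exact pd_zero_fun i p

theorem pd_add {A B : V5 → ℝ} (hA : Differentiable ℝ A) (hB : Differentiable ℝ B)
    (i : Fin 5) (p : V5) : pd i (fun q => A q + B q) p = pd i A p + pd i B p := by
  simp only [pd]
  rw [fderiv_fun_add (hA p) (hB p)]
  rfl

theorem pd_const_mul (c : ℝ) {A : V5 → ℝ} (hA : Differentiable ℝ A) (i : Fin 5) (p : V5) :
    pd i (fun q => c * A q) p = c * pd i A p := by
  simp only [pd]
  rw [fderiv_const_mul (hA p) c]
  rfl

theorem diff_coord (k : Fin 5) : Differentiable ℝ (fun q : V5 => q k) :=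
  fun p => (hasFDerivAt_apply k p).differentiableAt

theorem pd_coord_mul {B : V5 → ℝ} (hB : Differentiable ℝ B) (k i : Fin 5) (p : V5) :
    pd i (fun q => q k * B q) p
      = (Pi.single i 1 : V5) k * B p + p k * pd i B p := by
  have h' : HasFDerivAt (fun q : V5 => q k * B q)
      (p k • fderiv ℝ B p + B p • (ContinuousLinearMap.proj k : V5 →L[ℝ] ℝ)) p :=
    (hasFDerivAt_apply k p).mul (hB p).hasFDerivAt
  simp only [pd]
  rw [h'.fderiv]
  simp only [ContinuousLinearMap.add_apply, ContinuousLinearMap.smul_apply,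
    ContinuousLinearMap.proj_apply, smul_eq_mul]
  ring

theorem pd_S1 {A B : V5 → ℝ} (hA : Differentiable ℝ A) (hB : Differentiable ℝ B)
    (k i : Fin 5) (p : V5) :
    pd i (fun q => A q + q k * B q) p
      = pd i A p + ((Pi.single i 1 : V5) k * B p + p k * pd i B p) := by
  rw [pd_add hA ((diff_coord k).fun_mul hB), pd_coord_mul hB]

theorem const_of_pd {F : V5 → ℝ} (hF : Differentiable ℝ F)
    (h : ∀ i p, pd i F p = 0) (p q : V5) : F p = F q := by
  apply is_const_of_fderiv_eq_zero hF
  intro x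
  ext w
  have hw : w = ∑ i, w i • (Pi.single i (1:ℝ) : V5) := by
    have := Finset.univ_sum_single w
    rw [← this]
    congr 1
    funext i
    rw [← Pi.single_smul]
    norm_num
  rw [hw]
  simp only [map_sum, map_smul]
  have : ∀ i : Fin 5, fderiv ℝ F x (Pi.single i (1:ℝ) : V5) = 0 := fun i => h i x
  simp [this]

theorem line_hasDeriv {f : V5 → ℝ} (hf : Differentiable ℝ f) (p w : V5) (s : ℝ) :
    HasDerivAt (fun s : ℝ => f (p + s • w)) (fderiv ℝ f (p + s • w) w) s := by
  have hline : HasDerivAt (fun s : ℝ => p + s • w) w s := by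
    simpa using ((hasDerivAt_id s).smul_const w).const_add p
  exact (hf (p + s • w)).hasFDerivAt.comp_hasDerivAt s hline

theorem line1 {f : V5 → ℝ} (hf : Differentiable ℝ f) (p : V5) (i : Fin 5)
    (hz : ∀ s : ℝ, pd i f (p + s • (Pi.single i 1 : V5)) = 0) (t : ℝ) :
    f (p + t • (Pi.single i 1 : V5)) = f p := by
  set w : V5 := Pi.single i 1 with hwdef
  have hD : ∀ s : ℝ, HasDerivAt (fun s : ℝ => f (p + s • w)) 0 s := by
    intro s
    have := line_hasDeriv hf p w s
    rwa [show fderiv ℝ f (p + s • w) w = 0 from hz s] at this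
  have hconst : ∀ s : ℝ, f (p + s • w) = f (p + (0:ℝ) • w) := by
    intro s
    apply is_const_of_deriv_eq_zero (fun x => (hD x).differentiableAt)
    intro x; exact (hD x).deriv
  have := hconst t
  simpa using this

theorem line2 {f : V5 → ℝ} (hf : ContDiff ℝ (⊤ : ℕ∞) f) (p : V5) (i : Fin 5)
    (hz : ∀ s : ℝ, pd i (pd i f) (p + s • (Pi.single i 1 : V5)) = 0) (t : ℝ) :
    f (p + t • (Pi.single i 1 : V5)) = f p + t * pd i f p := by
  set w : V5 := Pi.single i 1 with hwdef
  have hg : ∀ s : ℝ, pd i f (p + s • w) = pd i f p := fun s => line1 (pd_diff hf i) p i hz s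
  have hD : ∀ s : ℝ, HasDerivAt (fun s : ℝ => f (p + s • w) - s * pd i f p) 0 s := by
    intro s
    have h1 := line_hasDeriv (hf.differentiable (by simp : ((⊤ : ℕ∞) : WithTop ℕ∞) ≠ 0)) p w s
    have h2 : HasDerivAt (fun s : ℝ => s * pd i f p) (pd i f p) s := by
      simpa using (hasDerivAt_id s).mul_const (pd i f p)
    have h3 := h1.sub h2
    have heq : fderiv ℝ f (p + s • w) w - pd i f p = 0 := by
      have h5 : fderiv ℝ f (p + s • w) w = pd i f (p + s • w) := rfl
      rw [h5, hg s]; ring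
    rwa [heq] at h3
  have hconst : ∀ s : ℝ, f (p + s • w) - s * pd i f p
      = f (p + (0:ℝ) • w) - 0 * pd i f p := by
    intro s
    apply is_const_of_deriv_eq_zero (fun x => (hD x).differentiableAt)
    intro x; exact (hD x).deriv
  have := hconst t
  simp only [zero_smul, add_zero, zero_mul, sub_zero] at this
  linarith

theorem line3 {f : V5 → ℝ} (hf : ContDiff ℝ (⊤ : ℕ∞) f) (p : V5) (i : Fin 5)
    (hz : ∀ s : ℝ, pd i (pd i (pd i f)) (p + s • (Pi.single i 1 : V5)) = 0) (t : ℝ) :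
    f (p + t • (Pi.single i 1 : V5))
      = f p + t * pd i f p + t * t * (pd i (pd i f) p / 2) := by
  set w : V5 := Pi.single i 1 with hwdef
  have hg : ∀ s : ℝ, pd i f (p + s • w) = pd i f p + s * pd i (pd i f) p :=
    fun s => line2 (pd_smooth hf i) p i hz s
  have hD : ∀ s : ℝ, HasDerivAt
      (fun s : ℝ => f (p + s • w) - s * pd i f p - s * s * (pd i (pd i f) p / 2)) 0 s := by
    intro s
    have h1 := line_hasDeriv (hf.differentiable (by simp : ((⊤ : ℕ∞) : WithTop ℕ∞) ≠ 0)) p w s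
    have h2 : HasDerivAt (fun s : ℝ => s * pd i f p) (pd i f p) s := by
      simpa using (hasDerivAt_id s).mul_const (pd i f p)
    have h3' : HasDerivAt (fun s : ℝ => s * s) (s + s) s := by
      simpa using (hasDerivAt_id' s).fun_mul (hasDerivAt_id' s)
    have h3 : HasDerivAt (fun s : ℝ => s * s * (pd i (pd i f) p / 2))
        ((s + s) * (pd i (pd i f) p / 2)) s := h3'.mul_const _
    have h4 := (h1.sub h2).sub h3
    have heq : fderiv ℝ f (p + s • w) w - pd i f p - (s + s) * (pd i (pd i f) p / 2) = 0 := by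
      have h5 : fderiv ℝ f (p + s • w) w = pd i f (p + s • w) := rfl
      rw [h5, hg s]; ring
    rwa [heq] at h4
  have hconst : ∀ s : ℝ, f (p + s • w) - s * pd i f p - s * s * (pd i (pd i f) p / 2)
      = f (p + (0:ℝ) • w) - 0 * pd i f p - 0 * 0 * (pd i (pd i f) p / 2) := by
    intro s
    apply is_const_of_deriv_eq_zero (fun x => (hD x).differentiableAt)
    intro x; exact (hD x).deriv
  have := hconst t
  simp only [zero_smul, add_zero, zero_mul, sub_zero] at this
  linarith


/-- master polynomial family -/
def P (c c0 c1 c2 c3 c4 q01 q31 q12 q11 m : ℝ) : V5 → ℝ := fun p =>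
  c + c0*p 0 + c1*p 1 + c2*p 2 + c3*p 3 + c4*p 4 + q01*(p 0*p 1) + q31*(p 3*p 1)
    + q12*(p 1*p 2) + q11*(p 1*p 1) + m*(p 1*(p 4 - p 1*p 2))

theorem fderiv_P (c c0 c1 c2 c3 c4 q01 q31 q12 q11 m : ℝ) (p w : V5) :
    fderiv ℝ (P c c0 c1 c2 c3 c4 q01 q31 q12 q11 m) p w =
      c0*w 0 + c1*w 1 + c2*w 2 + c3*w 3 + c4*w 4 + q01*(w 0*p 1 + p 0*w 1)
      + q31*(w 3*p 1 + p 3*w 1) + q12*(w 1*p 2 + p 1*w 2) + q11*(w 1*p 1 + p 1*w 1)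
      + m*(w 1*(p 4 - p 1*p 2) + p 1*(w 4 - (w 1*p 2 + p 1*w 2))) := by
  let pr : Fin 5 → (V5 →L[ℝ] ℝ) := fun j => ContinuousLinearMap.proj j
  have h0 : ∀ j : Fin 5, HasFDerivAt (fun q : V5 => q j) (pr j) p :=
    fun j => hasFDerivAt_apply j p
  have H : HasFDerivAt (P c c0 c1 c2 c3 c4 q01 q31 q12 q11 m)
      ((0 : V5 →L[ℝ] ℝ) + c0 • pr 0 + c1 • pr 1
        + c2 • pr 2 + c3 • pr 3
        + c4 • pr 4
        + q01 • (p 0 • pr 1 + p 1 • pr 0)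
        + q31 • (p 3 • pr 1 + p 1 • pr 3)
        + q12 • (p 1 • pr 2 + p 2 • pr 1)
        + q11 • (p 1 • pr 1 + p 1 • pr 1)
        + m • (p 1 • (pr 4 -
            (p 1 • pr 2 + p 2 • pr 1))
            + (p 4 - p 1 * p 2) • pr 1)) p := by
    have h01 := ((h0 0).mul (h0 1)).const_mul q01
    have h31 := ((h0 3).mul (h0 1)).const_mul q31
    have h12 := ((h0 1).mul (h0 2)).const_mul q12
    have h11 := ((h0 1).mul (h0 1)).const_mul q11
    have hm := ((h0 1).mul ((h0 4).sub ((h0 1).mul (h0 2)))).const_mul m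
    exact ((((((((((hasFDerivAt_const c p).add ((h0 0).const_mul c0)).add
      ((h0 1).const_mul c1)).add ((h0 2).const_mul c2)).add ((h0 3).const_mul c3)).add
      ((h0 4).const_mul c4)).add h01).add h31).add h12).add h11).add hm
  rw [H.fderiv]
  simp only [pr, ContinuousLinearMap.add_apply, ContinuousLinearMap.zero_apply,
    ContinuousLinearMap.smul_apply,
    ContinuousLinearMap.sub_apply, ContinuousLinearMap.proj_apply, smul_eq_mul]
  ring

theorem Xb_P (c c0 c1 c2 c3 c4 q01 q31 q12 q11 m : ℝ) :
    Xb (P c c0 c1 c2 c3 c4 q01 q31 q12 q11 m)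
      = P c0 0 (c3 + q01) 0 0 0 0 0 0 q31 0 := by
  funext p
  show fderiv ℝ (P c c0 c1 c2 c3 c4 q01 q31 q12 q11 m) p (Pi.single 0 1)
    + p 1 * fderiv ℝ (P c c0 c1 c2 c3 c4 q01 q31 q12 q11 m) p (Pi.single 3 1) = _
  rw [fderiv_P, fderiv_P]
  simp [P, Pi.single_apply]
  try ring

theorem Yb_P (c c0 c1 c2 c3 c4 q01 q31 q12 q11 m : ℝ) :
    Yb (P c c0 c1 c2 c3 c4 q01 q31 q12 q11 m)
      = P c1 q01 (2*q11) (c4 + q12) q31 m 0 0 (-m) 0 0 := by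
  funext p
  show fderiv ℝ (P c c0 c1 c2 c3 c4 q01 q31 q12 q11 m) p (Pi.single 1 1)
    + p 2 * fderiv ℝ (P c c0 c1 c2 c3 c4 q01 q31 q12 q11 m) p (Pi.single 4 1) = _
  rw [fderiv_P, fderiv_P]
  simp [P, Pi.single_apply]
  try ring

theorem Tb_P (c c0 c1 c2 c3 c4 q01 q31 q12 q11 m : ℝ) :
    Tb (P c c0 c1 c2 c3 c4 q01 q31 q12 q11 m)
      = P c2 0 q12 0 0 0 0 0 0 (-m) 0 := by
  funext p
  show fderiv ℝ (P c c0 c1 c2 c3 c4 q01 q31 q12 q11 m) p (Pi.single 2 1) = _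
  rw [fderiv_P]
  simp [P, Pi.single_apply]
  try ring

end MC

open MC in
theorem multicontact_solutions_hessenberg_sl4 :
    (∀ fu fv : (Fin 5 → ℝ) → ℝ, ContDiff ℝ (⊤ : ℕ∞) fu → ContDiff ℝ (⊤ : ℕ∞) fv →
      (((∀ p, Xb (Xb fu) p = 0) ∧ (∀ p, Yb (Yb fu) p = 0) ∧
        (∀ p, Tb fu p = 0) ∧ (∀ p, Tb (Yb fu) p = 0) ∧
        (∀ p, Yb (Yb fv) p = 0) ∧ (∀ p, Tb (Tb fv) p = 0) ∧
        (∀ p, Xb fv p = 0) ∧ (∀ p, Xb (Yb fv) p = 0) ∧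
        (∀ p, Xb fu p + Tb fv p = 0)) ↔
      (∃ a0 a2 a4 b0 b1 b2 b3 b4 b5 : ℝ,
        (∀ p : Fin 5 → ℝ,
          fv p = b0 + b1 * p 1 + b2 * p 2 + b3 * p 4 + b4 * (p 1 * p 2) +
            b5 * (p 1 * (p 4 - p 1 * p 2))) ∧
        (∀ p : Fin 5 → ℝ,
          fu p = a0 - b2 * p 0 + a2 * p 1 - (a4 + b4) * p 3 + a4 * (p 0 * p 1) +
            b5 * (p 3 * p 1))))) ∧
    LinearIndependent ℝ
      (![((fun _ => (1 : ℝ)), (fun _ => (0 : ℝ))),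
        ((fun p => p 1), (fun _ => (0 : ℝ))),
        ((fun p => p 0 * p 1 - p 3), (fun _ => (0 : ℝ))),
        ((fun _ => (0 : ℝ)), (fun _ => (1 : ℝ))),
        ((fun _ => (0 : ℝ)), (fun p => p 1)),
        ((fun p => - p 0), (fun p => p 2)),
        ((fun _ => (0 : ℝ)), (fun p => p 4)),
        ((fun p => - p 3), (fun p => p 1 * p 2)),
        ((fun p => p 3 * p 1), (fun p => p 1 * (p 4 - p 1 * p 2)))] :
        Fin 9 → ((Fin 5 → ℝ) → ℝ) × ((Fin 5 → ℝ) → ℝ)) := by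
  constructor
  · intro fu fv hfu hfv
    constructor
    · -- forward direction
      rintro ⟨e1, e2, e3, e4, e5, e6, e7, e8, e9⟩
      have sg : ∀ i, ContDiff ℝ (⊤ : ℕ∞) (pd i fu) := pd_smooth hfu
      have sh : ∀ i, ContDiff ℝ (⊤ : ℕ∞) (pd i fv) := pd_smooth hfv
      have sg2 : ∀ i j, ContDiff ℝ (⊤ : ℕ∞) (pd i (pd j fu)) := fun i j => pd_smooth (sg j) i
      have sh2 : ∀ i j, ContDiff ℝ (⊤ : ℕ∞) (pd i (pd j fv)) := fun i j => pd_smooth (sh j) i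
      have dg : ∀ i, Differentiable ℝ (pd i fu) := fun i => pd_diff hfu i
      have dh : ∀ i, Differentiable ℝ (pd i fv) := fun i => pd_diff hfv i
      have dg2 : ∀ i j, Differentiable ℝ (pd i (pd j fu)) := fun i j => pd_diff (sg j) i
      have dh2 : ∀ i j, Differentiable ℝ (pd i (pd j fv)) := fun i j => pd_diff (sh j) i
      have hYg : Yb fu = fun q => pd 1 fu q + q 2 * pd 4 fu q := rfl
      have hXg : Xb fu = fun q => pd 0 fu q + q 1 * pd 3 fu q := rfl
      have hYh : Yb fv = fun q => pd 1 fv q + q 2 * pd 4 fv q := rfl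
      have e3f : pd 2 fu = fun _ => 0 := funext e3
      -- Step 1 : ∂v fu ≡ 0
      have gv0 : ∀ p, pd 4 fu p = 0 := by
        intro p
        have h1 : pd 2 (Yb fu) p = 0 := e4 p
        rw [hYg, pd_S1 (dg 1) (dg 4) 2 2 p] at h1
        have z1 : pd 2 (pd 1 fu) p = 0 := by
          rw [pd_comm hfu 2 1, e3f]; exact pd_zero_fun 1 p
        have z2 : pd 2 (pd 4 fu) p = 0 := by
          rw [pd_comm hfu 2 4, e3f]; exact pd_zero_fun 4 p
        rw [z1, z2] at h1
        simpa using h1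
      have gv0f : pd 4 fu = fun _ => 0 := funext gv0
      -- Step 2 : ∂y∂y fu ≡ 0
      have gyy0 : ∀ p, pd 1 (pd 1 fu) p = 0 := by
        intro p
        have h1 : pd 1 (Yb fu) p + p 2 * pd 4 (Yb fu) p = 0 := e2 p
        rw [hYg, pd_S1 (dg 1) (dg 4) 2 1 p, pd_S1 (dg 1) (dg 4) 2 4 p] at h1
        have z1 : pd 1 (pd 4 fu) p = 0 := by rw [gv0f]; exact pd_zero_fun 1 p
        have z2 : pd 4 (pd 1 fu) p = 0 := by
          rw [pd_comm hfu 4 1, gv0f]; exact pd_zero_fun 1 p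
        have z3 : pd 4 (pd 4 fu) p = 0 := by rw [gv0f]; exact pd_zero_fun 4 p
        rw [z1, z2, z3] at h1
        simpa using h1
      have gyy0f : pd 1 (pd 1 fu) = fun _ => 0 := funext gyy0
      -- Step 3 : ∂u fv ≡ 0, ∂x fv ≡ 0
      have hu0 : ∀ p, pd 3 fv p = 0 := by
        intro p
        have hXf : ∀ q, (fun q => pd 0 fv q + q 1 * pd 3 fv q) q = 0 := e7
        have I := pd_of_zero hXf 1 p
        have II := pd_of_zero hXf 4 p
        rw [pd_S1 (dh 0) (dh 3) 1 1 p] at I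
        rw [pd_S1 (dh 0) (dh 3) 1 4 p] at II
        have VIII : pd 0 (Yb fv) p + p 1 * pd 3 (Yb fv) p = 0 := e8 p
        rw [hYh, pd_S1 (dh 1) (dh 4) 2 0 p, pd_S1 (dh 1) (dh 4) 2 3 p] at VIII
        rw [pd_comm hfv 0 1, pd_comm hfv 0 4, pd_comm hfv 3 1, pd_comm hfv 3 4] at VIII
        simp [Pi.single_apply] at I II VIII
        linear_combination I - VIII + p 2 * II
      have hu0f : pd 3 fv = fun _ => 0 := funext hu0
      have hx0 : ∀ p, pd 0 fv p = 0 := by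
        intro p
        have h : pd 0 fv p + p 1 * pd 3 fv p = 0 := e7 p
        rw [hu0 p] at h
        simpa using h
      have hx0f : pd 0 fv = fun _ => 0 := funext hx0
      -- compatibility in zero-function form
      have hF9 : ∀ q, (pd 0 fu q + pd 2 fv q) + q 1 * pd 3 fu q = 0 := by
        intro q
        have h : (pd 0 fu q + q 1 * pd 3 fu q) + pd 2 fv q = 0 := e9 q
        linarith
      -- Step 4 : ∂t∂v fv ≡ 0
      have htv0 : ∀ p, pd 4 (pd 2 fv) p = 0 := by
        intro p
        have h := pd_of_zero (F := fun q => (pd 0 fu q + pd 2 fv q) + q 1 * pd 3 fu q) hF9 4 p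
        rw [pd_S1 ((dg 0).fun_add (dh 2)) (dg 3) 1 4 p, pd_add (dg 0) (dh 2) 4 p] at h
        have z1 : pd 4 (pd 0 fu) p = 0 := by
          rw [pd_comm hfu 4 0, gv0f]; exact pd_zero_fun 0 p
        have z2 : pd 4 (pd 3 fu) p = 0 := by
          rw [pd_comm hfu 4 3, gv0f]; exact pd_zero_fun 3 p
        rw [z1, z2] at h
        simpa using h
      have htv0' : ∀ p, pd 2 (pd 4 fv) p = 0 := by
        intro p; rw [pd_comm hfv 2 4]; exact htv0 p
      have htv0'f : pd 2 (pd 4 fv) = fun _ => 0 := funext htv0'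
      have he6f : pd 2 (pd 2 fv) = fun _ => 0 := funext (fun p => e6 p)
      -- Step 5 : normal form of Ȳ²fv = 0
      have hE5 : ∀ p, pd 1 (pd 1 fv) p
          + p 2 * (2 * pd 1 (pd 4 fv) p + p 2 * pd 4 (pd 4 fv) p) = 0 := by
        intro p
        have h : pd 1 (Yb fv) p + p 2 * pd 4 (Yb fv) p = 0 := e5 p
        rw [hYh, pd_S1 (dh 1) (dh 4) 2 1 p, pd_S1 (dh 1) (dh 4) 2 4 p,
          pd_comm hfv 4 1] at h
        simp [Pi.single_apply] at h
        linear_combination h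
      have dB5 : Differentiable ℝ (fun q => 2 * pd 1 (pd 4 fv) q + q 2 * pd 4 (pd 4 fv) q) :=
        ((dh2 1 4).const_mul 2).add ((diff_coord 2).mul (dh2 4 4))
      have zJa : ∀ p, pd 2 (pd 1 (pd 4 fv)) p = 0 := by
        intro p; rw [pd_comm (sh 4) 2 1, htv0'f]; exact pd_zero_fun 1 p
      have zJb : ∀ p, pd 2 (pd 4 (pd 4 fv)) p = 0 := by
        intro p; rw [pd_comm (sh 4) 2 4, htv0'f]; exact pd_zero_fun 4 p
      -- differentiate hE5 once in t
      have hJ1 : ∀ p, pd 2 (pd 1 (pd 1 fv)) p + 2 * pd 1 (pd 4 fv) p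
          + 2 * p 2 * pd 4 (pd 4 fv) p = 0 := by
        intro p
        have h := pd_of_zero (F := fun q => pd 1 (pd 1 fv) q
          + q 2 * (2 * pd 1 (pd 4 fv) q + q 2 * pd 4 (pd 4 fv) q)) hE5 2 p
        rw [pd_S1 (dh2 1 1) dB5 2 2 p,
          pd_add ((dh2 1 4).const_mul 2) ((diff_coord 2).fun_mul (dh2 4 4)) 2 p,
          pd_const_mul 2 (dh2 1 4) 2 p, pd_coord_mul (dh2 4 4) 2 2 p,
          zJa p, zJb p] at h
        simp [Pi.single_apply] at h
        linear_combination h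
      -- differentiate once more : ∂v∂v fv ≡ 0
      have hK1 : ∀ p, pd 4 (pd 4 fv) p = 0 := by
        intro p
        have hJ1' : ∀ q, (pd 2 (pd 1 (pd 1 fv)) q + 2 * pd 1 (pd 4 fv) q)
            + q 2 * (2 * pd 4 (pd 4 fv) q) = 0 := by
          intro q; have := hJ1 q; linarith
        have h := pd_of_zero (F := fun q => (pd 2 (pd 1 (pd 1 fv)) q + 2 * pd 1 (pd 4 fv) q)
            + q 2 * (2 * pd 4 (pd 4 fv) q)) hJ1' 2 p
        rw [pd_S1 ((pd_diff (pd_smooth (sh 1) 1) 2).fun_add ((dh2 1 4).const_mul 2))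
            ((dh2 4 4).const_mul 2) 2 2 p,
          pd_add (pd_diff (pd_smooth (sh 1) 1) 2) ((dh2 1 4).const_mul 2) 2 p,
          pd_const_mul 2 (dh2 1 4) 2 p, pd_const_mul 2 (dh2 4 4) 2 p] at h
        have z1 : pd 2 (pd 2 (pd 1 (pd 1 fv))) p = 0 := by
          rw [pd_comm (sh 1) 2 1, pd_comm hfv 2 1, pd_comm (sh2 1 2) 2 1,
            pd_comm (sh 2) 2 1, he6f, pd_zero_fun' 1]
          exact pd_zero_fun 1 p
        rw [z1, zJa p, zJb p] at h
        simp [Pi.single_apply] at h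
        linarith
      have hK1f : pd 4 (pd 4 fv) = fun _ => 0 := funext hK1
      have hK2 : ∀ p, pd 2 (pd 1 (pd 1 fv)) p = -2 * pd 1 (pd 4 fv) p := by
        intro p; have h1 := hJ1 p; rw [hK1 p] at h1; linarith
      have hK2f : pd 2 (pd 1 (pd 1 fv)) = fun q => -2 * pd 1 (pd 4 fv) q := funext hK2
      -- ∂v of Ȳ² equation : ∂v∂y∂y fv ≡ 0
      have hK3 : ∀ p, pd 4 (pd 1 (pd 1 fv)) p = 0 := by
        intro p
        have h := pd_of_zero (F := fun q => pd 1 (pd 1 fv) q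
          + q 2 * (2 * pd 1 (pd 4 fv) q + q 2 * pd 4 (pd 4 fv) q)) hE5 4 p
        rw [pd_S1 (dh2 1 1) dB5 2 4 p,
          pd_add ((dh2 1 4).const_mul 2) ((diff_coord 2).fun_mul (dh2 4 4)) 4 p,
          pd_const_mul 2 (dh2 1 4) 4 p, pd_coord_mul (dh2 4 4) 2 4 p] at h
        have z1 : pd 4 (pd 1 (pd 4 fv)) p = 0 := by
          rw [pd_comm (sh 4) 4 1, hK1f]; exact pd_zero_fun 1 p
        have z2 : pd 4 (pd 4 (pd 4 fv)) p = 0 := by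
          rw [hK1f]; exact pd_zero_fun 4 p
        rw [z1, z2] at h
        simp [Pi.single_apply] at h
        exact h
      -- all partials of ∂y∂v fv vanish
      have hC0 : ∀ p, pd 0 (pd 1 (pd 4 fv)) p = 0 := by
        intro p
        rw [pd_comm (sh 4) 0 1, pd_comm hfv 0 4, hx0f, pd_zero_fun' 4]
        exact pd_zero_fun 1 p
      have hC1 : ∀ p, pd 1 (pd 1 (pd 4 fv)) p = 0 := by
        intro p
        rw [pd_comm hfv 1 4, pd_comm (sh 1) 1 4]
        exact hK3 p
      have hC3 : ∀ p, pd 3 (pd 1 (pd 4 fv)) p = 0 := by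
        intro p
        rw [pd_comm (sh 4) 3 1, pd_comm hfv 3 4, hu0f, pd_zero_fun' 4]
        exact pd_zero_fun 1 p
      have hC4 : ∀ p, pd 4 (pd 1 (pd 4 fv)) p = 0 := by
        intro p
        rw [pd_comm (sh 4) 4 1, hK1f]; exact pd_zero_fun 1 p
      have hB5c : ∀ q, pd 1 (pd 4 fv) q = pd 1 (pd 4 fv) 0 := by
        intro q
        refine const_of_pd (dh2 1 4) ?_ q 0
        intro i p
        fin_cases i
        · exact hC0 p
        · exact hC1 p
        · exact zJa p
        · exact hC3 p
        · exact hC4 p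
      -- third y-derivative of ∂t fv vanishes
      have hK5 : ∀ p, pd 1 (pd 1 (pd 1 (pd 2 fv))) p = 0 := by
        intro p
        rw [pd_comm hfv 1 2, pd_comm (sh 1) 1 2, hK2f,
          pd_const_mul (-2) (dh2 1 4) 1 p, hC1 p]
        norm_num
      have hQ0 : pd 1 (pd 1 (pd 2 fv)) 0 = -2 * pd 1 (pd 4 fv) 0 := by
        rw [pd_comm hfv 1 2, pd_comm (sh 1) 1 2]
        exact hK2 0
      -- yy-derivative of fv vanishes where t = 0
      have hyy0 : ∀ s : ℝ, pd 1 (pd 1 fv) ((0 : V5) + s • (Pi.single 1 1 : V5)) = 0 := by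
        intro s
        have h := hE5 ((0 : V5) + s • (Pi.single 1 1 : V5))
        have h2 : ((0 : V5) + s • (Pi.single 1 1 : V5)) 2 = 0 := by
          simp [Pi.single_apply]
        rw [h2] at h
        simpa using h
      -- g-side third-order bookkeeping
      have hJ3 : ∀ p, (pd 1 (pd 0 fu) p + pd 1 (pd 2 fv) p + pd 3 fu p)
          + p 1 * pd 1 (pd 3 fu) p = 0 := by
        intro p
        have h := pd_of_zero (F := fun q => (pd 0 fu q + pd 2 fv q) + q 1 * pd 3 fu q) hF9 1 p
        rw [pd_S1 ((dg 0).fun_add (dh 2)) (dg 3) 1 1 p, pd_add (dg 0) (dh 2) 1 p] at h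
        simp [Pi.single_apply] at h
        linarith
      have hJ4 : ∀ p, pd 1 (pd 3 fu) p = pd 1 (pd 4 fv) p := by
        intro p
        have h := pd_of_zero (F := fun q => (pd 1 (pd 0 fu) q + pd 1 (pd 2 fv) q + pd 3 fu q)
            + q 1 * pd 1 (pd 3 fu) q) hJ3 1 p
        rw [pd_S1 (((dg2 1 0).fun_add (dh2 1 2)).fun_add (dg 3)) (dg2 1 3) 1 1 p,
          pd_add ((dg2 1 0).fun_add (dh2 1 2)) (dg 3) 1 p,
          pd_add (dg2 1 0) (dh2 1 2) 1 p] at h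
        have zA : pd 1 (pd 1 (pd 0 fu)) p = 0 := by
          rw [pd_comm hfu 1 0, pd_comm (sg 1) 1 0, gyy0f]
          exact pd_zero_fun 0 p
        have zB : pd 1 (pd 1 (pd 2 fv)) p = -2 * pd 1 (pd 4 fv) p := by
          rw [pd_comm hfv 1 2, pd_comm (sh 1) 1 2]
          exact hK2 p
        have zC : pd 1 (pd 1 (pd 3 fu)) p = 0 := by
          rw [pd_comm hfu 1 3, pd_comm (sg 1) 1 3, gyy0f]
          exact pd_zero_fun 3 p
        rw [zA, zB, zC] at h
        simp [Pi.single_apply] at h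
        linarith
      have hJ4f : pd 1 (pd 3 fu) = pd 1 (pd 4 fv) := funext hJ4
      have hGuu : ∀ p, pd 3 (pd 3 fu) p = 0 := by
        intro p
        have h := pd_of_zero (F := fun q => (pd 1 (pd 0 fu) q + pd 1 (pd 2 fv) q + pd 3 fu q)
            + q 1 * pd 1 (pd 3 fu) q) hJ3 3 p
        rw [pd_S1 (((dg2 1 0).fun_add (dh2 1 2)).fun_add (dg 3)) (dg2 1 3) 1 3 p,
          pd_add ((dg2 1 0).fun_add (dh2 1 2)) (dg 3) 3 p,
          pd_add (dg2 1 0) (dh2 1 2) 3 p] at h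
        have zA : pd 3 (pd 1 (pd 0 fu)) p = 0 := by
          rw [pd_comm hfu 1 0, pd_comm (sg 1) 3 0, pd_comm hfu 3 1, hJ4f]
          exact hC0 p
        have zB : pd 3 (pd 1 (pd 2 fv)) p = 0 := by
          rw [pd_comm hfv 1 2, pd_comm (sh 1) 3 2, pd_comm hfv 3 1, hu0f,
            pd_zero_fun' 1]
          exact pd_zero_fun 2 p
        have zC : pd 3 (pd 1 (pd 3 fu)) p = 0 := by
          rw [hJ4f]; exact hC3 p
        rw [zA, zB, zC] at h
        simp [Pi.single_apply] at h
        exact h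
      have hGuuf : pd 3 (pd 3 fu) = fun _ => 0 := funext hGuu
      have hJ2 : ∀ p, pd 3 (pd 0 fu) p + p 1 * pd 3 (pd 3 fu) p = 0 := by
        intro p
        have h := pd_of_zero (F := fun q => (pd 0 fu q + pd 2 fv q) + q 1 * pd 3 fu q) hF9 3 p
        rw [pd_S1 ((dg 0).fun_add (dh 2)) (dg 3) 1 3 p, pd_add (dg 0) (dh 2) 3 p] at h
        have z1 : pd 3 (pd 2 fv) p = 0 := by
          rw [pd_comm hfv 3 2, hu0f]; exact pd_zero_fun 2 p
        rw [z1] at h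
        simp [Pi.single_apply] at h
        linarith
      have hGxu : ∀ p, pd 3 (pd 0 fu) p = 0 := by
        intro p
        have h := hJ2 p
        rw [hGuu p] at h
        simpa using h
      have hGxuf : pd 3 (pd 0 fu) = fun _ => 0 := funext hGxu
      have h03 : ∀ p, pd 0 (pd 3 fu) p = 0 := by
        intro p; rw [pd_comm hfu 0 3]; exact hGxu p
      have hGxx : ∀ p, pd 0 (pd 0 fu) p = 0 := by
        intro p
        have h1 : pd 0 (Xb fu) p + p 1 * pd 3 (Xb fu) p = 0 := e1 p
        rw [hXg, pd_S1 (dg 0) (dg 3) 1 0 p, pd_S1 (dg 0) (dg 3) 1 3 p] at h1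
        rw [h03 p, hGxu p, hGuu p] at h1
        simp [Pi.single_apply] at h1
        exact h1
      have hGxxf : pd 0 (pd 0 fu) = fun _ => 0 := funext hGxx
      -- constants and line facts for fu
      have hgC1 : ∀ p, pd 0 (pd 0 (pd 1 fu)) p = 0 := by
        intro p
        rw [pd_comm hfu 0 1, pd_comm (sg 0) 0 1, hGxxf]
        exact pd_zero_fun 1 p
      have hgC3 : ∀ p, pd 3 (pd 3 (pd 1 fu)) p = 0 := by
        intro p
        rw [pd_comm hfu 3 1, hJ4f]
        exact hC3 p
      have hgB5 : ∀ q, pd 3 (pd 1 fu) q = pd 1 (pd 4 fv) 0 := by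
        intro q
        rw [pd_comm hfu 3 1, hJ4f]
        exact hB5c q
      have ha4 : pd 0 (pd 1 fu) 0 = pd 1 (pd 0 fu) 0 := by
        rw [pd_comm hfu 0 1]
      have hb2g : pd 0 fu 0 = -(pd 2 fv 0) := by
        have h : (pd 0 fu 0 + (0 : V5) 1 * pd 3 fu 0) + pd 2 fv 0 = 0 := e9 0
        simp at h
        linarith
      have hu3g : pd 3 fu 0 = -(pd 1 (pd 0 fu) 0 + pd 1 (pd 2 fv) 0) := by
        have h := hJ3 0
        simp at h
        linarith
      -- the nine constants
      refine ⟨fu 0, pd 1 fu 0, pd 1 (pd 0 fu) 0, fv 0, pd 1 fv 0, pd 2 fv 0,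
        pd 4 fv 0, pd 1 (pd 2 fv) 0, pd 1 (pd 4 fv) 0, ?_, ?_⟩
      · -- formula for fv
        intro p
        have A1 : fv ((0 : V5) + p 1 • (Pi.single 1 1 : V5))
            = fv 0 + p 1 * pd 1 fv 0 := line2 hfv 0 1 hyy0 (p 1)
        have A2 : pd 2 fv ((0 : V5) + p 1 • (Pi.single 1 1 : V5))
            = pd 2 fv 0 + p 1 * pd 1 (pd 2 fv) 0
              + p 1 * p 1 * (pd 1 (pd 1 (pd 2 fv)) 0 / 2) :=
          line3 (sh 2) 0 1 (fun s => hK5 _) (p 1)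
        have A3 : pd 4 fv ((0 : V5) + p 1 • (Pi.single 1 1 : V5))
            = pd 4 fv 0 + p 1 * pd 1 (pd 4 fv) 0 :=
          line2 (sh 4) 0 1 (fun s => hC1 _) (p 1)
        have A4 : fv (((0 : V5) + p 1 • (Pi.single 1 1 : V5)) + p 2 • (Pi.single 2 1 : V5))
            = fv ((0 : V5) + p 1 • (Pi.single 1 1 : V5))
              + p 2 * pd 2 fv ((0 : V5) + p 1 • (Pi.single 1 1 : V5)) :=
          line2 hfv _ 2 (fun s => e6 _) (p 2)
        have A5 : pd 4 fv (((0 : V5) + p 1 • (Pi.single 1 1 : V5)) + p 2 • (Pi.single 2 1 : V5))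
            = pd 4 fv ((0 : V5) + p 1 • (Pi.single 1 1 : V5)) :=
          line1 (dh 4) _ 2 (fun s => htv0' _) (p 2)
        have A6 : fv ((((0 : V5) + p 1 • (Pi.single 1 1 : V5)) + p 2 • (Pi.single 2 1 : V5))
              + p 4 • (Pi.single 4 1 : V5))
            = fv (((0 : V5) + p 1 • (Pi.single 1 1 : V5)) + p 2 • (Pi.single 2 1 : V5))
              + p 4 * pd 4 fv (((0 : V5) + p 1 • (Pi.single 1 1 : V5))
                + p 2 • (Pi.single 2 1 : V5)) :=
          line2 hfv _ 4 (fun s => hK1 _) (p 4)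
        have A7 : fv (((((0 : V5) + p 1 • (Pi.single 1 1 : V5)) + p 2 • (Pi.single 2 1 : V5))
              + p 4 • (Pi.single 4 1 : V5)) + p 0 • (Pi.single 0 1 : V5))
            = fv ((((0 : V5) + p 1 • (Pi.single 1 1 : V5)) + p 2 • (Pi.single 2 1 : V5))
              + p 4 • (Pi.single 4 1 : V5)) :=
          line1 (hfv.differentiable (by simp : ((⊤ : ℕ∞) : WithTop ℕ∞) ≠ 0)) _ 0 (fun s => hx0 _) (p 0)
        have A8 : fv ((((((0 : V5) + p 1 • (Pi.single 1 1 : V5)) + p 2 • (Pi.single 2 1 : V5))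
              + p 4 • (Pi.single 4 1 : V5)) + p 0 • (Pi.single 0 1 : V5))
              + p 3 • (Pi.single 3 1 : V5))
            = fv (((((0 : V5) + p 1 • (Pi.single 1 1 : V5)) + p 2 • (Pi.single 2 1 : V5))
              + p 4 • (Pi.single 4 1 : V5)) + p 0 • (Pi.single 0 1 : V5)) :=
          line1 (hfv.differentiable (by simp : ((⊤ : ℕ∞) : WithTop ℕ∞) ≠ 0)) _ 3 (fun s => hu0 _) (p 3)
        have hpt : (((((0 : V5) + p 1 • (Pi.single 1 1 : V5)) + p 2 • (Pi.single 2 1 : V5))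
              + p 4 • (Pi.single 4 1 : V5)) + p 0 • (Pi.single 0 1 : V5))
              + p 3 • (Pi.single 3 1 : V5) = p := by
          funext j
          fin_cases j <;> simp [Pi.single_apply]
        conv_lhs => rw [← hpt]
        rw [A8, A7, A6, A5, A4, A3, A2, A1, hQ0]
        ring
      · -- formula for fu
        intro p
        have B1 : fu ((0 : V5) + p 0 • (Pi.single 0 1 : V5))
            = fu 0 + p 0 * pd 0 fu 0 := line2 hfu 0 0 (fun s => hGxx _) (p 0)
        have B2 : pd 3 fu ((0 : V5) + p 0 • (Pi.single 0 1 : V5)) = pd 3 fu 0 :=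
          line1 (dg 3) 0 0 (fun s => h03 _) (p 0)
        have B3 : pd 1 fu ((0 : V5) + p 0 • (Pi.single 0 1 : V5))
            = pd 1 fu 0 + p 0 * pd 0 (pd 1 fu) 0 :=
          line2 (sg 1) 0 0 (fun s => hgC1 _) (p 0)
        have B4 : fu (((0 : V5) + p 0 • (Pi.single 0 1 : V5)) + p 3 • (Pi.single 3 1 : V5))
            = fu ((0 : V5) + p 0 • (Pi.single 0 1 : V5))
              + p 3 * pd 3 fu ((0 : V5) + p 0 • (Pi.single 0 1 : V5)) :=
          line2 hfu _ 3 (fun s => hGuu _) (p 3)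
        have B5 : pd 1 fu (((0 : V5) + p 0 • (Pi.single 0 1 : V5)) + p 3 • (Pi.single 3 1 : V5))
            = pd 1 fu ((0 : V5) + p 0 • (Pi.single 0 1 : V5))
              + p 3 * pd 3 (pd 1 fu) ((0 : V5) + p 0 • (Pi.single 0 1 : V5)) :=
          line2 (sg 1) _ 3 (fun s => hgC3 _) (p 3)
        have B6 : fu ((((0 : V5) + p 0 • (Pi.single 0 1 : V5)) + p 3 • (Pi.single 3 1 : V5))
              + p 1 • (Pi.single 1 1 : V5))
            = fu (((0 : V5) + p 0 • (Pi.single 0 1 : V5)) + p 3 • (Pi.single 3 1 : V5))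
              + p 1 * pd 1 fu (((0 : V5) + p 0 • (Pi.single 0 1 : V5))
                + p 3 • (Pi.single 3 1 : V5)) :=
          line2 hfu _ 1 (fun s => gyy0 _) (p 1)
        have B7 : fu (((((0 : V5) + p 0 • (Pi.single 0 1 : V5)) + p 3 • (Pi.single 3 1 : V5))
              + p 1 • (Pi.single 1 1 : V5)) + p 2 • (Pi.single 2 1 : V5))
            = fu ((((0 : V5) + p 0 • (Pi.single 0 1 : V5)) + p 3 • (Pi.single 3 1 : V5))
              + p 1 • (Pi.single 1 1 : V5)) :=
          line1 (hfu.differentiable (by simp : ((⊤ : ℕ∞) : WithTop ℕ∞) ≠ 0)) _ 2 (fun s => e3 _) (p 2)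
        have B8 : fu ((((((0 : V5) + p 0 • (Pi.single 0 1 : V5)) + p 3 • (Pi.single 3 1 : V5))
              + p 1 • (Pi.single 1 1 : V5)) + p 2 • (Pi.single 2 1 : V5))
              + p 4 • (Pi.single 4 1 : V5))
            = fu (((((0 : V5) + p 0 • (Pi.single 0 1 : V5)) + p 3 • (Pi.single 3 1 : V5))
              + p 1 • (Pi.single 1 1 : V5)) + p 2 • (Pi.single 2 1 : V5)) :=
          line1 (hfu.differentiable (by simp : ((⊤ : ℕ∞) : WithTop ℕ∞) ≠ 0)) _ 4 (fun s => gv0 _) (p 4)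
        have hptg : (((((0 : V5) + p 0 • (Pi.single 0 1 : V5)) + p 3 • (Pi.single 3 1 : V5))
              + p 1 • (Pi.single 1 1 : V5)) + p 2 • (Pi.single 2 1 : V5))
              + p 4 • (Pi.single 4 1 : V5) = p := by
          funext j
          fin_cases j <;> simp [Pi.single_apply]
        have hB5pt : pd 3 (pd 1 fu) ((0 : V5) + p 0 • (Pi.single 0 1 : V5))
            = pd 1 (pd 4 fv) 0 := hgB5 _
        conv_lhs => rw [← hptg]
        rw [B8, B7, B6, B5, B4, B3, B2, B1, hB5pt, hb2g, hu3g, ha4]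
        ring
    · rintro ⟨a0, a2, a4, b0, b1, b2, b3, b4, b5, hv, hu⟩
      have hfveq : fv = MC.P b0 0 b1 b2 0 b3 0 0 b4 0 b5 := by
        funext p; rw [hv p]; unfold MC.P; ring
      have hfueq : fu = MC.P a0 (-b2) a2 0 (-(a4+b4)) 0 a4 b5 0 0 0 := by
        funext p; rw [hu p]; unfold MC.P; ring
      refine ⟨?_, ?_, ?_, ?_, ?_, ?_, ?_, ?_, ?_⟩ <;> intro p
      · rw [hfueq, MC.Xb_P, MC.Xb_P]; unfold MC.P; ring
      · rw [hfueq, MC.Yb_P, MC.Yb_P]; unfold MC.P; ring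
      · rw [hfueq, MC.Tb_P]; unfold MC.P; ring
      · rw [hfueq, MC.Yb_P, MC.Tb_P]; unfold MC.P; ring
      · rw [hfveq, MC.Yb_P, MC.Yb_P]; unfold MC.P; ring
      · rw [hfveq, MC.Tb_P, MC.Tb_P]; unfold MC.P; ring
      · rw [hfveq, MC.Xb_P]; unfold MC.P; ring
      · rw [hfveq, MC.Yb_P, MC.Xb_P]; unfold MC.P; ring
      · rw [hfueq, hfveq, MC.Xb_P, MC.Tb_P]; unfold MC.P; ring
  · rw [Fintype.linearIndependent_iff]
    intro c hc
    have hF : ∀ p : Fin 5 → ℝ, ∑ i : Fin 9,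
        c i * ((![((fun _ => (1 : ℝ)), (fun _ => (0 : ℝ))),
        ((fun p => p 1), (fun _ => (0 : ℝ))),
        ((fun p => p 0 * p 1 - p 3), (fun _ => (0 : ℝ))),
        ((fun _ => (0 : ℝ)), (fun _ => (1 : ℝ))),
        ((fun _ => (0 : ℝ)), (fun p => p 1)),
        ((fun p => - p 0), (fun p => p 2)),
        ((fun _ => (0 : ℝ)), (fun p => p 4)),
        ((fun p => - p 3), (fun p => p 1 * p 2)),
        ((fun p => p 3 * p 1), (fun p => p 1 * (p 4 - p 1 * p 2)))] :
        Fin 9 → ((Fin 5 → ℝ) → ℝ) × ((Fin 5 → ℝ) → ℝ)) i).1 p = 0 := by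
      intro p
      have := congrFun (congrArg Prod.fst hc) p
      simpa [Prod.fst_sum, Finset.sum_apply, Prod.smul_fst, smul_eq_mul] using this
    have hG : ∀ p : Fin 5 → ℝ, ∑ i : Fin 9,
        c i * ((![((fun _ => (1 : ℝ)), (fun _ => (0 : ℝ))),
        ((fun p => p 1), (fun _ => (0 : ℝ))),
        ((fun p => p 0 * p 1 - p 3), (fun _ => (0 : ℝ))),
        ((fun _ => (0 : ℝ)), (fun _ => (1 : ℝ))),
        ((fun _ => (0 : ℝ)), (fun p => p 1)),
        ((fun p => - p 0), (fun p => p 2)),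
        ((fun _ => (0 : ℝ)), (fun p => p 4)),
        ((fun p => - p 3), (fun p => p 1 * p 2)),
        ((fun p => p 3 * p 1), (fun p => p 1 * (p 4 - p 1 * p 2)))] :
        Fin 9 → ((Fin 5 → ℝ) → ℝ) × ((Fin 5 → ℝ) → ℝ)) i).2 p = 0 := by
      intro p
      have := congrFun (congrArg Prod.snd hc) p
      simpa [Prod.snd_sum, Finset.sum_apply, Prod.smul_snd, smul_eq_mul] using this
    have g0 := hG ![0,0,0,0,0]
    have gy := hG ![0,1,0,0,0]
    have gt := hG ![0,0,1,0,0]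
    have gv := hG ![0,0,0,0,1]
    have gyt := hG ![0,1,1,0,0]
    have gyv := hG ![0,1,0,0,1]
    have f0 := hF ![0,0,0,0,0]
    have fy := hF ![0,1,0,0,0]
    have fz := hF ![0,0,0,1,0]
    simp [Fin.sum_univ_succ] at g0 gy gt gv gyt gyv f0 fy fz
    have g0' : c 3 = 0 := g0
    have gy' : c 3 + c 4 = 0 := gy
    have gt' : c 3 + c 5 = 0 := gt
    have gv' : c 3 + c 6 = 0 := gv
    have gyt' : c 3 + (c 4 + (c 5 + (c 7 + -c 8))) = 0 := gyt
    have gyv' : c 3 + (c 4 + (c 6 + c 8)) = 0 := gyv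
    have fz' : c 0 + (-c 2 + -c 7) = 0 := fz
    intro i
    fin_cases i <;> simp <;> linarith

end
end

section
/- A smooth function f : ℝ³ → ℝ satisfies Ū(Ūf) = 0 and X̄(X̄f) = 0 everywhere if and only if there exist real constants c₀,…,c₇ such that f(u,x,y) = c₀ + c₁u + c₂x + c₃y + c₄ux + c₅uy + c₆·x(y−ux) + c₇·y(y−ux). In particular, the space of smooth solutions is an 8-dimensional real vector space, spanned by 1, u, x, y, ux, uy, x(y−ux), y(y−ux); hence the Lie algebra of multicontact vector fields on this slice has dimension 8 (it is isomorphic to sl(3,ℝ)). -/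
/-!
Statement 5. On ℝ³ with coordinates (u,x,y) and vector fields `Ū = ∂/∂u`,
`X̄ = ∂/∂x + u·∂/∂y` (the projections to the slice {z=0} of left-invariant fields on the
nilpotent Iwasawa group of Sp(2,ℝ)), a smooth `f` satisfies `Ū²f = X̄²f = 0` iff it is a
linear combination of `1, u, x, y, ux, uy, x(y−ux), y(y−ux)`; these 8 functions are
linearly independent, so the solution space (the Lie algebra of multicontact vector
fields on this slice, isomorphic to sl(3,ℝ)) has dimension 8.
-/

noncomputable section

/-- `Ū = ∂/∂u` acting on functions of `(u,x,y)`. -/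
def Ubar (f : ℝ × ℝ × ℝ → ℝ) : ℝ × ℝ × ℝ → ℝ :=
  fun p => fderiv ℝ f p (1, 0, 0)

/-- `X̄ = ∂/∂x + u·∂/∂y` acting on functions of `(u,x,y)`. -/
def Xbar (f : ℝ × ℝ × ℝ → ℝ) : ℝ × ℝ × ℝ → ℝ :=
  fun p => fderiv ℝ f p (0, 1, 0) + p.1 * fderiv ℝ f p (0, 0, 1)

open scoped ContDiff



theorem affine_of_dd (g : ℝ → ℝ) (hg : Differentiable ℝ g) (hg' : Differentiable ℝ (deriv g))
    (h : ∀ t, deriv (deriv g) t = 0) : ∀ t, g t = g 0 + t * (g 1 - g 0) := by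
  have hm : ∀ t, deriv g t = deriv g 0 := fun t => is_const_of_deriv_eq_zero hg' h t 0
  set m := deriv g 0 with hmdef
  have h2 : ∀ t, g t - m * t = g 0 - m * 0 :=
    fun t => is_const_of_deriv_eq_zero
      (hg.sub (differentiable_id.const_mul m))
      (fun t => by
        rw [deriv_sub (hg t) ((differentiable_id.const_mul m) t), hm t,
          (((hasDerivAt_id t).const_mul m).deriv : deriv (fun y => m * y) t = m * 1)]
        ring) t 0
  intro t
  have ht := h2 t
  have h1 := h2 1
  have hm1 : g 1 - g 0 = m := by linarith
  rw [hm1]; linarith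

-- slice derivative lemmas
theorem sliceU (f : ℝ × ℝ × ℝ → ℝ) (u x y : ℝ) (hf : DifferentiableAt ℝ f (u, x, y)) :
    HasDerivAt (fun t => f (t, x, y)) (fderiv ℝ f (u, x, y) (1, 0, 0)) u := by
  have hc : HasDerivAt (fun t : ℝ => ((t, x, y) : ℝ × ℝ × ℝ)) (1, 0, 0) u :=
    HasDerivAt.prodMk (hasDerivAt_id u) (HasDerivAt.prodMk (hasDerivAt_const u x) (hasDerivAt_const u y))
  exact hf.hasFDerivAt.comp_hasDerivAt u hc

theorem sliceX (f : ℝ × ℝ × ℝ → ℝ) (u x y : ℝ) (hf : DifferentiableAt ℝ f (u, x, y)) :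
    HasDerivAt (fun t => f (u, t, y)) (fderiv ℝ f (u, x, y) (0, 1, 0)) x := by
  have hc : HasDerivAt (fun t : ℝ => ((u, t, y) : ℝ × ℝ × ℝ)) (0, 1, 0) x :=
    HasDerivAt.prodMk (hasDerivAt_const x u) (HasDerivAt.prodMk (hasDerivAt_id x) (hasDerivAt_const x y))
  exact hf.hasFDerivAt.comp_hasDerivAt x hc

theorem sliceY (f : ℝ × ℝ × ℝ → ℝ) (u x y : ℝ) (hf : DifferentiableAt ℝ f (u, x, y)) :
    HasDerivAt (fun t => f (u, x, t)) (fderiv ℝ f (u, x, y) (0, 0, 1)) y := by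
  have hc : HasDerivAt (fun t : ℝ => ((u, x, t) : ℝ × ℝ × ℝ)) (0, 0, 1) y :=
    HasDerivAt.prodMk (hasDerivAt_const y u) (HasDerivAt.prodMk (hasDerivAt_const y x) (hasDerivAt_id y))
  exact hf.hasFDerivAt.comp_hasDerivAt y hc

-- slanted slice
theorem sliceXY (f : ℝ × ℝ × ℝ → ℝ) (u w m : ℝ) (t : ℝ)
    (hf : DifferentiableAt ℝ f (u, t, w + m * t)) :
    HasDerivAt (fun t => f (u, t, w + m * t)) (fderiv ℝ f (u, t, w + m * t) (0, 1, m)) t := by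
  have hc : HasDerivAt (fun t : ℝ => ((u, t, w + m * t) : ℝ × ℝ × ℝ)) (0, 1, m) t :=
    HasDerivAt.prodMk (hasDerivAt_const t u) (HasDerivAt.prodMk (hasDerivAt_id t)
      (by simpa using ((hasDerivAt_id t).const_mul m).const_add w))
  exact hf.hasFDerivAt.comp_hasDerivAt t hc

-- Xbar as single directional derivative
theorem Xbar_eq_dir (f : ℝ × ℝ × ℝ → ℝ) (p : ℝ × ℝ × ℝ) :
    Xbar f p = fderiv ℝ f p (0, 1, p.1) := by
  have : ((0 : ℝ), (1 : ℝ), p.1) = ((0 : ℝ), (1 : ℝ), (0 : ℝ)) + p.1 • ((0 : ℝ), (0 : ℝ), (1 : ℝ)) := by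
    simp [Prod.ext_iff]
  rw [Xbar, this, map_add, map_smul]
  simp

theorem poly1_of_deriv (g : ℝ → ℝ) (hg : Differentiable ℝ g) (k : ℝ)
    (h : ∀ t, deriv g t = k) : ∀ t, g t = g 0 + k * t := by
  have h2 : ∀ t, g t - k * t = g 0 - k * 0 :=
    fun t => is_const_of_deriv_eq_zero
      (hg.sub (differentiable_id.const_mul k))
      (fun t => by
        rw [deriv_sub (hg t) ((differentiable_id.const_mul k) t), h t,
          (((hasDerivAt_id t).const_mul k).deriv : deriv (fun y => k * y) t = k * 1)]
        ring) t 0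
  intro t; have := h2 t; linarith

theorem poly2_of_deriv (g : ℝ → ℝ) (hg : Differentiable ℝ g) (a k : ℝ)
    (h : ∀ t, deriv g t = a + k * t) : ∀ t, g t = g 0 + a * t + k/2 * t^2 := by
  have hd : ∀ t : ℝ, HasDerivAt (fun t : ℝ => a * t + k/2 * t^2) (a * 1 + k/2 * (2 * t^1)) t :=
    fun t => ((hasDerivAt_id t).const_mul a).add ((hasDerivAt_pow 2 t).const_mul (k/2))
  have h2 : ∀ t, g t - (a * t + k/2 * t^2) = g 0 - (a * 0 + k/2 * 0^2) :=
    fun t => is_const_of_deriv_eq_zero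
      (hg.sub (fun t => (hd t).differentiableAt))
      (fun t => by
        rw [deriv_sub (hg t) (hd t).differentiableAt, h t, (hd t).deriv]
        ring) t 0
  intro t; have := h2 t; nlinarith [h2 t]

theorem hasDerivAt_comp_affine (φ : ℝ → ℝ) (hφ : Differentiable ℝ φ) (a b u : ℝ) :
    HasDerivAt (fun u => φ (a + b * u)) (deriv φ (a + b * u) * b) u :=
  (hφ _).hasDerivAt.comp u (by simpa using ((hasDerivAt_id u).const_mul b).const_add a)

section M
variable (P Q R S : ℝ → ℝ)

theorem E_hasDeriv (hP : Differentiable ℝ P) (hQ : Differentiable ℝ Q)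
    (hR : Differentiable ℝ R) (hS : Differentiable ℝ S) (x y u : ℝ) :
    HasDerivAt (fun u => (1-x) * (P (y + -x*u) + u * Q (y + -x*u))
        + x * (R (y + (1-x)*u) + u * S (y + (1-x)*u)))
      ((1-x) * (deriv P (y + -x*u) * -x + (1 * Q (y + -x*u) + u * (deriv Q (y + -x*u) * -x)))
        + x * (deriv R (y + (1-x)*u) * (1-x)
          + (1 * S (y + (1-x)*u) + u * (deriv S (y + (1-x)*u) * (1-x))))) u :=
  (((hasDerivAt_comp_affine P hP y (-x) u).add
      ((hasDerivAt_id u).mul (hasDerivAt_comp_affine Q hQ y (-x) u))).const_mul (1-x)).add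
    (((hasDerivAt_comp_affine R hR y (1-x) u).add
      ((hasDerivAt_id u).mul (hasDerivAt_comp_affine S hS y (1-x) u))).const_mul x)

theorem D_hasDeriv (hP' : Differentiable ℝ (deriv P)) (hQ : Differentiable ℝ Q)
    (hQ' : Differentiable ℝ (deriv Q)) (hR' : Differentiable ℝ (deriv R))
    (hS : Differentiable ℝ S) (hS' : Differentiable ℝ (deriv S)) (x y u : ℝ) :
    HasDerivAt (fun u => (1-x) * (deriv P (y + -x*u) * -x
        + (1 * Q (y + -x*u) + u * (deriv Q (y + -x*u) * -x)))
        + x * (deriv R (y + (1-x)*u) * (1-x)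
          + (1 * S (y + (1-x)*u) + u * (deriv S (y + (1-x)*u) * (1-x)))))
      ((1-x) * ((deriv (deriv P) (y + -x*u) * -x) * -x
          + (1 * (deriv Q (y + -x*u) * -x)
            + (1 * (deriv Q (y + -x*u) * -x) + u * ((deriv (deriv Q) (y + -x*u) * -x) * -x))))
        + x * ((deriv (deriv R) (y + (1-x)*u) * (1-x)) * (1-x)
          + (1 * (deriv S (y + (1-x)*u) * (1-x))
            + (1 * (deriv S (y + (1-x)*u) * (1-x))
              + u * ((deriv (deriv S) (y + (1-x)*u) * (1-x)) * (1-x)))))) u :=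
  ((((hasDerivAt_comp_affine (deriv P) hP' y (-x) u).mul_const (-x)).add
      (((hasDerivAt_comp_affine Q hQ y (-x) u).const_mul 1).add
        ((hasDerivAt_id u).mul ((hasDerivAt_comp_affine (deriv Q) hQ' y (-x) u).mul_const (-x))))).const_mul (1-x)).add
    ((((hasDerivAt_comp_affine (deriv R) hR' y (1-x) u).mul_const (1-x)).add
      (((hasDerivAt_comp_affine S hS y (1-x) u).const_mul 1).add
        ((hasDerivAt_id u).mul ((hasDerivAt_comp_affine (deriv S) hS' y (1-x) u).mul_const (1-x))))).const_mul x)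

theorem master (hP : ContDiff ℝ ∞ P) (hQ : ContDiff ℝ ∞ Q) (hR : ContDiff ℝ ∞ R)
    (hS : ContDiff ℝ ∞ S)
    (hE : ∀ x y u, deriv (deriv (fun u => (1-x) * (P (y + -x*u) + u * Q (y + -x*u))
        + x * (R (y + (1-x)*u) + u * S (y + (1-x)*u)))) u = 0) :
    ∀ x s σ : ℝ,
      (1-x)*x^2 * deriv (deriv P) s - 2*x*(1-x) * deriv Q s + (σ-s)*(1-x)*x^2 * deriv (deriv Q) s
        + x*(1-x)^2 * deriv (deriv R) σ + 2*x*(1-x) * deriv S σ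
        + (σ-s)*x*(1-x)^2 * deriv (deriv S) σ = 0 := by
  have hPd := (contDiff_infty_iff_deriv.mp hP).1
  have hPd' := (contDiff_infty_iff_deriv.mp (contDiff_infty_iff_deriv.mp hP).2).1
  have hQd := (contDiff_infty_iff_deriv.mp hQ).1
  have hQd' := (contDiff_infty_iff_deriv.mp (contDiff_infty_iff_deriv.mp hQ).2).1
  have hRd := (contDiff_infty_iff_deriv.mp hR).1
  have hRd' := (contDiff_infty_iff_deriv.mp (contDiff_infty_iff_deriv.mp hR).2).1
  have hSd := (contDiff_infty_iff_deriv.mp hS).1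
  have hSd' := (contDiff_infty_iff_deriv.mp (contDiff_infty_iff_deriv.mp hS).2).1
  have key : ∀ x y u : ℝ,
      (1-x) * ((deriv (deriv P) (y + -x*u) * -x) * -x
          + (1 * (deriv Q (y + -x*u) * -x)
            + (1 * (deriv Q (y + -x*u) * -x) + u * ((deriv (deriv Q) (y + -x*u) * -x) * -x))))
        + x * ((deriv (deriv R) (y + (1-x)*u) * (1-x)) * (1-x)
          + (1 * (deriv S (y + (1-x)*u) * (1-x))
            + (1 * (deriv S (y + (1-x)*u) * (1-x))
              + u * ((deriv (deriv S) (y + (1-x)*u) * (1-x)) * (1-x))))) = 0 := by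
    intro x y u
    have hD : deriv (fun u => (1-x) * (P (y + -x*u) + u * Q (y + -x*u))
        + x * (R (y + (1-x)*u) + u * S (y + (1-x)*u)))
        = fun u => (1-x) * (deriv P (y + -x*u) * -x
            + (1 * Q (y + -x*u) + u * (deriv Q (y + -x*u) * -x)))
          + x * (deriv R (y + (1-x)*u) * (1-x)
            + (1 * S (y + (1-x)*u) + u * (deriv S (y + (1-x)*u) * (1-x)))) :=
      funext fun u => (E_hasDeriv P Q R S hPd hQd hRd hSd x y u).deriv
    have h0 := hE x y u
    rw [hD] at h0
    rw [(D_hasDeriv P Q R S hPd' hQd hQd' hRd' hSd hSd' x y u).deriv] at h0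
    exact h0
  intro x s σ
  have h := key x (s + x*(σ-s)) (σ-s)
  rw [show s + x*(σ-s) + -x*(σ-s) = s from by ring,
      show s + x*(σ-s) + (1-x)*(σ-s) = σ from by ring] at h
  linear_combination h
end M

theorem extract (P Q R S : ℝ → ℝ)
    (hM : ∀ x s σ : ℝ,
      (1-x)*x^2 * deriv (deriv P) s - 2*x*(1-x) * deriv Q s + (σ-s)*(1-x)*x^2 * deriv (deriv Q) s
        + x*(1-x)^2 * deriv (deriv R) σ + 2*x*(1-x) * deriv S σ
        + (σ-s)*x*(1-x)^2 * deriv (deriv S) σ = 0) :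
    (∀ s, deriv Q s = deriv Q 0) ∧ (∀ σ, deriv S σ = deriv Q 0 - deriv (deriv R) 0 / 2) ∧
    (∀ s, deriv (deriv P) s = deriv (deriv R) 0) ∧ (∀ σ, deriv (deriv R) σ = deriv (deriv R) 0) := by
  set p2 := deriv (deriv P) with hp2def
  set q1 := deriv Q with hq1def
  set q2 := deriv (deriv Q) with hq2def
  set r2 := deriv (deriv R) with hr2def
  set s1 := deriv S with hs1def
  set s2 := deriv (deriv S) with hs2def
  have hα : ∀ s σ : ℝ, 2*q1 s = r2 σ + 2*s1 σ + (σ-s)*s2 σ := by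
    intro s σ
    have h1 := hM 2 s σ
    have h2 := hM (-1) s σ
    have h3 := hM (1/2) s σ
    nlinarith [h1, h2, h3]
  have hβ : ∀ s σ : ℝ, p2 s + (σ-s)*q2 s = r2 σ + (σ-s)*s2 σ := by
    intro s σ
    have h1 := hM 2 s σ
    have h2 := hM (-1) s σ
    nlinarith [h1, h2]
  have hs2c : ∀ σ : ℝ, s2 σ = 2*(q1 0 - q1 1) := by
    intro σ
    have h1 := hα 0 σ
    have h2 := hα 1 σ
    nlinarith [h1, h2]
  set c := 2*(q1 0 - q1 1) with hcdef
  have hα' : ∀ s σ : ℝ, 2*q1 s = r2 σ + 2*s1 σ + (σ-s)*c := by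
    intro s σ; rw [← hs2c σ]; exact hα s σ
  have hq1' : ∀ s, q1 s = q1 0 - c/2*s := by
    intro s
    have h1 := hα' s 0
    have h2 := hα' 0 0
    nlinarith [h1, h2]
  have hq2 : ∀ t : ℝ, q2 t = -(c/2) := by
    intro t
    have hfe : q1 = fun s => q1 0 - c/2*s := funext hq1'
    rw [hq2def, ← hq1def, hfe]
    simpa using ((((hasDerivAt_id t).const_mul (c/2)).const_sub (q1 0)).deriv)
  have hβ' : ∀ s σ : ℝ, p2 s + (σ-s)*(-(c/2)) = r2 σ + (σ-s)*c := by
    intro s σ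
    have h := hβ s σ
    rw [hq2 s, hs2c σ] at h
    exact h
  have hr2 : ∀ σ : ℝ, r2 σ = r2 0 - 3*(c/2)*σ := by
    intro σ
    have h1 := hβ' 0 σ
    have h2 := hβ' 0 0
    nlinarith [h1, h2]
  have hp2 : ∀ s : ℝ, p2 s = r2 0 - 3*(c/2)*s := by
    intro s
    have h1 := hβ' s 0
    have h2 := hβ' 0 0
    nlinarith [h1, h2]
  have hs1 : ∀ σ : ℝ, s1 σ = q1 0 - r2 0/2 + (c/4)*σ := by
    intro σ
    have h1 := hα' 0 σ
    have h2 := hr2 σ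
    nlinarith [h1, h2]
  have hs2' : ∀ t : ℝ, s2 t = c/4 := by
    intro t
    have hfe : s1 = fun σ => q1 0 - r2 0/2 + (c/4)*σ := funext hs1
    rw [hs2def, ← hs1def, hfe]
    simpa using ((((hasDerivAt_id t).const_mul (c/4)).const_add (q1 0 - r2 0/2)).deriv)
  have hc0 : c = 0 := by
    have h1 := hs2c 0
    have h2 := hs2' 0
    linarith
  refine ⟨fun s => by have := hq1' s; rw [hc0] at this; linarith,
    fun σ => by have := hs1 σ; rw [hc0] at this; linarith,
    fun s => by have := hp2 s; rw [hc0] at this; linarith,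
    fun σ => by have := hr2 σ; rw [hc0] at this; linarith⟩

section Forward
variable (f : ℝ × ℝ × ℝ → ℝ) (hf : ContDiff ℝ (⊤ : ℕ∞) f)
include hf

theorem smooth_dir (v : ℝ × ℝ × ℝ) : ContDiff ℝ ∞ (fun p => fderiv ℝ f p v) :=
  (hf.fderiv_right (by simp)).clm_apply contDiff_const

theorem smooth_Ubar : ContDiff ℝ ∞ (Ubar f) := smooth_dir f hf _

theorem smooth_Xbar : ContDiff ℝ ∞ (Xbar f) :=
  (smooth_dir f hf _).add (contDiff_fst.mul (smooth_dir f hf _))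

-- second derivative of u-slices vanishes
theorem u_slice_dd (hU : ∀ p, Ubar (Ubar f) p = 0) (x y : ℝ) :
    ∀ t, deriv (deriv (fun u => f (u, x, y))) t = 0 := by
  intro t
  have hdf : Differentiable ℝ f := hf.differentiable (by simp)
  have h1 : deriv (fun u => f (u, x, y)) = fun u => Ubar f (u, x, y) :=
    funext fun u => (sliceU f u x y (hdf _)).deriv
  rw [h1]
  have h2 := (sliceU (Ubar f) t x y (((smooth_Ubar f hf).differentiable (by norm_num)) _)).deriv
  rw [h2]
  exact hU _

theorem u_affine (hU : ∀ p, Ubar (Ubar f) p = 0) (x y : ℝ) :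
    ∀ u, f (u, x, y) = f (0, x, y) + u * (f (1, x, y) - f (0, x, y)) := by
  have hdf : Differentiable ℝ f := hf.differentiable (by simp)
  have h1 : deriv (fun u => f (u, x, y)) = fun u => Ubar f (u, x, y) :=
    funext fun u => (sliceU f u x y (hdf _)).deriv
  apply affine_of_dd
  · exact fun u => (sliceU f u x y (hdf _)).differentiableAt
  · rw [h1]
    exact fun u => (sliceU (Ubar f) u x y
      (((smooth_Ubar f hf).differentiable (by norm_num)) _)).differentiableAt
  · exact u_slice_dd f hf hU x y

-- affine along slanted lines
theorem x_affine (hX : ∀ p, Xbar (Xbar f) p = 0) (u w : ℝ) :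
    ∀ t, f (u, t, w + u * t) = f (u, 0, w + u * 0) +
      t * (f (u, 1, w + u * 1) - f (u, 0, w + u * 0)) := by
  have hdf : Differentiable ℝ f := hf.differentiable (by simp)
  set g : ℝ → ℝ := fun t => f (u, t, w + u * t) with hgdef
  have h1 : deriv g = fun t => Xbar f (u, t, w + u * t) := funext fun t => by
    have := sliceXY f u w u t (hdf _)
    rw [hgdef, this.deriv, Xbar_eq_dir]
  apply affine_of_dd
  · exact fun t => (sliceXY f u w u t (hdf _)).differentiableAt
  · rw [h1]
    exact fun t => (sliceXY (Xbar f) u w u t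
      (((smooth_Xbar f hf).differentiable (by norm_num)) _)).differentiableAt
  · intro t
    rw [h1]
    have h2 := (sliceXY (Xbar f) u w u t (((smooth_Xbar f hf).differentiable (by norm_num)) _)).deriv
    rw [h2, ← Xbar_eq_dir]
    exact hX _

end Forward

theorem hasDerivAt_quad (a b e t : ℝ) :
    HasDerivAt (fun t : ℝ => a + b * t + e * t^2) (b + e * (2 * t)) t := by
  have h := ((hasDerivAt_const t a).add ((hasDerivAt_id t).const_mul b)).add
    ((hasDerivAt_pow 2 t).const_mul e)
  exact h.congr_deriv (by norm_num)

def gpoly (c : Fin 8 → ℝ) : ℝ × ℝ × ℝ → ℝ := fun p =>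
  c 0 + c 1 * p.1 + c 2 * p.2.1 + c 3 * p.2.2 + c 4 * (p.1 * p.2.1) + c 5 * (p.1 * p.2.2) +
    c 6 * (p.2.1 * (p.2.2 - p.1 * p.2.1)) + c 7 * (p.2.2 * (p.2.2 - p.1 * p.2.1))

theorem gpoly_diff (c : Fin 8 → ℝ) : Differentiable ℝ (gpoly c) := by
  unfold gpoly; fun_prop

def g1 (c : Fin 8 → ℝ) : ℝ × ℝ × ℝ → ℝ := fun p =>
  c 1 + c 4 * p.2.1 + c 5 * p.2.2 - c 6 * p.2.1^2 - c 7 * (p.2.1 * p.2.2)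

def g2 (c : Fin 8 → ℝ) : ℝ × ℝ × ℝ → ℝ := fun p =>
  c 2 + (c 3 + c 4) * p.1 + c 5 * p.1^2 + c 6 * (p.2.2 - p.1 * p.2.1) +
    c 7 * (p.1 * p.2.2 - p.1^2 * p.2.1)

theorem g1_diff (c : Fin 8 → ℝ) : Differentiable ℝ (g1 c) := by unfold g1; fun_prop
theorem g2_diff (c : Fin 8 → ℝ) : Differentiable ℝ (g2 c) := by unfold g2; fun_prop

theorem Ubar_gpoly (c : Fin 8 → ℝ) : ∀ p, Ubar (gpoly c) p = g1 c p := by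
  rintro ⟨u, x, y⟩
  show fderiv ℝ (gpoly c) (u, x, y) (1, 0, 0) = _
  have hs : HasDerivAt (fun t => gpoly c (t, x, y))
      ((c 1 + c 4 * x + c 5 * y - c 6 * x^2 - c 7 * (x * y)) + 0 * (2 * u)) u := by
    have he : (fun t => gpoly c (t, x, y)) = fun t : ℝ =>
        (c 0 + c 2 * x + c 3 * y + c 6 * (x * y) + c 7 * (y * y)) +
        (c 1 + c 4 * x + c 5 * y - c 6 * x^2 - c 7 * (x * y)) * t + 0 * t^2 := by
      funext t; show gpoly c (t, x, y) = _; unfold gpoly; ring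
    rw [he]; exact hasDerivAt_quad _ _ _ _
  rw [((sliceU (gpoly c) u x y ((gpoly_diff c) _)).unique hs)]
  show _ = c 1 + c 4 * x + c 5 * y - c 6 * x^2 - c 7 * (x * y)
  ring

theorem Ubar_Ubar_gpoly (c : Fin 8 → ℝ) : ∀ p, Ubar (Ubar (gpoly c)) p = 0 := by
  have hfe : Ubar (gpoly c) = g1 c := funext (Ubar_gpoly c)
  rintro ⟨u, x, y⟩
  rw [hfe]
  show fderiv ℝ (g1 c) (u, x, y) (1, 0, 0) = 0
  have hs : HasDerivAt (fun t => g1 c (t, x, y))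
      (0 : ℝ) u := by
    have he : (fun t => g1 c (t, x, y)) = fun _ : ℝ =>
        c 1 + c 4 * x + c 5 * y - c 6 * x^2 - c 7 * (x * y) := by
      funext t; rfl
    rw [he]; exact hasDerivAt_const u _
  exact (sliceU (g1 c) u x y ((g1_diff c) _)).unique hs

theorem Xbar_gpoly (c : Fin 8 → ℝ) : ∀ p, Xbar (gpoly c) p = g2 c p := by
  rintro ⟨u, x, y⟩
  show fderiv ℝ (gpoly c) (u, x, y) (0, 1, 0) + u * fderiv ℝ (gpoly c) (u, x, y) (0, 0, 1) = _
  have hsx : HasDerivAt (fun t => gpoly c (u, t, y))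
      ((c 2 + c 4 * u + c 6 * y - c 7 * (u * y)) + (-(c 6 * u)) * (2 * x)) x := by
    have he : (fun t => gpoly c (u, t, y)) = fun t : ℝ =>
        (c 0 + c 1 * u + c 3 * y + c 5 * (u * y) + c 7 * (y * y)) +
        (c 2 + c 4 * u + c 6 * y - c 7 * (u * y)) * t + (-(c 6 * u)) * t^2 := by
      funext t; show gpoly c (u, t, y) = _; unfold gpoly; ring
    rw [he]; exact hasDerivAt_quad _ _ _ _
  have hsy : HasDerivAt (fun t => gpoly c (u, x, t))
      ((c 3 + c 5 * u + c 6 * x - c 7 * (u * x)) + c 7 * (2 * y)) y := by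
    have he : (fun t => gpoly c (u, x, t)) = fun t : ℝ =>
        (c 0 + c 1 * u + c 2 * x + c 4 * (u * x) - c 6 * (u * x^2)) +
        (c 3 + c 5 * u + c 6 * x - c 7 * (u * x)) * t + c 7 * t^2 := by
      funext t; show gpoly c (u, x, t) = _; unfold gpoly; ring
    rw [he]; exact hasDerivAt_quad _ _ _ _
  rw [(sliceX (gpoly c) u x y ((gpoly_diff c) _)).unique hsx,
      (sliceY (gpoly c) u x y ((gpoly_diff c) _)).unique hsy]
  show _ = c 2 + (c 3 + c 4) * u + c 5 * u^2 + c 6 * (y - u * x) + c 7 * (u * y - u^2 * x)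
  ring

theorem Xbar_Xbar_gpoly (c : Fin 8 → ℝ) : ∀ p, Xbar (Xbar (gpoly c)) p = 0 := by
  have hfe : Xbar (gpoly c) = g2 c := funext (Xbar_gpoly c)
  rintro ⟨u, x, y⟩
  rw [hfe]
  show fderiv ℝ (g2 c) (u, x, y) (0, 1, 0) + u * fderiv ℝ (g2 c) (u, x, y) (0, 0, 1) = 0
  have hsx : HasDerivAt (fun t => g2 c (u, t, y))
      ((-(c 6 * u) - c 7 * u^2) + 0 * (2 * x)) x := by
    have he : (fun t => g2 c (u, t, y)) = fun t : ℝ =>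
        (c 2 + (c 3 + c 4) * u + c 5 * u^2 + c 6 * y + c 7 * (u * y)) +
        (-(c 6 * u) - c 7 * u^2) * t + 0 * t^2 := by
      funext t; show g2 c (u, t, y) = _; unfold g2; ring
    rw [he]; exact hasDerivAt_quad _ _ _ _
  have hsy : HasDerivAt (fun t => g2 c (u, x, t))
      ((c 6 + c 7 * u) + 0 * (2 * y)) y := by
    have he : (fun t => g2 c (u, x, t)) = fun t : ℝ =>
        (c 2 + (c 3 + c 4) * u + c 5 * u^2 - c 6 * (u * x) - c 7 * (u^2 * x)) +
        (c 6 + c 7 * u) * t + 0 * t^2 := by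
      funext t; show g2 c (u, x, t) = _; unfold g2; ring
    rw [he]; exact hasDerivAt_quad _ _ _ _
  rw [(sliceX (g2 c) u x y ((g2_diff c) _)).unique hsx,
      (sliceY (g2 c) u x y ((g2_diff c) _)).unique hsy]
  ring

theorem forward (f : ℝ × ℝ × ℝ → ℝ) (hf : ContDiff ℝ (⊤ : ℕ∞) f)
    (hU : ∀ p, Ubar (Ubar f) p = 0) (hX : ∀ p, Xbar (Xbar f) p = 0) :
    ∃ c : Fin 8 → ℝ, ∀ p : ℝ × ℝ × ℝ,
      f p = c 0 + c 1 * p.1 + c 2 * p.2.1 + c 3 * p.2.2 +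
        c 4 * (p.1 * p.2.1) + c 5 * (p.1 * p.2.2) +
        c 6 * (p.2.1 * (p.2.2 - p.1 * p.2.1)) +
        c 7 * (p.2.2 * (p.2.2 - p.1 * p.2.1)) := by
  -- star representation
  have hstar0 : ∀ u x y : ℝ, f (u, x, y) =
      (1-x) * (f (0, 0, y + -x*u) + u * (f (1, 0, y + -x*u) - f (0, 0, y + -x*u)))
      + x * (f (0, 1, y + (1-x)*u) + u * (f (1, 1, y + (1-x)*u) - f (0, 1, y + (1-x)*u))) := by
    intro u x y
    have h1 := x_affine f hf hX u (y - u*x) x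
    rw [show y - u*x + u*x = y from by ring, show y - u*x + u*0 = y + -x*u from by ring,
      show y - u*x + u*1 = y + (1-x)*u from by ring] at h1
    rw [h1, (u_affine f hf hU 0 (y + -x*u)) u, (u_affine f hf hU 1 (y + (1-x)*u)) u]
    ring
  -- the four slice functions, smoothness
  have hcurve : ∀ a b : ℝ, ContDiff ℝ ∞ (fun w : ℝ => ((a, b, w) : ℝ × ℝ × ℝ)) :=
    fun a b => contDiff_const.prodMk (contDiff_const.prodMk contDiff_id)
  have hPc : ContDiff ℝ ∞ (fun w : ℝ => f (0, 0, w)) := (hf.of_le (by simp)).comp (hcurve 0 0)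
  have hP10 : ContDiff ℝ ∞ (fun w : ℝ => f (1, 0, w)) := (hf.of_le (by simp)).comp (hcurve 1 0)
  have hRc : ContDiff ℝ ∞ (fun w : ℝ => f (0, 1, w)) := (hf.of_le (by simp)).comp (hcurve 0 1)
  have hR11 : ContDiff ℝ ∞ (fun w : ℝ => f (1, 1, w)) := (hf.of_le (by simp)).comp (hcurve 1 1)
  have hQc : ContDiff ℝ ∞ (fun w : ℝ => f (1, 0, w) - f (0, 0, w)) := hP10.sub hPc
  have hSc : ContDiff ℝ ∞ (fun w : ℝ => f (1, 1, w) - f (0, 1, w)) := hR11.sub hRc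
  -- master identity
  have hE : ∀ x y u : ℝ, deriv (deriv (fun u =>
      (1-x) * ((fun w : ℝ => f (0, 0, w)) (y + -x*u)
        + u * (fun w : ℝ => f (1, 0, w) - f (0, 0, w)) (y + -x*u))
      + x * ((fun w : ℝ => f (0, 1, w)) (y + (1-x)*u)
        + u * (fun w : ℝ => f (1, 1, w) - f (0, 1, w)) (y + (1-x)*u)))) u = 0 := by
    intro x y u
    have h := u_slice_dd f hf hU x y u
    rw [show (fun u => f (u, x, y)) = (fun u =>
      (1-x) * ((fun w : ℝ => f (0, 0, w)) (y + -x*u)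
        + u * (fun w : ℝ => f (1, 0, w) - f (0, 0, w)) (y + -x*u))
      + x * ((fun w : ℝ => f (0, 1, w)) (y + (1-x)*u)
        + u * (fun w : ℝ => f (1, 1, w) - f (0, 1, w)) (y + (1-x)*u)))
      from funext fun u => hstar0 u x y] at h
    exact h
  have hM := master _ _ _ _ hPc hQc hRc hSc hE
  obtain ⟨hq1, hs1, hp2, hr2⟩ := extract _ _ _ _ hM
  set A := deriv (fun w : ℝ => f (1, 0, w) - f (0, 0, w)) 0 with hAdef
  set K := deriv (deriv (fun w : ℝ => f (0, 1, w))) 0 with hKdef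
  -- closed forms
  have hQlin : ∀ t : ℝ, f (1, 0, t) - f (0, 0, t) =
      (f (1, 0, 0) - f (0, 0, 0)) + A * t := fun t =>
    poly1_of_deriv _ (hQc.differentiable (by norm_num)) A hq1 t
  have hSlin : ∀ t : ℝ, f (1, 1, t) - f (0, 1, t) =
      (f (1, 1, 0) - f (0, 1, 0)) + (A - K/2) * t := fun t =>
    poly1_of_deriv _ (hSc.differentiable (by norm_num)) (A - K/2) hs1 t
  have hPd1 : ∀ t : ℝ, deriv (fun w : ℝ => f (0, 0, w)) t =
      deriv (fun w : ℝ => f (0, 0, w)) 0 + K * t :=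
    poly1_of_deriv _ ((contDiff_infty_iff_deriv.mp hPc).2.differentiable (by norm_num)) K hp2
  have hRd1 : ∀ t : ℝ, deriv (fun w : ℝ => f (0, 1, w)) t =
      deriv (fun w : ℝ => f (0, 1, w)) 0 + K * t :=
    poly1_of_deriv _ ((contDiff_infty_iff_deriv.mp hRc).2.differentiable (by norm_num)) K hr2
  have hPquad : ∀ t : ℝ, f (0, 0, t) =
      f (0, 0, 0) + deriv (fun w : ℝ => f (0, 0, w)) 0 * t + K/2 * t^2 := fun t =>
    poly2_of_deriv _ (hPc.differentiable (by norm_num)) _ K hPd1 t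
  have hRquad : ∀ t : ℝ, f (0, 1, t) =
      f (0, 1, 0) + deriv (fun w : ℝ => f (0, 1, w)) 0 * t + K/2 * t^2 := fun t =>
    poly2_of_deriv _ (hRc.differentiable (by norm_num)) _ K hRd1 t
  set P1 := deriv (fun w : ℝ => f (0, 0, w)) 0 with hP1def
  set R1 := deriv (fun w : ℝ => f (0, 1, w)) 0 with hR1def
  refine ⟨![f (0,0,0), f (1,0,0) - f (0,0,0), f (0,1,0) - f (0,0,0), P1,
    R1 + (f (1,1,0) - f (0,1,0)) - P1 - (f (1,0,0) - f (0,0,0)), A, R1 - P1, K/2], ?_⟩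
  rintro ⟨u, x, y⟩
  have key : f (u, x, y) =
      f (0,0,0) + (f (1,0,0) - f (0,0,0)) * u + (f (0,1,0) - f (0,0,0)) * x + P1 * y +
      (R1 + (f (1,1,0) - f (0,1,0)) - P1 - (f (1,0,0) - f (0,0,0))) * (u * x) + A * (u * y) +
      (R1 - P1) * (x * (y - u * x)) + (K/2) * (y * (y - u * x)) := by
    rw [hstar0 u x y, hQlin (y + -x*u), hSlin (y + (1-x)*u), hPquad (y + -x*u),
      hRquad (y + (1-x)*u)]
    ring
  simpa using key

theorem multicontact_polynomials_sp2_slice :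
    (∀ f : ℝ × ℝ × ℝ → ℝ, ContDiff ℝ (⊤ : ℕ∞) f →
      (((∀ p, Ubar (Ubar f) p = 0) ∧ (∀ p, Xbar (Xbar f) p = 0)) ↔
        ∃ c : Fin 8 → ℝ, ∀ p : ℝ × ℝ × ℝ,
          f p = c 0 + c 1 * p.1 + c 2 * p.2.1 + c 3 * p.2.2 +
            c 4 * (p.1 * p.2.1) + c 5 * (p.1 * p.2.2) +
            c 6 * (p.2.1 * (p.2.2 - p.1 * p.2.1)) +
            c 7 * (p.2.2 * (p.2.2 - p.1 * p.2.1)))) ∧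
    LinearIndependent ℝ
      (![fun _ : ℝ × ℝ × ℝ => (1 : ℝ),
        fun p => p.1,
        fun p => p.2.1,
        fun p => p.2.2,
        fun p => p.1 * p.2.1,
        fun p => p.1 * p.2.2,
        fun p => p.2.1 * (p.2.2 - p.1 * p.2.1),
        fun p => p.2.2 * (p.2.2 - p.1 * p.2.1)] :
        Fin 8 → (ℝ × ℝ × ℝ → ℝ)) := by
  constructor
  · intro f hf
    constructor
    · rintro ⟨hU, hX⟩
      exact forward f hf hU hX
    · rintro ⟨c, hc⟩
      have hfe : f = gpoly c := funext hc
      rw [hfe]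
      exact ⟨Ubar_Ubar_gpoly c, Xbar_Xbar_gpoly c⟩
  · rw [Fintype.linearIndependent_iff]
    intro g hg
    have hv : ∀ q : ℝ × ℝ × ℝ, g 0 * 1 + g 1 * q.1 + g 2 * q.2.1 + g 3 * q.2.2 +
        g 4 * (q.1 * q.2.1) + g 5 * (q.1 * q.2.2) + g 6 * (q.2.1 * (q.2.2 - q.1 * q.2.1)) +
        g 7 * (q.2.2 * (q.2.2 - q.1 * q.2.1)) = 0 := by
      intro q
      have := congrFun hg q
      simp [Fin.sum_univ_succ, Matrix.cons_val_zero, Matrix.cons_val_succ] at this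
      linarith [this]
    have e0 := hv (0, 0, 0)
    have e1 := hv (1, 0, 0)
    have e2 := hv (0, 1, 0)
    have e3 := hv (0, 0, 1)
    have e4 := hv (1, 1, 0)
    have e5 := hv (1, 0, 1)
    have e6 := hv (0, 1, 1)
    have e7 := hv (0, 0, 2)
    norm_num at e0 e1 e2 e3 e4 e5 e6 e7
    intro i
    fin_cases i <;> simp <;> linarith

end
end

section
/- Let K be a field, L a finite-dimensional Lie algebra over K, H a Cartan subalgebra of L (a nilpotent self-normalizing Lie subalgebra), and for a linear functional α on H let L_α denote the corresponding root space (generalized weight space of the adjoint action of H on L). Let Φ be the set of nonzero functionals α with L_α ≠ 0, and let Σ₊ ⊆ Φ satisfy Σ₊ ∩ (−Σ₊) = ∅ and: α, β ∈ Σ₊ and α+β ∈ Φ imply α+β ∈ Σ₊. Let R ⊆ Σ₊ be of Hessenberg type: α ∈ R, β ∈ Σ₊ and α−β ∈ Σ₊ imply α−β ∈ R; set C = Σ₊ \ R. Then n = Σ_{α∈Σ₊} L_α is a Lie subalgebra of L, and n_C = Σ_{α∈C} L_α is a Lie ideal of n, i.e. ⁅x, y⁆ ∈ n_C for every x ∈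 n and y ∈ n_C. -/
/-!
By `⁅L_α, L_β⁆ ⊆ L_{α+β}`, brackets of the sums land in the root spaces `L_{α+β}`. Such a space
is zero unless `α + β` is a root, and `α + β ≠ 0` because `Σ₊ ∩ −Σ₊ = ∅`, so `α + β ∈ Σ₊` by
closedness. For `β ∈ C` it cannot lie in `R` either, since then `β = (α + β) − α ∈ R` by the
Hessenberg property.
-/

open LieAlgebra LieModule

theorem le_biSup_of_ne_bot {α ι : Type*} [CompleteLattice α] {p : ι → α} {U : Set ι} {i : ι}
    (h : p i ≠ ⊥ → i ∈ U) : p i ≤ ⨆ j ∈ U, p j := by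
  by_cases hi : p i = ⊥
  · simp [hi]
  · exact le_biSup p (h hi)

section
variable {R L M : Type*} [CommRing R] [LieRing L] [LieAlgebra R L] {H : LieSubalgebra R L}
  [LieRing.IsNilpotent H] [AddCommGroup M] [Module R M] [LieRingModule L M] [LieModule R L M]

theorem lie_mem_iSup_genWeightSpace {S T U : Set (H → R)}
    (h : ∀ α ∈ S, ∀ β ∈ T,
      (genWeightSpace M (α + β)).toSubmodule ≤ ⨆ γ ∈ U, (genWeightSpace M γ).toSubmodule)
    {x : L} {m : M} (hx : x ∈ ⨆ α ∈ S, (rootSpace H α).toSubmodule)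
    (hm : m ∈ ⨆ β ∈ T, (genWeightSpace M β).toSubmodule) :
    ⁅x, m⁆ ∈ ⨆ γ ∈ U, (genWeightSpace M γ).toSubmodule := by
  have hle : Submodule.map₂ (toEnd R L M : L →ₗ[R] Module.End R M)
      (⨆ α ∈ S, (rootSpace H α).toSubmodule) (⨆ β ∈ T, (genWeightSpace M β).toSubmodule) ≤
      ⨆ γ ∈ U, (genWeightSpace M γ).toSubmodule := by
    simp only [Submodule.map₂_iSup_left, Submodule.map₂_iSup_right, iSup_le_iff, Submodule.map₂_le]
    intro β hβ α hα x hx m hm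
    exact h α hα β hβ (lie_mem_genWeightSpace_of_mem_genWeightSpace hx hm)
  exact hle (Submodule.apply_mem_map₂ _ hx hm)

end

theorem hessenberg_complement_is_ideal_general
    {K L : Type*} [Field K] [LieRing L] [LieAlgebra K L]
    (H : LieSubalgebra K L) [H.IsCartanSubalgebra]
    (Phi : Set (H → K))
    (hPhi : Phi = {α : H → K | α ≠ 0 ∧ LieAlgebra.rootSpace H α ≠ ⊥})
    (Sp : Set (H → K))
    (hdisj : ∀ α ∈ Sp, -α ∉ Sp)
    (hclosed : ∀ α ∈ Sp, ∀ β ∈ Sp, α + β ∈ Phi → α + β ∈ Sp)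
    (R : Set (H → K))
    (hHess : ∀ α ∈ R, ∀ β ∈ Sp, α - β ∈ Sp → α - β ∈ R)
    (C : Set (H → K)) (hC : C = Sp \ R)
    (N NC : Submodule K L)
    (hN : N = ⨆ α ∈ Sp, (LieAlgebra.rootSpace H α).toSubmodule)
    (hNC : NC = ⨆ α ∈ C, (LieAlgebra.rootSpace H α).toSubmodule) :
    (∀ x ∈ N, ∀ y ∈ N, ⁅x, y⁆ ∈ N) ∧
    (∀ x ∈ N, ∀ y ∈ NC, ⁅x, y⁆ ∈ NC) := by
  subst hN hNC hC
  have rootSpace_add_le : ∀ α ∈ Sp, ∀ β ∈ Sp, ∀ U : Set (H → K), (α + β ∈ Sp → α + β ∈ U) →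
      (rootSpace H (α + β)).toSubmodule ≤ ⨆ γ ∈ U, (rootSpace H γ).toSubmodule := by
    intro α hα β hβ U hU
    refine le_biSup_of_ne_bot (p := fun γ => (rootSpace H γ).toSubmodule)
      fun hne => hU (hclosed α hα β hβ ?_)
    rw [hPhi]
    refine ⟨fun h0 => hdisj α hα ?_, by simpa using hne⟩
    rwa [neg_eq_of_add_eq_zero_right h0]
  have add_mem_compl : ∀ α ∈ Sp, ∀ β ∈ Sp \ R, α + β ∈ Sp → α + β ∈ Sp \ R := by
    intro α hα β ⟨hβ, hβR⟩ hsum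
    refine ⟨hsum, fun hR => hβR ?_⟩
    simpa using hHess (α + β) hR α hα (by simpa using hβ)
  exact ⟨fun x hx y hy => lie_mem_iSup_genWeightSpace
      (fun α hα β hβ => rootSpace_add_le α hα β hβ Sp id) hx hy,
    fun x hx y hy => lie_mem_iSup_genWeightSpace
      (fun α hα β hβ => rootSpace_add_le α hα β hβ.1 _ (add_mem_compl α hα β hβ)) hx hy⟩

theorem hessenberg_complement_is_ideal
    {K L : Type*} [Field K] [LieRing L] [LieAlgebra K L] [FiniteDimensional K L]
    (H : LieSubalgebra K L) [H.IsCartanSubalgebra]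
    (Phi : Set (H → K))
    (hPhi : Phi = {α : H → K | α ≠ 0 ∧ LieAlgebra.rootSpace H α ≠ ⊥})
    (Sp : Set (H → K)) (hSpPhi : Sp ⊆ Phi)
    (hdisj : ∀ α ∈ Sp, -α ∉ Sp)
    (hclosed : ∀ α ∈ Sp, ∀ β ∈ Sp, α + β ∈ Phi → α + β ∈ Sp)
    (R : Set (H → K)) (hRSp : R ⊆ Sp)
    (hHess : ∀ α ∈ R, ∀ β ∈ Sp, α - β ∈ Sp → α - β ∈ R)
    (C : Set (H → K)) (hC : C = Sp \ R)
    (N NC : Submodule K L)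
    (hN : N = ⨆ α ∈ Sp, (LieAlgebra.rootSpace H α).toSubmodule)
    (hNC : NC = ⨆ α ∈ C, (LieAlgebra.rootSpace H α).toSubmodule) :
    (∀ x ∈ N, ∀ y ∈ N, ⁅x, y⁆ ∈ N) ∧
    (∀ x ∈ N, ∀ y ∈ NC, ⁅x, y⁆ ∈ NC) :=
  hessenberg_complement_is_ideal_general H Phi hPhi Sp hdisj hclosed R hHess C hC N NC hN hNC
end

section
/- Let α and β be distinct positive roots such that every Δ-coordinate of α − β is nonnegative (β ⪯ α). Then there exist p ≥ 1 and simple roots δ₁, …, δ_p ∈ Δ such that β + δ₁ + ⋯ + δ_k ∈ Σ for every k ∈ {1,…,p} and β + δ₁ + ⋯ + δ_p = α (that is, α is reached from β by a chain of simple roots). -/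
/-!
Write `α - β = ∑ cᵢ δᵢ` with `cᵢ ≥ 0`. Since `0 < ⟪α - β, α - β⟫ = ∑ cᵢ ⟪δᵢ, α - β⟫`, some `δᵢ`
with `cᵢ > 0` satisfies `⟪δᵢ, β⟫ < ⟪δᵢ, α⟫`. Then either `⟪β, δᵢ⟫ < 0`, so `β + δᵢ` is a root,
or `⟪α, δᵢ⟫ > 0`, so `α - δᵢ` is a root; as `cᵢ` is an integer, `cᵢ ≥ 1` and the new pair is
again comparable, with height difference one less. Induct on that height.
-/

open scoped RealInnerProductSpace

section Crystallographic

variable {V : Type*} [NormedAddCommGroup V] [InnerProductSpace ℝ V]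

def IsCrystallographic (S : Set V) : Prop :=
  ∀ α ∈ S, ∀ β ∈ S, ∃ n : ℤ, 2 * ⟪β, α⟫ = (n : ℝ) * ⟪α, α⟫ ∧ β - (n : ℝ) • α ∈ S

namespace IsCrystallographic

variable {S : Set V}

theorem neg_mem (hS : IsCrystallographic S) (h0 : (0 : V) ∉ S) {γ : V} (hγ : γ ∈ S) :
    -γ ∈ S := by
  obtain ⟨n, hn, hmem⟩ := hS γ hγ γ hγ
  have hγγ : 0 < ⟪γ, γ⟫ := real_inner_self_pos.mpr (ne_of_mem_of_not_mem hγ h0)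
  have hn2 : (n : ℝ) = 2 := by nlinarith
  rwa [hn2, show γ - (2 : ℝ) • γ = -γ by module] at hmem

theorem sub_mem_of_inner_pos (hS : IsCrystallographic S) (h0 : (0 : V) ∉ S) {α γ : V}
    (hα : α ∈ S) (hγ : γ ∈ S) (hne : α ≠ γ) (hpos : 0 < ⟪α, γ⟫) : α - γ ∈ S := by
  obtain ⟨k, hk, hkmem⟩ := hS γ hγ α hα
  obtain ⟨n, hn, hnmem⟩ := hS α hα γ hγ
  have hαα : 0 < ⟪α, α⟫ := real_inner_self_pos.mpr (ne_of_mem_of_not_mem hα h0)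
  have hγγ : 0 < ⟪γ, γ⟫ := real_inner_self_pos.mpr (ne_of_mem_of_not_mem hγ h0)
  rw [real_inner_comm] at hn
  have hk1 : (1 : ℤ) ≤ k := by exact_mod_cast (show (0 : ℝ) < k by nlinarith)
  have hn1 : (1 : ℤ) ≤ n := by exact_mod_cast (show (0 : ℝ) < n by nlinarith)
  obtain rfl | hk2 := hk1.eq_or_lt
  · simpa using hkmem
  obtain rfl | hn2 := hn1.eq_or_lt
  · simpa using hS.neg_mem h0 hnmem
  -- If both Cartan integers were at least `2`, then `‖α - γ‖² = ‖α‖² - 2⟪α, γ⟫ + ‖γ‖² ≤ 0`.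
  have hk2' : (2 : ℝ) ≤ k := by exact_mod_cast hk2
  have hn2' : (2 : ℝ) ≤ n := by exact_mod_cast hn2
  have hsub : 0 < ⟪α - γ, α - γ⟫ := real_inner_self_pos.mpr (sub_ne_zero.mpr hne)
  rw [real_inner_sub_sub_self] at hsub
  nlinarith

theorem add_mem_of_inner_neg (hS : IsCrystallographic S) (h0 : (0 : V) ∉ S) {β δ : V}
    (hβ : β ∈ S) (hδ : δ ∈ S) (hne : β ≠ -δ) (hneg : ⟪β, δ⟫ < 0) : β + δ ∈ S := by
  have := hS.sub_mem_of_inner_pos h0 hβ (hS.neg_mem h0 hδ) hne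
    (by rwa [inner_neg_right, neg_pos])
  rwa [sub_neg_eq_add] at this

end IsCrystallographic

end Crystallographic

namespace Module.Basis

section Module

variable {V : Type*} [AddCommGroup V] [Module ℝ V] {ι : Type*} (b : Basis ι ℝ V)

theorem repr_sub_basis_nonneg {x : V} {i : ι} (hx : ∀ j, 0 ≤ b.repr x j)
    (hi : 1 ≤ b.repr x i) (j : ι) : 0 ≤ b.repr (x - b i) j := by
  classical
  rw [map_sub, b.repr_self, Finsupp.sub_apply, Finsupp.single_apply]
  split_ifs with hij
  · exact sub_nonneg.mpr (hij ▸ hi)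
  · simpa using hx j

theorem sum_repr_sub_basis [Fintype ι] (x : V) (i : ι) :
    ∑ j, b.repr (x - b i) j = ∑ j, b.repr x j - 1 := by
  simp [Finset.sum_sub_distrib]

theorem one_le_repr_sub {S : Set V}
    (hZ : ∀ γ ∈ S, ∀ i, ∃ z : ℤ, b.repr γ i = z) {α β : V} (hα : α ∈ S) (hβ : β ∈ S) {i : ι}
    (hpos : 0 < b.repr (α - β) i) : 1 ≤ b.repr (α - β) i := by
  obtain ⟨m, hm⟩ := hZ α hα i
  obtain ⟨n, hn⟩ := hZ β hβ i
  rw [map_sub, Finsupp.sub_apply, hm, hn] at hpos ⊢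
  have hnm : n < m := by exact_mod_cast sub_pos.mp hpos
  have : (n : ℝ) + 1 ≤ m := by exact_mod_cast hnm
  linarith

end Module

section InnerProductSpace

variable {V : Type*} [NormedAddCommGroup V] [InnerProductSpace ℝ V] {ι : Type*} [Fintype ι]
  (b : Basis ι ℝ V)

theorem exists_repr_pos_inner_pos {x : V} (hx : x ≠ 0) (hpos : ∀ i, 0 ≤ b.repr x i) :
    ∃ i, 0 < b.repr x i ∧ 0 < ⟪b i, x⟫ := by
  by_contra! h
  have hxx : ⟪x, x⟫ = ∑ i, b.repr x i * ⟪b i, x⟫ := by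
    nth_rw 1 [← b.sum_repr x]
    simp only [sum_inner, real_inner_smul_left]
  have : ⟪x, x⟫ ≤ 0 := hxx ▸ Finset.sum_nonpos fun i _ =>
    (hpos i).eq_or_lt.elim (fun h0 => by simp [← h0])
      fun hi => mul_nonpos_of_nonneg_of_nonpos hi.le (h i hi)
  exact hx (real_inner_self_nonpos.mp this)

end InnerProductSpace

end Module.Basis

section ChainStep

variable {V : Type*} [AddCommGroup V]

def ChainStep (S D : Set V) (x y : V) : Prop := y - x ∈ D ∧ y ∈ S

theorem exists_fin_chain_of_reflTransGen {S D : Set V} {β α : V}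
    (h : Relation.ReflTransGen (ChainStep S D) β α) :
    ∃ (p : ℕ) (d : Fin p → V), (∀ k, d k ∈ D) ∧
      (∀ k : Fin p, β + ∑ l ∈ Finset.univ.filter (· ≤ k), d l ∈ S) ∧
      β + ∑ l, d l = α := by
  induction h with
  | refl => exact ⟨0, Fin.elim0, fun k => k.elim0, fun k => k.elim0, by simp⟩
  | @tail x y _ hxy ih =>
    obtain ⟨p, d, hD, hS, hsum⟩ := ih
    have hend : β + ∑ l, Fin.snoc d (y - x) l = y := by
      rw [Fin.sum_snoc, ← add_assoc, hsum, add_sub_cancel]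
    refine ⟨p + 1, Fin.snoc d (y - x), Fin.lastCases ?_ fun k => ?_,
      Fin.lastCases ?_ fun k => ?_, hend⟩
    · simpa using hxy.1
    · simpa using hD k
    · simpa only [Fin.le_last, Finset.filter_true, hend] using hxy.2
    · convert hS k using 2
      rw [Finset.sum_filter, Finset.sum_filter, Fin.sum_univ_castSucc]
      simp [(Fin.castSucc_lt_last k).not_ge]

end ChainStep

section RootChain

variable {V : Type*} [NormedAddCommGroup V] [InnerProductSpace ℝ V] {ι : Type*} [Fintype ι]

theorem reflTransGen_chainStep {S : Set V} (hS : IsCrystallographic S) (h0 : (0 : V) ∉ S)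
    (b : Module.Basis ι ℝ V) (hb : ∀ i, b i ∈ S) (hZ : ∀ γ ∈ S, ∀ i, ∃ z : ℤ, b.repr γ i = z)
    {α β : V} (hα : α ∈ S) (hβ : β ∈ S) (hβpos : ∀ i, 0 ≤ b.repr β i)
    (hle : ∀ i, 0 ≤ b.repr (α - β) i) :
    Relation.ReflTransGen (ChainStep S (Set.range b)) β α := by
  obtain ⟨N, hN⟩ := exists_nat_gt (∑ i, b.repr (α - β) i)
  induction N generalizing α β with
  | zero =>
    exact ((Finset.sum_nonneg fun i _ => hle i).trans_lt (by exact_mod_cast hN)).false.elim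
  | succ N ih =>
  obtain rfl | hne := eq_or_ne α β
  · exact .refl
  obtain ⟨i, hci, hinner⟩ := b.exists_repr_pos_inner_pos (sub_ne_zero.mpr hne) hle
  have hrest := b.repr_sub_basis_nonneg hle (b.one_le_repr_sub hZ hα hβ hci)
  have hN' : ∑ j, b.repr (α - β - b i) j < N := by
    rw [b.sum_repr_sub_basis]; push_cast at hN; linarith
  rw [inner_sub_right] at hinner
  by_cases hβi : ⟪β, b i⟫ < 0
  · have hne' : β ≠ -b i := fun h => by
      have := hβpos i
      norm_num [h] at this
    have hβ' := hS.add_mem_of_inner_neg h0 hβ (hb i) hne' hβi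
    refine .head ⟨by simp, hβ'⟩
      (ih hα hβ' (fun j => ?_) (by rwa [← sub_sub]) (by rwa [← sub_sub]))
    rw [map_add, Finsupp.add_apply]
    exact add_nonneg (hβpos j) (b.repr_self i ▸ Finsupp.single_nonneg.mpr zero_le_one j)
  · have hαne : α ≠ b i := by
      intro h
      have hβ0 : β = 0 := b.ext_elem fun j => by
        simpa using le_antisymm (by simpa [h] using hrest j) (hβpos j)
      exact h0 (hβ0 ▸ hβ)
    have hα' := hS.sub_mem_of_inner_pos h0 hα (hb i) hαne
      (by rw [real_inner_comm] at hβi hinner; linarith)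
    exact .tail (ih hα' hβ hβpos (by rwa [sub_right_comm]) (by rwa [sub_right_comm]))
      ⟨by simp, hα⟩

end RootChain

theorem chain_lemma_general
    {V : Type*} [NormedAddCommGroup V] [InnerProductSpace ℝ V]
    (Sig : Set V) (h0 : (0 : V) ∉ Sig)
    (hcrys : ∀ α ∈ Sig, ∀ β ∈ Sig, ∃ n : ℤ,
      2 * ⟪β, α⟫ = (n : ℝ) * ⟪α, α⟫ ∧ β - (n : ℝ) • α ∈ Sig)
    {ι : Type*} [Fintype ι] (b : Module.Basis ι ℝ V)
    (hb : ∀ i, b i ∈ Sig)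
    (hint : ∀ γ ∈ Sig, (∀ i, ∃ m : ℕ, b.repr γ i = (m : ℝ)) ∨
      (∀ i, ∃ m : ℕ, b.repr γ i = -(m : ℝ)))
    (α β : V) (hαβ : α ≠ β)
    (hα : α ∈ Sig)
    (hβ : β ∈ Sig) (hβpos : ∀ i, 0 ≤ b.repr β i)
    (hle : ∀ i, 0 ≤ b.repr (α - β) i) :
    ∃ (p : ℕ) (_ : 0 < p) (d : Fin p → V),
      (∀ k, ∃ i, d k = b i) ∧
      (∀ k : Fin p, β + ∑ l ∈ Finset.univ.filter (· ≤ k), d l ∈ Sig) ∧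
      β + ∑ l, d l = α := by
  have hZ : ∀ γ ∈ Sig, ∀ i, ∃ z : ℤ, b.repr γ i = z := fun γ hγ i => by
    rcases hint γ hγ with h | h <;> obtain ⟨m, hm⟩ := h i
    exacts [⟨m, by simp [hm]⟩, ⟨-m, by simp [hm]⟩]
  obtain ⟨p, d, hd, hpartial, hsum⟩ := exists_fin_chain_of_reflTransGen
    (reflTransGen_chainStep hcrys h0 b hb hZ hα hβ hβpos hle)
  refine ⟨p, Nat.pos_of_ne_zero ?_, d, fun k => (hd k).imp fun _ => Eq.symm, hpartial, hsum⟩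
  rintro rfl
  exact hαβ (by simpa using hsum.symm)

theorem chain_lemma
    {V : Type*} [NormedAddCommGroup V] [InnerProductSpace ℝ V] [FiniteDimensional ℝ V]
    (Sig : Set V) (hfin : Sig.Finite) (h0 : (0 : V) ∉ Sig)
    (hspan : Submodule.span ℝ Sig = ⊤)
    (hcrys : ∀ α ∈ Sig, ∀ β ∈ Sig, ∃ n : ℤ,
      2 * ⟪β, α⟫ = (n : ℝ) * ⟪α, α⟫ ∧ β - (n : ℝ) • α ∈ Sig)
    {ι : Type*} [Fintype ι] (b : Module.Basis ι ℝ V)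
    (hb : ∀ i, b i ∈ Sig)
    (hint : ∀ γ ∈ Sig, (∀ i, ∃ m : ℕ, b.repr γ i = (m : ℝ)) ∨
      (∀ i, ∃ m : ℕ, b.repr γ i = -(m : ℝ)))
    (α β : V) (hαβ : α ≠ β)
    (hα : α ∈ Sig) (hαpos : ∀ i, 0 ≤ b.repr α i)
    (hβ : β ∈ Sig) (hβpos : ∀ i, 0 ≤ b.repr β i)
    (hle : ∀ i, 0 ≤ b.repr (α - β) i) :
    ∃ (p : ℕ) (_ : 0 < p) (d : Fin p → V),
      (∀ k, ∃ i, d k = b i) ∧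
      (∀ k : Fin p, β + ∑ l ∈ Finset.univ.filter (· ≤ k), d l ∈ Sig) ∧
      β + ∑ l, d l = α :=
  chain_lemma_general Sig h0 hcrys b hb hint α β hαβ hα hβ hβpos hle
end
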